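/- arXiv:1212.4720 — 11 statements merged into one kernel-verified Lean document; each statement's English description precedes it below -/
import Mathlib

section
/- An octahedral system on vertex sets V_1,…,V_n in which every cardinality |V_i| is even has an even number of edges. -/
/-- An octahedral system: an `n`-uniform `n`-partite hypergraph on the vertex sets `V i`
(edges pick one vertex from each `V i`) satisfying the parity condition. -/
def IsOctahedralSystem {α : Type*} [DecidableEq α] {n : ℕ}
    (V : Fin n → Finset α) (E : Finset (Fin n → α)) : Prop :=
  (∀ e ∈ E, ∀ i, e i ∈ V i) ∧
  ∀ X : Fin n → Finset α, (∀ i, X i ⊆ V i) → (∀ i, (X i).card = 2) →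
    Even ((E.filter fun e => ∀ i, e i ∈ X i).card)

/-- Every vertex belongs to at least one edge. -/
def NoIsolatedVertex {α : Type*} {n : ℕ}
    (V : Fin n → Finset α) (E : Finset (Fin n → α)) : Prop :=
  ∀ i : Fin n, ∀ v ∈ V i, ∃ e ∈ E, e i = v

lemma exists_pairing {α : Type*} [DecidableEq α] (S : Finset α) (h : Even S.card) :
    ∃ f : α → α, ∀ x ∈ S, f x ∈ S ∧ f (f x) = x ∧ f x ≠ x := by
  induction S using Finset.strongInduction with
  | _ S ih =>
    rcases S.eq_empty_or_nonempty with rfl | ⟨a, ha⟩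
    · exact ⟨id, by simp⟩
    · have h0 : S.card ≠ 0 := by
        simp [Finset.card_eq_zero]
        exact Finset.nonempty_iff_ne_empty.mp ⟨a, ha⟩
      have h2 : 2 ≤ S.card := by
        rw [Nat.even_iff] at h; omega
      have hb : (S.erase a).Nonempty := by
        rw [← Finset.card_pos, Finset.card_erase_of_mem ha]; omega
      obtain ⟨b, hb⟩ := hb
      have hba : b ≠ a := Finset.ne_of_mem_erase hb
      have hbS : b ∈ S := Finset.mem_of_mem_erase hb
      set T := (S.erase a).erase b with hT
      have hTsub : T ⊂ S := by
        apply Finset.ssubset_of_subset_of_ssubset (Finset.erase_subset _ _)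
        exact Finset.erase_ssubset ha
      have hTcard : T.card = S.card - 2 := by
        rw [hT, Finset.card_erase_of_mem hb, Finset.card_erase_of_mem ha]; omega
      have hTeven : Even T.card := by
        rw [Nat.even_iff] at h ⊢; omega
      obtain ⟨f, hf⟩ := ih T hTsub hTeven
      refine ⟨fun x => if x = a then b else if x = b then a else f x, ?_⟩
      intro x hx
      by_cases hxa : x = a
      · subst hxa
        simp [hba, hbS]
      · by_cases hxb : x = b
        · subst hxb
          simp [hba, ha, Ne.symm hba]
        · have hxT : x ∈ T := by
            rw [hT]
            exact Finset.mem_erase.mpr ⟨hxb, Finset.mem_erase.mpr ⟨hxa, hx⟩⟩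
          obtain ⟨hfx, hffx, hfne⟩ := hf x hxT
          have hfb : f x ≠ b := by
            intro h; rw [hT] at hfx; exact (Finset.mem_erase.mp hfx).1 h
          have hfa' : f x ≠ a := by
            intro h; rw [hT] at hfx
            exact (Finset.mem_erase.mp (Finset.mem_of_mem_erase hfx)).1 h
          simp only [hxa, hxb, if_false, hfa', hfb]
          exact ⟨(hTsub.subset (by simpa using hfx)), hffx, hfne⟩

/-- An octahedral system in which every `|V_i|` is even has an even
number of edges. -/
theorem octahedral_even_edges {α : Type*} [DecidableEq α] {n : ℕ}
    (V : Fin n → Finset α) (E : Finset (Fin n → α))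
    (hdisj : ∀ i j : Fin n, i ≠ j → Disjoint (V i) (V j))
    (hcard : ∀ i, 2 ≤ (V i).card)
    (heven : ∀ i, Even (V i).card)
    (hoct : IsOctahedralSystem V E) :
    Even E.card := by
  obtain ⟨hE, hpar⟩ := hoct
  have hpair := fun i => exists_pairing (V i) (heven i)
  choose f hf using hpair
  set g : (Fin n → α) → (Fin n → Finset α) := fun e i => {e i, f i (e i)} with hg
  rw [Finset.card_eq_sum_card_fiberwise
    (f := g) (t := E.image g) (fun e he => Finset.mem_image_of_mem _ he)]
  apply Finset.even_sum
  intro X hX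
  obtain ⟨e₀, he₀, rfl⟩ := Finset.mem_image.mp hX
  have key : E.filter (fun e => g e = g e₀) = E.filter (fun e => ∀ i, e i ∈ g e₀ i) := by
    ext e
    simp only [Finset.mem_filter, and_congr_right_iff]
    intro he
    constructor
    · intro h i
      rw [← h]
      exact Finset.mem_insert_self _ _
    · intro h
      funext i
      have hi := h i
      obtain ⟨hmem, hinv, hne⟩ := hf i (e₀ i) (hE e₀ he₀ i)
      simp only [hg, Finset.mem_insert, Finset.mem_singleton] at hi
      rcases hi with hi | hi
      · simp [hg, hi]
      · simp only [hg, hi, hinv]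
        exact Finset.pair_comm _ _
  rw [key]
  apply hpar
  · intro i
    obtain ⟨hmem, _, _⟩ := hf i (e₀ i) (hE e₀ he₀ i)
    exact Finset.insert_subset (hE e₀ he₀ i) (Finset.singleton_subset_iff.mpr hmem)
  · intro i
    obtain ⟨_, _, hne⟩ := hf i (e₀ i) (hE e₀ he₀ i)
    exact Finset.card_pair (Ne.symm hne)
end

section
/- A non-trivial octahedral system on vertex sets V_1,…,V_n, i.e. one having at least one edge, has at least min_{1 ≤ i ≤ n} |V_i| edges. -/
lemma octahedral_aux {α : Type*} [DecidableEq α] :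
    ∀ n (V : Fin (n+1) → Finset α) (E : Finset (Fin (n+1) → α)),
    (∀ e ∈ E, ∀ i, e i ∈ V i) →
    (∀ X : Fin (n+1) → Finset α, (∀ i, X i ⊆ V i) → (∀ i, (X i).card = 2) →
      Even ((E.filter fun e => ∀ i, e i ∈ X i).card)) →
    E.Nonempty → ∃ i, (V i).card ≤ E.card := by
  intro n
  induction n with
  | zero =>
    intro V E hmem hpar ⟨e, he⟩
    refine ⟨0, ?_⟩
    have hcover : ∀ a ∈ V 0, ∃ f ∈ E, f 0 = a := by
      intro a ha
      by_cases hae : a = e 0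
      · exact ⟨e, he, hae.symm⟩
      by_contra hno
      push_neg at hno
      have hpar' := hpar (fun _ => {a, e 0}) (fun i => ?_) (fun i => ?_)
      · have hS : E.filter (fun f => ∀ i, f i ∈ ({a, e 0} : Finset α)) = {e} := by
          ext f
          simp only [Finset.mem_filter, Finset.mem_singleton, Finset.mem_insert]
          constructor
          · rintro ⟨hf, hfi⟩
            have := hfi 0
            rcases this with h | h
            · exact absurd h (hno f hf)
            · have h0 : f 0 = e 0 := by simpa using h
              funext i
              rw [Fin.fin_one_eq_zero i, h0]
          · rintro rfl
            refine ⟨he, fun i => ?_⟩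
            rw [Fin.fin_one_eq_zero i]
            simp
        rw [hS] at hpar'
        simp at hpar'
      · rw [Fin.fin_one_eq_zero i]
        intro x hx
        rcases Finset.mem_insert.mp hx with rfl | hx
        · exact ha
        · simp only [Finset.mem_singleton] at hx
          subst hx
          exact hmem e he 0
      · rw [Finset.card_insert_of_notMem (by simpa using hae), Finset.card_singleton]
    have hsub : V 0 ⊆ E.image (fun f => f 0) := by
      intro a ha
      obtain ⟨f, hf, hfa⟩ := hcover a ha
      exact Finset.mem_image.mpr ⟨f, hf, hfa⟩
    calc (V 0).card ≤ (E.image (fun f => f 0)).card := Finset.card_le_card hsub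
      _ ≤ E.card := Finset.card_image_le
  | succ n ih =>
    intro V E hmem hpar ⟨e, he⟩
    set k : Fin (n+2) := Fin.last (n+1) with hk
    by_cases hfib : ∀ v ∈ V k, ∃ f ∈ E, f k = v
    · -- all fibers nonempty
      refine ⟨k, ?_⟩
      have hsub : V k ⊆ E.image (fun f => f k) := by
        intro a ha
        obtain ⟨f, hf, hfa⟩ := hfib a ha
        exact Finset.mem_image.mpr ⟨f, hf, hfa⟩
      calc (V k).card ≤ (E.image (fun f => f k)).card := Finset.card_le_card hsub
        _ ≤ E.card := Finset.card_image_le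
    · push_neg at hfib
      obtain ⟨v, hv, hvE⟩ := hfib
      set w : α := e k with hw
      have hwv : w ≠ v := fun h => hvE e he h
      have hwV : w ∈ V k := hmem e he k
      set Fw : Finset (Fin (n+2) → α) := E.filter (fun f => f k = w) with hFw
      have heFw : e ∈ Fw := Finset.mem_filter.mpr ⟨he, rfl⟩
      set r : (Fin (n+2) → α) → (Fin (n+1) → α) := fun f => f ∘ Fin.castSucc with hr
      have hinj : Set.InjOn r Fw := by
        intro f hf g hg hfg
        have hfk : f k = w := (Finset.mem_filter.mp hf).2
        have hgk : g k = w := (Finset.mem_filter.mp hg).2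
        funext i
        induction i using Fin.lastCases with
        | last => rw [hfk, hgk]
        | cast j => exact congrFun hfg j
      set E' : Finset (Fin (n+1) → α) := Fw.image r with hE'
      have hmem' : ∀ e' ∈ E', ∀ j, e' j ∈ V (Fin.castSucc j) := by
        intro e' he' j
        obtain ⟨f, hf, rfl⟩ := Finset.mem_image.mp he'
        exact hmem f (Finset.mem_filter.mp hf).1 _
      have hpar' : ∀ X' : Fin (n+1) → Finset α,
          (∀ j, X' j ⊆ V (Fin.castSucc j)) → (∀ j, (X' j).card = 2) →
          Even ((E'.filter fun e' => ∀ j, e' j ∈ X' j).card) := by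
        intro X' hXsub hX2
        set X : Fin (n+2) → Finset α := fun i => Fin.lastCases {v, w} X' i with hX
        have hXlast : X k = {v, w} := by simp [hX, hk]
        have hXcast : ∀ j, X (Fin.castSucc j) = X' j := by
          intro j; simp [hX]
        have hEeven := hpar X (fun i => ?_) (fun i => ?_)
        · have hSeq : E.filter (fun f => ∀ i, f i ∈ X i)
              = Fw.filter (fun f => ∀ j, f (Fin.castSucc j) ∈ X' j) := by
            ext f
            simp only [Finset.mem_filter, hFw, and_assoc]
            constructor
            · rintro ⟨hf, hfi⟩
              have hfk : f k ∈ X k := hfi k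
              rw [hXlast] at hfk
              have hfkw : f k = w := by
                rcases Finset.mem_insert.mp hfk with h | h
                · exact absurd h (hvE f hf)
                · exact Finset.mem_singleton.mp h
              exact ⟨hf, hfkw, fun j => by rw [← hXcast j]; exact hfi _⟩
            · rintro ⟨hf, hfk, hfj⟩
              refine ⟨hf, fun i => ?_⟩
              induction i using Fin.lastCases with
              | last => rw [← hk, hXlast, hfk]; simp
              | cast j => rw [hXcast]; exact hfj j
          have hfilt : E'.filter (fun e' => ∀ j, e' j ∈ X' j)
              = (Fw.filter (fun f => ∀ j, f (Fin.castSucc j) ∈ X' j)).image r := by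
            rw [hE', Finset.filter_image]
            rfl
          rw [hfilt, Finset.card_image_of_injOn (hinj.mono (Finset.filter_subset _ _)),
            ← hSeq]
          exact hEeven
        · -- X i ⊆ V i
          induction i using Fin.lastCases with
          | last =>
            rw [← hk, hXlast]
            intro x hx
            rcases Finset.mem_insert.mp hx with rfl | hx
            · exact hv
            · rw [Finset.mem_singleton.mp hx]; exact hwV
          | cast j => rw [hXcast]; exact hXsub j
        · induction i using Fin.lastCases with
          | last =>
            rw [← hk, hXlast, Finset.card_insert_of_notMem (by simpa using hwv.symm),
              Finset.card_singleton]
          | cast j => rw [hXcast]; exact hX2 j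
      have hne' : E'.Nonempty := ⟨r e, Finset.mem_image_of_mem r heFw⟩
      obtain ⟨j, hj⟩ := ih (fun j => V (Fin.castSucc j)) E' hmem' hpar' hne'
      refine ⟨Fin.castSucc j, hj.trans ?_⟩
      calc E'.card ≤ Fw.card := Finset.card_image_le
        _ ≤ E.card := Finset.card_filter_le _ _

/-- A non-trivial octahedral system (one having at least one edge)
has at least `min_i |V_i|` edges. -/
theorem octahedral_nontrivial_lower_bound {α : Type*} [DecidableEq α] {n : ℕ}
    (hn : 0 < n)
    (V : Fin n → Finset α) (E : Finset (Fin n → α))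
    (hdisj : ∀ i j : Fin n, i ≠ j → Disjoint (V i) (V j))
    (hcard : ∀ i, 2 ≤ (V i).card)
    (hoct : IsOctahedralSystem V E)
    (hne : E.Nonempty) :
    (Finset.univ.inf' (Finset.univ_nonempty_iff.mpr ⟨⟨0, hn⟩⟩)
      fun i : Fin n => (V i).card) ≤ E.card := by
  obtain ⟨m, rfl⟩ : ∃ m, n = m + 1 := ⟨n - 1, by omega⟩
  obtain ⟨i, hi⟩ := octahedral_aux m V E hoct.1 hoct.2 hne
  exact le_trans (Finset.inf'_le _ (Finset.mem_univ i)) hi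
end

section
/- Let n ≥ 2. An octahedral system without isolated vertex on vertex sets V_1,…,V_n has at least max_{i ≠ j} (|V_i| + |V_j|) − 2 edges. -/
/-!
Fix `i ≠ j` and project the edges to the bipartite graph `G ⊆ V i × V j` of pairs `(e i, e j)`;
it has no isolated vertex. If every pair of `G` is the projection of at least two edges, then
`#E ≥ 2 * #G ≥ #(V i) + #(V j)`. Otherwise some edge `e₀` is alone over its pair `(u₀, w₀)`.
Parity applied to a box `∏ k, {e₀ k, y k}` with `y i = u ≠ u₀`, `y j = w ≠ w₀` yields a second
edge in the box, so one of `(u₀, w)`, `(u, w₀)`, `(u, w)` lies in `G`. Hence `G` consists of the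
double star at `(u₀, w₀)` plus a graph covering the vertices outside that star and containing all
pairs between them, which forces `#G ≥ #(V i) + #(V j) - 2`.
-/

open Finset

section Bipartite

variable {α β : Type*}

theorem card_le_card_of_forall_exists_prod_mem_left {R : Finset (α × β)} {P : Finset α}
    (hP : ∀ u ∈ P, ∃ w, (u, w) ∈ R) : #P ≤ #R :=
  card_le_card_of_surjOn Prod.fst fun u hu => by
    obtain ⟨w, hw⟩ := hP u hu
    exact ⟨(u, w), hw, rfl⟩

theorem card_le_card_of_forall_exists_prod_mem_right {R : Finset (α × β)} {Q : Finset β}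
    (hQ : ∀ w ∈ Q, ∃ u, (u, w) ∈ R) : #Q ≤ #R :=
  card_le_card_of_surjOn Prod.snd fun w hw => by
    obtain ⟨u, hu⟩ := hQ w hw
    exact ⟨(u, w), hu, rfl⟩

theorem card_add_card_le_card_add_one {R : Finset (α × β)} {P : Finset α} {Q : Finset β}
    (hP : ∀ u ∈ P, ∃ w, (u, w) ∈ R) (hQ : ∀ w ∈ Q, ∃ u, (u, w) ∈ R) (hPQ : P ×ˢ Q ⊆ R) :
    #P + #Q ≤ #R + 1 := by
  rcases P.eq_empty_or_nonempty with rfl | hPne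
  · simpa using (card_le_card_of_forall_exists_prod_mem_right hQ).trans (R.card.le_succ)
  rcases Q.eq_empty_or_nonempty with rfl | hQne
  · simpa using (card_le_card_of_forall_exists_prod_mem_left hP).trans (R.card.le_succ)
  have hprod : #P * #Q ≤ #R := card_product P Q ▸ card_le_card hPQ
  nlinarith [hPne.card_pos, hQne.card_pos]

theorem card_add_card_le_card_add_two {G : Finset (α × β)} {S : Finset α} {T : Finset β}
    {u₀ : α} {w₀ : β} (h₀ : (u₀, w₀) ∈ G)
    (hS : ∀ u ∈ S, ∃ w, (u, w) ∈ G) (hT : ∀ w ∈ T, ∃ u, (u, w) ∈ G)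
    (hsq : ∀ u ∈ S, ∀ w ∈ T, u ≠ u₀ → w ≠ w₀ → (u₀, w) ∈ G ∨ (u, w₀) ∈ G ∨ (u, w) ∈ G) :
    #S + #T ≤ #G + 2 := by
  classical
  -- `A`, `B` are the leaves of the double star at `(u₀, w₀)`, and `P`, `Q` the vertices it misses.
  set A := S.filter fun u => (u, w₀) ∈ G
  set B := T.filter fun w => (u₀, w) ∈ G
  set P := S.filter fun u => (u, w₀) ∉ G
  set Q := T.filter fun w => (u₀, w) ∉ G
  set star := G.filter fun p => p.1 = u₀ ∨ p.2 = w₀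
  set rest := G.filter fun p => ¬(p.1 = u₀ ∨ p.2 = w₀)
  have hstar : #A + #B ≤ #star + 1 := by
    have hsub : A ×ˢ {w₀} ∪ {u₀} ×ˢ B ⊆ star := by
      intro p hp
      simp only [mem_union, mem_product, mem_singleton, mem_filter, A, B, star] at hp ⊢
      rcases p with ⟨u, w⟩
      rcases hp with ⟨⟨-, hu⟩, rfl⟩ | ⟨rfl, -, hw⟩ <;> simp_all
    have hinter : #(A ×ˢ {w₀} ∩ {u₀} ×ˢ B) ≤ 1 := by
      rw [product_inter_product]
      calc #((A ∩ {u₀}) ×ˢ ({w₀} ∩ B)) ≤ #(({u₀} : Finset α) ×ˢ ({w₀} : Finset β)) :=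
            card_le_card (product_subset_product inter_subset_right inter_subset_left)
        _ = 1 := by simp
    have := card_union_add_card_inter (A ×ˢ {w₀}) ({u₀} ×ˢ B)
    have := card_le_card hsub
    simp only [card_product, card_singleton, mul_one, one_mul] at *
    omega
  have hrest : #P + #Q ≤ #rest + 1 := by
    refine card_add_card_le_card_add_one ?_ ?_ ?_
    · intro u hu
      simp only [mem_filter, P] at hu
      obtain ⟨w, hw⟩ := hS u hu.1
      refine ⟨w, mem_filter.2 ⟨hw, ?_⟩⟩
      rintro (rfl | rfl) <;> tauto
    · intro w hw
      simp only [mem_filter, Q] at hw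
      obtain ⟨u, hu⟩ := hT w hw.1
      refine ⟨u, mem_filter.2 ⟨hu, ?_⟩⟩
      rintro (rfl | rfl) <;> tauto
    · rintro ⟨u, w⟩ hp
      simp only [mem_product, mem_filter, P, Q] at hp
      obtain ⟨⟨huS, hu⟩, hwT, hw⟩ := hp
      have hu₀ : u ≠ u₀ := by rintro rfl; exact hu h₀
      have hw₀ : w ≠ w₀ := by rintro rfl; exact hw h₀
      refine mem_filter.2 ⟨?_, by tauto⟩
      rcases hsq u huS w hwT hu₀ hw₀ with h | h | h <;> tauto
  have hSsplit : #A + #P = #S := card_filter_add_card_filter_not _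
  have hTsplit : #B + #Q = #T := card_filter_add_card_filter_not _
  have hGsplit : #star + #rest = #G := card_filter_add_card_filter_not _
  omega

end Bipartite

namespace IsOctahedralSystem

variable {α : Type*} [DecidableEq α] {n : ℕ} {V : Fin n → Finset α} {E : Finset (Fin n → α)}

theorem exists_ne_forall_eq_or_eq (hoct : IsOctahedralSystem V E) {e₀ : Fin n → α}
    (he₀ : e₀ ∈ E) {y : Fin n → α} (hyV : ∀ k, y k ∈ V k) (hy : ∀ k, y k ≠ e₀ k) :
    ∃ e ∈ E, e ≠ e₀ ∧ ∀ k, e k = e₀ k ∨ e k = y k := by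
  set X : Fin n → Finset α := fun k => {e₀ k, y k}
  have hXV : ∀ k, X k ⊆ V k := fun k =>
    insert_subset (hoct.1 e₀ he₀ k) (singleton_subset_iff.2 (hyV k))
  have hX2 : ∀ k, #(X k) = 2 := fun k => card_pair (hy k).symm
  set box := E.filter fun e => ∀ k, e k ∈ X k
  have he₀box : e₀ ∈ box := mem_filter.2 ⟨he₀, fun k => mem_insert_self _ _⟩
  have hbox : 1 < #box := by
    obtain ⟨m, hm⟩ : Even #box := hoct.2 X hXV hX2
    have := card_pos.2 ⟨e₀, he₀box⟩
    omega
  obtain ⟨e, he, hne⟩ := exists_mem_ne hbox e₀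
  obtain ⟨heE, heX⟩ := mem_filter.1 he
  exact ⟨e, heE, hne, fun k => by simpa [X] using heX k⟩

theorem mem_image_proj_of_unique (hoct : IsOctahedralSystem V E) (hcard : ∀ k, 2 ≤ #(V k))
    {e₀ : Fin n → α} (he₀ : e₀ ∈ E) {i j : Fin n} (hij : i ≠ j)
    (hunique : ∀ e ∈ E, e ≠ e₀ → e i = e₀ i → e j ≠ e₀ j)
    {u w : α} (hu : u ∈ V i) (hu₀ : u ≠ e₀ i) (hw : w ∈ V j) (hw₀ : w ≠ e₀ j) :
    (e₀ i, w) ∈ E.image (fun e => (e i, e j)) ∨ (u, e₀ j) ∈ E.image (fun e => (e i, e j)) ∨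
      (u, w) ∈ E.image (fun e => (e i, e j)) := by
  choose z hzV hz using fun k => exists_mem_ne (hcard k) (e₀ k)
  set y := Function.update (Function.update z i u) j w
  have hy : ∀ k, y k ∈ V k ∧ y k ≠ e₀ k := by
    intro k
    simp only [y, Function.update_apply]
    split_ifs with hkj hki
    · subst hkj; exact ⟨hw, hw₀⟩
    · subst hki; exact ⟨hu, hu₀⟩
    · exact ⟨hzV k, hz k⟩
  have hyi : y i = u := by simp [y, Function.update_of_ne hij]
  have hyj : y j = w := by simp [y]
  obtain ⟨e, he, hne, hek⟩ :=
    hoct.exists_ne_forall_eq_or_eq he₀ (fun k => (hy k).1) (fun k => (hy k).2)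
  have heG : (e i, e j) ∈ E.image (fun e => (e i, e j)) := mem_image_of_mem _ he
  rcases hek i with hei | hei <;> rcases hek j with hej | hej
  · exact absurd hej (hunique e he hne hei)
  all_goals simp_all

end IsOctahedralSystem

theorem octahedral_no_isolated_lower_bound_general {α : Type*} [DecidableEq α] {n : ℕ}
    (V : Fin n → Finset α) (E : Finset (Fin n → α))
    (hcard : ∀ i, 2 ≤ (V i).card)
    (hoct : IsOctahedralSystem V E)
    (hiso : NoIsolatedVertex V E) :
    ∀ i j : Fin n, i ≠ j → (V i).card + (V j).card - 2 ≤ E.card := by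
  intro i j hij
  set G := E.image fun e => (e i, e j)
  have hGE : #G ≤ #E := card_image_le
  have hcover_i : ∀ u ∈ V i, ∃ w, (u, w) ∈ G := fun u hu => by
    obtain ⟨e, he, rfl⟩ := hiso i u hu
    exact ⟨e j, mem_image_of_mem _ he⟩
  have hcover_j : ∀ w ∈ V j, ∃ u, (u, w) ∈ G := fun w hw => by
    obtain ⟨e, he, rfl⟩ := hiso j w hw
    exact ⟨e i, mem_image_of_mem _ he⟩
  by_cases htwin : ∀ e₀ ∈ E, ∃ e ∈ E, e ≠ e₀ ∧ e i = e₀ i ∧ e j = e₀ j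
  · have h2G : 2 * #G ≤ #E := mul_card_image_le_card E 2 fun p hp => by
      obtain ⟨e₀, he₀, rfl⟩ := mem_image.1 hp
      obtain ⟨e, he, hne, hei, hej⟩ := htwin e₀ he₀
      exact one_lt_card.2 ⟨e, by simp [he, hei, hej], e₀, by simp [he₀], hne⟩
    have := card_le_card_of_forall_exists_prod_mem_left hcover_i
    have := card_le_card_of_forall_exists_prod_mem_right hcover_j
    omega
  push Not at htwin
  obtain ⟨e₀, he₀, hunique⟩ := htwin
  have : #(V i) + #(V j) ≤ #G + 2 :=
    card_add_card_le_card_add_two (mem_image_of_mem _ he₀) hcover_i hcover_j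
      fun u hu w hw hu₀ hw₀ => hoct.mem_image_proj_of_unique hcard he₀ hij hunique hu hu₀ hw hw₀
  omega

/-- An octahedral system without isolated vertex has at least
`max_{i ≠ j} (|V_i| + |V_j|) − 2` edges. -/
theorem octahedral_no_isolated_lower_bound {α : Type*} [DecidableEq α] {n : ℕ}
    (hn : 2 ≤ n)
    (V : Fin n → Finset α) (E : Finset (Fin n → α))
    (hdisj : ∀ i j : Fin n, i ≠ j → Disjoint (V i) (V j))
    (hcard : ∀ i, 2 ≤ (V i).card)
    (hoct : IsOctahedralSystem V E)
    (hiso : NoIsolatedVertex V E) :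
    ∀ i j : Fin n, i ≠ j → (V i).card + (V j).card - 2 ≤ E.card :=
  octahedral_no_isolated_lower_bound_general V E hcard hoct hiso
end

section
/- For every n ≥ 1 and all integers m_1,…,m_n ≥ 2, there exists an octahedral system without isolated vertex on vertex sets V_1,…,V_n with |V_i| = m_i for all i having exactly 2 + Σ_{i=1}^n (m_i − 2) edges. -/
/-! Let part `j` be `{0, …, m_j - 1}` and let `s_k` be the staircase edge that is `1` on the
first `k` coordinates and `0` on the others. The edges are `s_0`, `s_n` and, for every `i` and
`2 ≤ t < m_i`, the edge that agrees with `s_i` off coordinate `i` and takes the value `t` at `i`.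
Letting `t` run through all of `{0, …, m_i - 1}` adds `s_i` (at `t = 0`) and `s_{i+1}` (at
`t = 1`), so the family indexed by all pairs `(i, t)` counts `s_0` and `s_n` once, the other
staircases twice and every remaining edge once. Inside a box `X` with `|X_j| = 2`, the members of
this family with a fixed `i` all agree off coordinate `i`, so either none of them or exactly
`|X_i| = 2` of them lie in `X`. Hence the family has an even number of members in `X`, and so does
the edge set. -/

open Finset

theorem card_filter_comp_mem_of_subset_image {α β : Type*} [DecidableEq β] {f : α → β}
    (hf : Function.Injective f) {s : Finset α} {X : Finset β} (hX : X ⊆ s.image f) :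
    #(s.filter fun a => f a ∈ X) = #X := by
  rw [← card_image_of_injective _ hf, ← filter_image (p := (· ∈ X)), filter_mem_eq_inter,
    inter_eq_right.2 hX]

theorem sum_range_add_succ_add_ends {M : Type*} [AddCommMonoid M] (a : ℕ → M) (n : ℕ) :
    ∑ i ∈ range n, (a i + a (i + 1)) + (a 0 + a n) = 2 • ∑ i ∈ range (n + 1), a i := by
  rw [sum_add_distrib, two_nsmul]
  nth_rw 1 [sum_range_succ]
  rw [sum_range_succ' a n]
  abel

namespace StaircaseSystem

-- Vertex `v` of part `j` is `Nat.pair j v`, and `edge n k 0` is the staircase `s_k`.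
def edge (n i t : ℕ) : Fin n → ℕ :=
  fun j => Nat.pair j (if (j : ℕ) < i then 1 else if (j : ℕ) = i then t else 0)

def part {n : ℕ} (m : Fin n → ℕ) (i : Fin n) : Finset ℕ :=
  (range (m i)).image (Nat.pair i)

def edges {n : ℕ} (m : Fin n → ℕ) : Finset (Fin n → ℕ) :=
  insert (edge n 0 0) <| insert (edge n n 0) <|
    (univ.sigma fun i => Ico 2 (m i)).image fun p => edge n p.1 p.2

variable {n : ℕ}

theorem edge_apply_self (i : Fin n) (t : ℕ) : edge n i t i = Nat.pair i t := by
  simp [edge]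

theorem edge_apply_of_ne {i : ℕ} {j : Fin n} (t : ℕ) (h : (j : ℕ) ≠ i) :
    edge n i t j = Nat.pair j (if (j : ℕ) < i then 1 else 0) := by
  simp [edge, h]

theorem edge_one (i : ℕ) : edge n i 1 = edge n (i + 1) 0 := by
  ext j
  simp only [edge]
  split_ifs <;> omega

theorem edge_ne_edge_zero {i : Fin n} {t : ℕ} (ht : 2 ≤ t) (k : ℕ) : edge n i t ≠ edge n k 0 := by
  intro h
  have := congrFun h i
  simp only [edge, lt_irrefl, if_false, if_true, Nat.pair_eq_pair] at this
  split_ifs at this <;> omega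

theorem edge_zero_ne_edge_self (hn : 1 ≤ n) : edge n 0 0 ≠ edge n n 0 := by
  intro h
  have := congrFun h ⟨0, hn⟩
  simp [edge, Nat.pair_eq_pair] at this
  omega

theorem edge_inj {i i' : Fin n} {t t' : ℕ} (ht : 2 ≤ t)
    (h : edge n i t = edge n i' t') : i = i' ∧ t = t' := by
  have hi : i = i' := by
    by_contra hne
    have := congrFun h i
    rw [edge_apply_self, edge_apply_of_ne t' (Fin.val_ne_of_ne hne), Nat.pair_eq_pair] at this
    split_ifs at this <;> omega
  subst hi
  simpa [edge_apply_self, Nat.pair_eq_pair] using congrFun h i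

theorem card_part (m : Fin n → ℕ) (i : Fin n) : #(part m i) = m i := by
  rw [part, card_image_of_injective _ fun _ _ h => (Nat.pair_eq_pair.1 h).2, card_range]

theorem disjoint_part (m : Fin n → ℕ) {i j : Fin n} (hij : i ≠ j) :
    Disjoint (part m i) (part m j) := by
  simp only [part, disjoint_left, mem_image, not_exists, not_and]
  rintro _ ⟨v, -, rfl⟩ w - h
  exact hij (Fin.ext (Nat.pair_eq_pair.1 h).1.symm)

theorem sum_edges {M : Type*} [AddCommMonoid M] (hn : 1 ≤ n) (m : Fin n → ℕ)
    (f : (Fin n → ℕ) → M) :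
    ∑ e ∈ edges m, f e =
      f (edge n 0 0) + f (edge n n 0) + ∑ i, ∑ t ∈ Ico 2 (m i), f (edge n i t) := by
  have hinj : Set.InjOn (fun p : (_ : Fin n) × ℕ => edge n p.1 p.2)
      (univ.sigma fun i => Ico 2 (m i)) := by
    rintro ⟨i, t⟩ hp ⟨i', t'⟩ - h
    obtain ⟨rfl, rfl⟩ := edge_inj (mem_Ico.1 (mem_sigma.1 hp).2).1 h
    rfl
  have hextra : ∀ k, edge n k 0 ∉ (univ.sigma fun i => Ico 2 (m i)).image
      fun p => edge n p.1 p.2 := by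
    simp only [mem_image, mem_sigma, mem_Ico, not_exists, not_and]
    rintro k ⟨i, t⟩ ⟨-, ht, -⟩
    exact edge_ne_edge_zero ht k
  rw [edges, sum_insert, sum_insert (hextra n), sum_image hinj, sum_sigma, add_assoc]
  rw [mem_insert, not_or]
  exact ⟨edge_zero_ne_edge_self hn, hextra 0⟩

theorem card_edges (hn : 1 ≤ n) (m : Fin n → ℕ) :
    #(edges m) = 2 + ∑ i, (m i - 2) := by
  rw [card_eq_sum_ones, sum_edges hn]
  simp

theorem edge_mem_part {m : Fin n → ℕ} (hm : ∀ i, 2 ≤ m i) {e : Fin n → ℕ} (he : e ∈ edges m)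
    (j : Fin n) : e j ∈ part m j := by
  have hj := hm j
  simp only [edges, mem_insert, mem_image, mem_sigma, mem_Ico] at he
  have hsmall : ∀ k, edge n k 0 j ∈ part m j := fun k => by
    simp only [edge, part, mem_image, mem_range, Nat.pair_eq_pair, true_and, exists_eq_right]
    split_ifs <;> omega
  rcases he with rfl | rfl | ⟨⟨i, t⟩, ⟨-, -, ht⟩, rfl⟩
  · exact hsmall 0
  · exact hsmall n
  obtain rfl | hij := eq_or_ne j i
  · simpa [edge_apply_self, part] using ht
  · simpa [edge_apply_of_ne _ (Fin.val_ne_of_ne hij)] using hsmall i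

theorem exists_edge_apply_eq (m : Fin n → ℕ) (j : Fin n) {v : ℕ} (hv : v ∈ part m j) :
    ∃ e ∈ edges m, e j = v := by
  obtain ⟨t, ht, rfl⟩ := mem_image.1 hv
  rcases lt_or_ge t 2 with ht2 | ht2
  · interval_cases t
    · exact ⟨edge n 0 0, mem_insert_self _ _, by simp [edge]⟩
    · exact ⟨edge n n 0, mem_insert_of_mem (mem_insert_self _ _), by simp [edge]⟩
  · refine ⟨edge n j t, ?_, edge_apply_self j t⟩
    exact mem_insert_of_mem <| mem_insert_of_mem <|
      mem_image.2 ⟨⟨j, t⟩, mem_sigma.2 ⟨mem_univ _, mem_Ico.2 ⟨ht2, mem_range.1 ht⟩⟩, rfl⟩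

section Parity

variable (X : Fin n → Finset ℕ)

theorem forall_edge_apply_mem_iff (i : Fin n) (t : ℕ) :
    (∀ j, edge n i t j ∈ X j) ↔
      (∀ j, j ≠ i → edge n i 0 j ∈ X j) ∧ Nat.pair i t ∈ X i := by
  have hoff : ∀ j : Fin n, j ≠ i → edge n i t j = edge n i 0 j := fun j hj => by
    rw [edge_apply_of_ne t (Fin.val_ne_of_ne hj), edge_apply_of_ne 0 (Fin.val_ne_of_ne hj)]
  refine ⟨fun h => ⟨fun j hj => hoff j hj ▸ h j, edge_apply_self i t ▸ h i⟩, ?_⟩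
  rintro ⟨hF, hi⟩ j
  obtain rfl | hj := eq_or_ne j i
  · rwa [edge_apply_self]
  · exact hoff j hj ▸ hF j hj

theorem even_sum_range_ite_forall_edge_apply_mem {m : Fin n → ℕ} {i : Fin n}
    (hX : X i ⊆ part m i) (hX2 : #(X i) = 2) :
    Even (∑ t ∈ range (m i), if ∀ j, edge n i t j ∈ X j then 1 else 0) := by
  simp_rw [forall_edge_apply_mem_iff, ite_and]
  split_ifs
  · rw [← card_filter, card_filter_comp_mem_of_subset_image
      (fun _ _ h => (Nat.pair_eq_pair.1 h).2) hX, hX2]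
    exact even_two
  · simp

theorem even_card_filter_edges (hn : 1 ≤ n) {m : Fin n → ℕ} (hm : ∀ i, 2 ≤ m i)
    (hX : ∀ i, X i ⊆ part m i) (hX2 : ∀ i, #(X i) = 2) :
    Even #((edges m).filter fun e => ∀ j, e j ∈ X j) := by
  set a : ℕ → ℕ → ℕ := fun i t => if ∀ j, edge n i t j ∈ X j then 1 else 0 with ha
  have hcount : #((edges m).filter fun e => ∀ j, e j ∈ X j) =
      a 0 0 + a n 0 + ∑ i : Fin n, ∑ t ∈ Ico 2 (m i), a i t := by
    rw [card_filter, sum_edges hn]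
  have hrows : Even (∑ i : Fin n, (a i 0 + a (i + 1) 0) +
      ∑ i : Fin n, ∑ t ∈ Ico 2 (m i), a i t) := by
    rw [← sum_add_distrib]
    refine even_sum _ fun i _ => ?_
    have hsplit : ∑ t ∈ range (m i), a i t =
        a i 0 + a (i + 1) 0 + ∑ t ∈ Ico 2 (m i), a i t := by
      rw [← sum_range_add_sum_Ico _ (hm i), sum_range_succ, sum_range_one]
      simp only [ha, edge_one]
    exact hsplit ▸ even_sum_range_ite_forall_edge_apply_mem X (hX i) (hX2 i)
  have htel := sum_range_add_succ_add_ends (fun k => a k 0) n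
  rw [← Fin.sum_univ_eq_sum_range (fun k => a k 0 + a (k + 1) 0)] at htel
  rw [Nat.even_iff] at hrows
  rw [smul_eq_mul] at htel
  rw [hcount, Nat.even_iff]
  omega

end Parity

end StaircaseSystem

/-- For every `n ≥ 1` and `m_1, …, m_n ≥ 2` there exists an octahedral
system without isolated vertex with `|V_i| = m_i` having exactly
`2 + Σ_i (m_i − 2)` edges. -/
theorem octahedral_exists_few_edges {n : ℕ} (hn : 1 ≤ n)
    (m : Fin n → ℕ) (hm : ∀ i, 2 ≤ m i) :
    ∃ (V : Fin n → Finset ℕ) (E : Finset (Fin n → ℕ)),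
      (∀ i j : Fin n, i ≠ j → Disjoint (V i) (V j)) ∧
      (∀ i, (V i).card = m i) ∧
      IsOctahedralSystem V E ∧
      NoIsolatedVertex V E ∧
      E.card = 2 + ∑ i : Fin n, (m i - 2) := by
  refine ⟨StaircaseSystem.part m, StaircaseSystem.edges m,
    fun _ _ => StaircaseSystem.disjoint_part m, StaircaseSystem.card_part m, ⟨?_, ?_⟩,
    fun j _ => StaircaseSystem.exists_edge_apply_eq m j, StaircaseSystem.card_edges hn m⟩
  · exact fun e he => StaircaseSystem.edge_mem_part hm he
  · exact fun X hX hX2 => StaircaseSystem.even_card_filter_edges X hn hm hX hX2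
end

section
/- Let n ≥ 2 and m_{n−1}, m_n ≥ 2. The minimum number of edges of an octahedral system without isolated vertex on vertex sets V_1,…,V_n with |V_1| = … = |V_{n−2}| = 2, |V_{n−1}| = m_{n−1} and |V_n| = m_n equals m_{n−1} + m_n − 2; that is, every such system has at least m_{n−1} + m_n − 2 edges and there exists one with exactly m_{n−1} + m_n − 2 edges. -/
open Finset

section Matrix

variable {α β : Type*} {A : Finset α} {B : Finset β} {N : α → β → ℕ}

lemma exists_odd_iff_ne
    (hpar : ∀ u ∈ A, ∀ u' ∈ A, ∀ v ∈ B, ∀ v' ∈ B, u ≠ u' → v ≠ v' →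
      Even (N u v + N u v' + (N u' v + N u' v'))) :
    ∃ (f : α → Bool) (g : β → Bool), ∀ u ∈ A, ∀ v ∈ B, Odd (N u v) ↔ f u ≠ g v := by
  rcases A.eq_empty_or_nonempty with rfl | ⟨u₀, hu₀⟩
  · exact ⟨default, default, by simp⟩
  rcases B.eq_empty_or_nonempty with rfl | ⟨v₀, hv₀⟩
  · exact ⟨default, default, by simp⟩
  refine ⟨fun u => decide (Odd (N u v₀)), fun v => decide (Odd (N u₀ v + N u₀ v₀)),
    fun u hu v hv => ?_⟩
  simp only [ne_eq, decide_eq_decide, Nat.odd_iff]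
  by_cases huu₀ : u = u₀
  · subst huu₀; omega
  by_cases hvv₀ : v = v₀
  · subst hvv₀; omega
  have := Nat.even_iff.mp (hpar u hu u₀ hu₀ v hv v₀ hv₀ huu₀ hvv₀)
  omega

lemma le_sum_of_card_filter_odd (s : Finset β) (r : β → ℕ)
    (hr : ∃ v ∈ s, r v ≠ 0) :
    (if #{v ∈ s | Odd (r v)} = 0 then 2 else #{v ∈ s | Odd (r v)}) ≤ ∑ v ∈ s, r v := by
  split_ifs with h
  · obtain ⟨v, hv, hv₀⟩ := hr
    have hodd : ¬Odd (r v) := filter_eq_empty_iff.mp (card_eq_zero.mp h) hv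
    calc 2 ≤ r v := by rw [Nat.not_odd_iff_even, even_iff_two_dvd] at hodd; omega
      _ ≤ ∑ v ∈ s, r v := single_le_sum (fun _ _ => Nat.zero_le _) hv
  · calc #{v ∈ s | Odd (r v)} = ∑ v ∈ s with Odd (r v), 1 := card_eq_sum_ones _
      _ ≤ ∑ v ∈ s with Odd (r v), r v :=
          sum_le_sum fun v hv => (mem_filter.mp hv).2.pos
      _ ≤ ∑ v ∈ s, r v := sum_le_sum_of_subset (filter_subset _ _)

lemma sum_card_mul_le_sum_sum {f : α → Bool} {g : β → Bool}
    (hN : ∀ u ∈ A, ∀ v ∈ B, Odd (N u v) ↔ f u ≠ g v) (hrow : ∀ u ∈ A, ∃ v ∈ B, N u v ≠ 0) :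
    ∑ c, #{u ∈ A | f u = c} *
        (if #{v ∈ B | g v ≠ c} = 0 then 2 else #{v ∈ B | g v ≠ c}) ≤
      ∑ u ∈ A, ∑ v ∈ B, N u v := by
  rw [← sum_fiberwise A f]
  gcongr with c
  rw [← smul_eq_mul]
  refine card_nsmul_le_sum _ _ _ fun u hu => ?_
  obtain ⟨huA, rfl⟩ := mem_filter.mp hu
  have hodd : {v ∈ B | g v ≠ f u} = {v ∈ B | Odd (N u v)} :=
    filter_congr fun v hv => by rw [hN u huA v hv, ne_comm]
  rw [hodd]
  exact le_sum_of_card_filter_odd B (N u) (hrow u huA)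

lemma two_mul_add_le (x y : ℕ) :
    2 * (x + y) ≤ x * (if y = 0 then 2 else y) + y * (if x = 0 then 2 else x) + 2 := by
  split_ifs with hy hx hx <;> try omega
  obtain ⟨x, rfl⟩ := Nat.exists_eq_succ_of_ne_zero hx
  obtain ⟨y, rfl⟩ := Nat.exists_eq_succ_of_ne_zero hy
  nlinarith

theorem card_add_card_le_sum_sum_add_two {f : α → Bool} {g : β → Bool}
    (hN : ∀ u ∈ A, ∀ v ∈ B, Odd (N u v) ↔ f u ≠ g v)
    (hrow : ∀ u ∈ A, ∃ v ∈ B, N u v ≠ 0) (hcol : ∀ v ∈ B, ∃ u ∈ A, N u v ≠ 0) :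
    #A + #B ≤ ∑ u ∈ A, ∑ v ∈ B, N u v + 2 := by
  have hrows := sum_card_mul_le_sum_sum hN hrow
  have hcols := sum_card_mul_le_sum_sum (N := fun v u => N u v)
    (fun v hv u hu => (hN u hu v hv).trans ne_comm) hcol
  rw [sum_comm] at hcols
  have hA := card_filter_add_card_filter_not (s := A) (fun u => f u = true)
  have hB := card_filter_add_card_filter_not (s := B) (fun v => g v = true)
  simp only [Fintype.sum_bool, ne_eq, Bool.not_eq_true, Bool.not_eq_false] at hrows hcols hA hB
  have := two_mul_add_le #{u ∈ A | f u = true} #{v ∈ B | g v = false}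
  have := two_mul_add_le #{u ∈ A | f u = false} #{v ∈ B | g v = true}
  omega

end Matrix

section Codegree

variable {ι α : Type*} [DecidableEq α]

def codegree (E : Finset (ι → α)) (i j : ι) (u v : α) : ℕ := #{e ∈ E | e i = u ∧ e j = v}

lemma codegree_ne_zero {E : Finset (ι → α)} {e : ι → α} (he : e ∈ E) (i j : ι) :
    codegree E i j (e i) (e j) ≠ 0 :=
  card_ne_zero_of_mem (mem_filter.mpr ⟨he, rfl, rfl⟩)

lemma card_filter_mem_eq_sum_codegree (E : Finset (ι → α)) (i j : ι) (S T : Finset α) :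
    #{e ∈ E | e i ∈ S ∧ e j ∈ T} = ∑ u ∈ S, ∑ v ∈ T, codegree E i j u v := by
  have hmaps : Set.MapsTo (fun e => (e i, e j))
      (({e ∈ E | e i ∈ S ∧ e j ∈ T} : Finset (ι → α)) : Set (ι → α))
      ((S ×ˢ T : Finset (α × α)) : Set (α × α)) :=
    fun e he => by simp_all
  rw [card_eq_sum_card_fiberwise hmaps, sum_product]
  refine sum_congr rfl fun u hu => sum_congr rfl fun v hv => ?_
  rw [codegree, filter_filter]
  refine congrArg card (filter_congr fun e _ => ?_)
  simp only [Prod.mk.injEq]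
  constructor
  · exact fun h => h.2
  · rintro ⟨rfl, rfl⟩
    exact ⟨⟨hu, hv⟩, rfl, rfl⟩

lemma card_eq_sum_codegree {n : ℕ} {V : Fin n → Finset α} {E : Finset (Fin n → α)}
    (hE : ∀ e ∈ E, ∀ k, e k ∈ V k) (i j : Fin n) :
    #E = ∑ u ∈ V i, ∑ v ∈ V j, codegree E i j u v := by
  rw [← card_filter_mem_eq_sum_codegree, filter_true_of_mem fun e he => ⟨hE e he i, hE e he j⟩]

end Codegree

section Octahedral

variable {α : Type*} [DecidableEq α] {n : ℕ} {V : Fin n → Finset α} {E : Finset (Fin n → α)}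
  {i j : Fin n}

lemma filter_forall_mem_eq_filter_mem_and_mem {X : Fin n → Finset α}
    (hE : ∀ e ∈ E, ∀ k, e k ∈ V k) (hX : ∀ k, k ≠ i → k ≠ j → X k = V k) :
    {e ∈ E | ∀ k, e k ∈ X k} = {e ∈ E | e i ∈ X i ∧ e j ∈ X j} := by
  refine filter_congr fun e he => ⟨fun h => ⟨h i, h j⟩, fun ⟨hi, hj⟩ k => ?_⟩
  by_cases hki : k = i
  · exact hki ▸ hi
  by_cases hkj : k = j
  · exact hkj ▸ hj
  exact hX k hki hkj ▸ hE e he k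

theorem isOctahedralSystem_iff_even_codegree (hij : i ≠ j)
    (hV : ∀ k, k ≠ i → k ≠ j → #(V k) = 2) :
    IsOctahedralSystem V E ↔ (∀ e ∈ E, ∀ k, e k ∈ V k) ∧
      ∀ u ∈ V i, ∀ u' ∈ V i, ∀ v ∈ V j, ∀ v' ∈ V j, u ≠ u' → v ≠ v' →
        Even (codegree E i j u v + codegree E i j u v' +
          (codegree E i j u' v + codegree E i j u' v')) := by
  refine and_congr_right fun hE => ⟨fun hpar u hu u' hu' v hv v' hv' huu' hvv' => ?_,
    fun hpar X hXV hX => ?_⟩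
  · set X := Function.update (Function.update V i {u, u'}) j {v, v'}
    have hXi : X i = {u, u'} := by simp [X, hij]
    have hXj : X j = {v, v'} := by simp [X]
    have hXk : ∀ k, k ≠ i → k ≠ j → X k = V k := fun k hki hkj => by simp [X, hki, hkj]
    have hXV : ∀ k, X k ⊆ V k := by
      intro k
      by_cases hki : k = i
      · subst hki; simp [hXi, insert_subset_iff, hu, hu']
      by_cases hkj : k = j
      · subst hkj; simp [hXj, insert_subset_iff, hv, hv']
      rw [hXk k hki hkj]
    have hX : ∀ k, #(X k) = 2 := by
      intro k
      by_cases hki : k = i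
      · subst hki; exact hXi ▸ card_pair huu'
      by_cases hkj : k = j
      · subst hkj; exact hXj ▸ card_pair hvv'
      rw [hXk k hki hkj, hV k hki hkj]
    have := hpar X hXV hX
    rwa [filter_forall_mem_eq_filter_mem_and_mem hE hXk, hXi, hXj,
      card_filter_mem_eq_sum_codegree, sum_pair huu', sum_pair hvv', sum_pair hvv'] at this
  · have hXk : ∀ k, k ≠ i → k ≠ j → X k = V k := fun k hki hkj =>
      eq_of_subset_of_card_le (hXV k) (by rw [hX k, hV k hki hkj])
    obtain ⟨u, u', huu', hXi⟩ := card_eq_two.mp (hX i)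
    obtain ⟨v, v', hvv', hXj⟩ := card_eq_two.mp (hX j)
    have hsi := hXV i
    have hsj := hXV j
    rw [hXi, insert_subset_iff, singleton_subset_iff] at hsi
    rw [hXj, insert_subset_iff, singleton_subset_iff] at hsj
    rw [filter_forall_mem_eq_filter_mem_and_mem hE hXk, hXi, hXj,
      card_filter_mem_eq_sum_codegree, sum_pair huu', sum_pair hvv', sum_pair hvv']
    exact hpar u hsi.1 u' hsi.2 v hsj.1 v' hsj.2 huu' hvv'

theorem IsOctahedralSystem.card_add_card_le (hij : i ≠ j)
    (hV : ∀ k, k ≠ i → k ≠ j → #(V k) = 2) (hoct : IsOctahedralSystem V E)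
    (hiso : NoIsolatedVertex V E) :
    #(V i) + #(V j) ≤ #E + 2 := by
  obtain ⟨hE, hpar⟩ := (isOctahedralSystem_iff_even_codegree hij hV).mp hoct
  obtain ⟨f, g, hfg⟩ := exists_odd_iff_ne hpar
  rw [card_eq_sum_codegree hE i j]
  refine card_add_card_le_sum_sum_add_two hfg (fun u hu => ?_) (fun v hv => ?_)
  · obtain ⟨e, he, rfl⟩ := hiso i u hu
    exact ⟨e j, hE e he j, codegree_ne_zero he i j⟩
  · obtain ⟨e, he, rfl⟩ := hiso j v hv
    exact ⟨e i, hE e he i, codegree_ne_zero he i j⟩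

end Octahedral

section Cross

variable {n : ℕ} (i j : Fin n) (a b : ℕ)

def crossIndex : Finset (ℕ × ℕ) := Ico 1 a ×ˢ {0} ∪ {0} ×ˢ Ico 1 b

def crossParts : Fin n → Finset ℕ :=
  fun k => (range (if k = i then a else if k = j then b else 2)).image (Nat.pair k)

def crossEdge (p : ℕ × ℕ) : Fin n → ℕ :=
  fun k => Nat.pair k (if k = i then p.1 else if k = j then p.2 else min p.1 1)

def crossEdges : Finset (Fin n → ℕ) := (crossIndex a b).image (crossEdge i j)

variable {i j a b}

lemma mem_crossIndex {p : ℕ × ℕ} :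
    p ∈ crossIndex a b ↔ (1 ≤ p.1 ∧ p.1 < a ∧ p.2 = 0) ∨ (p.1 = 0 ∧ 1 ≤ p.2 ∧ p.2 < b) := by
  simp only [crossIndex, mem_union, mem_product, mem_Ico, mem_singleton]
  omega

lemma card_crossIndex (ha : 0 < a) (hb : 0 < b) : #(crossIndex a b) = a + b - 2 := by
  have hdisj : Disjoint (Ico 1 a ×ˢ {0}) ({0} ×ˢ Ico 1 b) :=
    disjoint_left.mpr fun p hp hp' => by
      simp only [mem_product, mem_Ico, mem_singleton] at hp hp'
      omega
  rw [crossIndex, card_union_of_disjoint hdisj, card_product, card_product, card_singleton,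
    Nat.card_Ico, Nat.card_Ico]
  omega

lemma card_crossParts (k : Fin n) :
    #(crossParts i j a b k) = if k = i then a else if k = j then b else 2 := by
  rw [crossParts, card_image_of_injective _ fun x y h => (Nat.pair_eq_pair.mp h).2, card_range]

lemma crossParts_disjoint (k l : Fin n) (hkl : k ≠ l) :
    Disjoint (crossParts i j a b k) (crossParts i j a b l) := by
  refine disjoint_left.mpr fun w hk hl => hkl ?_
  obtain ⟨x, -, rfl⟩ := mem_image.mp hk
  obtain ⟨y, -, hy⟩ := mem_image.mp hl
  exact Fin.ext (Nat.pair_eq_pair.mp hy).1.symm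

lemma crossEdge_mem (ha : 0 < a) (hb : 0 < b) {p : ℕ × ℕ} (hp : p ∈ crossIndex a b)
    (k : Fin n) : crossEdge i j p k ∈ crossParts i j a b k := by
  rw [mem_crossIndex] at hp
  refine mem_image.mpr ⟨_, mem_range.mpr ?_, rfl⟩
  split_ifs <;> omega

lemma crossEdge_apply_left (p : ℕ × ℕ) : crossEdge i j p i = Nat.pair i p.1 := by
  simp [crossEdge]

lemma crossEdge_apply_right (hij : i ≠ j) (p : ℕ × ℕ) : crossEdge i j p j = Nat.pair j p.2 := by
  simp [crossEdge, hij.symm]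

lemma crossEdge_eq_iff (hij : i ≠ j) {p : ℕ × ℕ} {x y : ℕ} :
    crossEdge i j p i = Nat.pair i x ∧ crossEdge i j p j = Nat.pair j y ↔ p = (x, y) := by
  simp [crossEdge_apply_left, crossEdge_apply_right hij, Nat.pair_eq_pair, Prod.ext_iff]

lemma crossEdge_injective (hij : i ≠ j) : Function.Injective (crossEdge i j) := fun _ q h =>
  (crossEdge_eq_iff hij).mp ⟨(congrFun h i).trans (crossEdge_apply_left q),
    (congrFun h j).trans (crossEdge_apply_right hij q)⟩

lemma codegree_crossEdges (hij : i ≠ j) (x y : ℕ) :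
    codegree (crossEdges i j a b) i j (Nat.pair i x) (Nat.pair j y) =
      if (x, y) ∈ crossIndex a b then 1 else 0 := by
  rw [codegree, crossEdges, filter_image, filter_congr fun p _ => crossEdge_eq_iff hij,
    filter_eq']
  split_ifs <;> simp

lemma isOctahedralSystem_crossEdges (hij : i ≠ j) (ha : 0 < a) (hb : 0 < b) :
    IsOctahedralSystem (crossParts i j a b) (crossEdges i j a b) := by
  refine (isOctahedralSystem_iff_even_codegree hij fun k hki hkj => by
    rw [card_crossParts, if_neg hki, if_neg hkj]).mpr
    ⟨fun e he k => ?_, fun u hu u' hu' v hv v' hv' _ _ => ?_⟩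
  · obtain ⟨p, hp, rfl⟩ := mem_image.mp he
    exact crossEdge_mem ha hb hp k
  · obtain ⟨x, hx, rfl⟩ := mem_image.mp hu
    obtain ⟨x', hx', rfl⟩ := mem_image.mp hu'
    obtain ⟨y, hy, rfl⟩ := mem_image.mp hv
    obtain ⟨y', hy', rfl⟩ := mem_image.mp hv'
    simp only [mem_range, if_pos, if_neg hij.symm] at hx hx' hy hy'
    simp only [codegree_crossEdges hij, mem_crossIndex, Nat.even_iff]
    split_ifs <;> omega

lemma noIsolatedVertex_crossEdges (hij : i ≠ j) (ha : 2 ≤ a) (hb : 2 ≤ b) :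
    NoIsolatedVertex (crossParts i j a b) (crossEdges i j a b) := by
  intro k w hw
  obtain ⟨z, hz, rfl⟩ := mem_image.mp hw
  rw [mem_range] at hz
  suffices ∃ p ∈ crossIndex a b, crossEdge i j p k = Nat.pair k z by
    obtain ⟨p, hp, hpk⟩ := this
    exact ⟨crossEdge i j p, mem_image_of_mem _ hp, hpk⟩
  simp only [crossEdge, Nat.pair_eq_pair, true_and, mem_crossIndex]
  by_cases hki : k = i
  · subst hki
    simp only [if_pos] at hz ⊢
    rcases Nat.eq_zero_or_pos z with rfl | hz0
    · exact ⟨(0, 1), by omega, rfl⟩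
    · exact ⟨(z, 0), by omega, rfl⟩
  by_cases hkj : k = j
  · subst hkj
    simp only [if_neg hki, if_pos] at hz ⊢
    rcases Nat.eq_zero_or_pos z with rfl | hz0
    · exact ⟨(1, 0), by omega, rfl⟩
    · exact ⟨(0, z), by omega, rfl⟩
  simp only [if_neg hki, if_neg hkj] at hz ⊢
  rcases Nat.eq_zero_or_pos z with rfl | hz0
  · exact ⟨(0, 1), by omega, rfl⟩
  · exact ⟨(1, 0), by omega, by omega⟩

theorem exists_octahedralSystem_card_eq (hij : i ≠ j) (ha : 2 ≤ a) (hb : 2 ≤ b) :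
    ∃ (V : Fin n → Finset ℕ) (E : Finset (Fin n → ℕ)),
      (∀ k l : Fin n, k ≠ l → Disjoint (V k) (V l)) ∧
      (∀ k, k ≠ i → k ≠ j → #(V k) = 2) ∧ #(V i) = a ∧ #(V j) = b ∧
      IsOctahedralSystem V E ∧ NoIsolatedVertex V E ∧ #E = a + b - 2 := by
  refine ⟨crossParts i j a b, crossEdges i j a b, crossParts_disjoint,
    fun k hki hkj => by rw [card_crossParts, if_neg hki, if_neg hkj],
    by rw [card_crossParts, if_pos rfl], by rw [card_crossParts, if_neg hij.symm, if_pos rfl],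
    isOctahedralSystem_crossEdges hij (by omega) (by omega),
    noIsolatedVertex_crossEdges hij ha hb, ?_⟩
  rw [crossEdges, card_image_of_injective _ (crossEdge_injective hij),
    card_crossIndex (by omega) (by omega)]

end Cross

/-- `ν(2,…,2,m_{n−1},m_n) = m_{n−1} + m_n − 2`: every octahedral system
without isolated vertex with `|V_1| = … = |V_{n−2}| = 2`, `|V_{n−1}| = a`, `|V_n| = b`
has at least `a + b − 2` edges, and some such system has exactly `a + b − 2` edges. -/
theorem octahedral_two_two_ab (n a b : ℕ) (hn : 2 ≤ n) (ha : 2 ≤ a) (hb : 2 ≤ b) :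
    (∀ (α : Type) [DecidableEq α] (V : Fin n → Finset α) (E : Finset (Fin n → α)),
      (∀ i j : Fin n, i ≠ j → Disjoint (V i) (V j)) →
      (∀ i : Fin n, (i : ℕ) < n - 2 → (V i).card = 2) →
      (V ⟨n - 2, by omega⟩).card = a →
      (V ⟨n - 1, by omega⟩).card = b →
      IsOctahedralSystem V E → NoIsolatedVertex V E →
      a + b - 2 ≤ E.card) ∧
    (∃ (V : Fin n → Finset ℕ) (E : Finset (Fin n → ℕ)),
      (∀ i j : Fin n, i ≠ j → Disjoint (V i) (V j)) ∧
      (∀ i : Fin n, (i : ℕ) < n - 2 → (V i).card = 2) ∧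
      (V ⟨n - 2, by omega⟩).card = a ∧
      (V ⟨n - 1, by omega⟩).card = b ∧
      IsOctahedralSystem V E ∧ NoIsolatedVertex V E ∧
      E.card = a + b - 2) := by
  have hij : (⟨n - 2, by omega⟩ : Fin n) ≠ ⟨n - 1, by omega⟩ := by simp; omega
  have hsmall (k : Fin n) :
      (k : ℕ) < n - 2 ↔ k ≠ ⟨n - 2, by omega⟩ ∧ k ≠ ⟨n - 1, by omega⟩ := by
    simp only [ne_eq, Fin.ext_iff]
    omega
  refine ⟨fun α _ V E _ hV hVi hVj hoct hiso => ?_, ?_⟩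
  · have := hoct.card_add_card_le hij (fun k hki hkj => hV k ((hsmall k).mpr ⟨hki, hkj⟩)) hiso
    omega
  · obtain ⟨V, E, hdisj, hV, hVi, hVj, hoct, hiso, hE⟩ := exists_octahedralSystem_card_eq hij ha hb
    exact ⟨V, E, hdisj, fun k hk => hV k ((hsmall k).mp hk).1 ((hsmall k).mp hk).2,
      hVi, hVj, hoct, hiso, hE⟩
end

section
/- For all integers n ≥ 1 and m ≥ 2, there exists an octahedral system without isolated vertex on vertex sets V_1,…,V_n with |V_i| = m for all i having at most min(m², n(m − 2) + 2) edges. -/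
open Finset

section Cone

variable {α : Type*} [DecidableEq α] {k : ℕ}

def cone (A : Finset α) (D : Finset (Fin k → α)) : Finset (Fin (k + 1) → α) :=
  (A ×ˢ D).image fun x => Fin.cons x.1 x.2

lemma cons_mem_cone {A : Finset α} {D : Finset (Fin k → α)} {a : α} {d : Fin k → α}
    (ha : a ∈ A) (hd : d ∈ D) : Fin.cons a d ∈ cone A D :=
  mem_image.mpr ⟨(a, d), mem_product.mpr ⟨ha, hd⟩, rfl⟩

lemma card_cone_le (A : Finset α) (D : Finset (Fin k → α)) : #(cone A D) ≤ #A * #D :=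
  card_image_le.trans (card_product A D).le

theorem isOctahedralSystem_cone {V : Fin (k + 1) → Finset α} {D : Finset (Fin k → α)}
    (hD : ∀ d ∈ D, ∀ j, d j ∈ V j.succ) : IsOctahedralSystem V (cone (V 0) D) := by
  refine ⟨?_, fun X hXV hX => ?_⟩
  · simp only [cone, mem_image, mem_product]
    rintro _ ⟨⟨a, d⟩, ⟨ha, hd⟩, rfl⟩ i
    cases i using Fin.cases with
    | zero => simpa using ha
    | succ j => simpa using hD d hd j
  · rw [cone, filter_image,
      card_image_of_injective _ fun x y h => Prod.ext_iff.mpr (Fin.cons_injective2 h)]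
    simp only [Fin.forall_fin_succ, Fin.cons_zero, Fin.cons_succ]
    rw [filter_product (· ∈ X 0) fun d : Fin k → α => ∀ j, d j ∈ X j.succ, card_product,
      filter_mem_eq_inter, inter_eq_right.mpr (hXV 0), hX 0]
    exact even_two_mul _

theorem noIsolatedVertex_cone {V : Fin (k + 1) → Finset α} {D : Finset (Fin k → α)}
    (hD : NoIsolatedVertex (fun j => V j.succ) D) (hD₀ : D.Nonempty) (hV₀ : (V 0).Nonempty) :
    NoIsolatedVertex V (cone (V 0) D) := by
  intro i v hv
  cases i using Fin.cases with
  | zero =>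
    obtain ⟨d, hd⟩ := hD₀
    exact ⟨Fin.cons v d, cons_mem_cone hv hd, rfl⟩
  | succ j =>
    obtain ⟨d, hd, rfl⟩ := hD j v hv
    obtain ⟨a, ha⟩ := hV₀
    exact ⟨Fin.cons a d, cons_mem_cone ha hd, rfl⟩

end Cone

section Path

variable {α : Type*} {n : ℕ}

theorem even_card_filter_update_mem [DecidableEq α] {X : Fin n → Finset α} {A : Finset α}
    (b : Fin n → α) (i : Fin n) (hXA : X i ⊆ A) (hX : #(X i) = 2) :
    Even #(A.filter fun x => ∀ j, Function.update b i x j ∈ X j) := by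
  by_cases hb : ∀ j ≠ i, b j ∈ X j
  · have hfilter : A.filter (fun x => ∀ j, Function.update b i x j ∈ X j) = X i := by
      ext x
      simp only [mem_filter, Function.forall_update_iff _ (fun j y => y ∈ X j)]
      exact ⟨fun h => h.2.1, fun h => ⟨hXA h, h, hb⟩⟩
    rw [hfilter, hX]
    exact even_two
  · rw [filter_false_of_mem fun x _ h => hb fun j hj => by simpa [hj] using h j]
    exact .zero

variable (p q : Fin n → α)

def pathEdge (i : Fin n) : α → Fin n → α :=
  Function.update (fun j => if j < i then p j else q j) i

/-- The symmetric difference of the lines `(V i).image (pathEdge p q i)`: consecutive lines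
share the edge `pathEdge p q i (p i) = pathEdge p q (i + 1) (q (i + 1))`, and the first and last
lines contain `q` and `p` respectively. -/
def pathSystem [DecidableEq α] (V : Fin n → Finset α) : Finset (Fin n → α) :=
  {p, q} ∪ univ.biUnion fun i => (V i \ {p i, q i}).image (pathEdge p q i)

variable {p q}

@[simp]
lemma pathEdge_apply_self (i : Fin n) (x : α) : pathEdge p q i x i = x :=
  Function.update_self ..

lemma pathEdge_injective {i : Fin n} : Function.Injective (pathEdge p q i) :=
  Function.update_injective _ i

lemma pathEdge_apply_of_lt {i j : Fin n} (h : j < i) (x : α) : pathEdge p q i x j = p j := by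
  simp [pathEdge, h.ne, h]

lemma pathEdge_apply_of_gt {i j : Fin n} (h : i < j) (x : α) : pathEdge p q i x j = q j := by
  simp [pathEdge, h.ne', h.not_gt]

lemma pathEdge_ne_of_lt {i j : Fin n} (hij : i < j) (x : α) {y : α} (hy : y ≠ q j) :
    pathEdge p q i x ≠ pathEdge p q j y := fun h =>
  hy (by simpa [pathEdge_apply_of_gt hij] using (congrFun h j).symm)

lemma pathEdge_apply_mem {V : Fin n → Finset α} (hp : ∀ i, p i ∈ V i) (hq : ∀ i, q i ∈ V i)
    {i : Fin n} {x : α} (hx : x ∈ V i) (j : Fin n) : pathEdge p q i x j ∈ V j := by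
  rcases lt_trichotomy j i with h | rfl | h
  · simpa [pathEdge_apply_of_lt h] using hp j
  · simpa using hx
  · simpa [pathEdge_apply_of_gt h] using hq j

lemma pathEdge_last {k : ℕ} {p q : Fin (k + 1) → α} :
    pathEdge p q (Fin.last k) (p (Fin.last k)) = p := by
  ext j
  rcases (Fin.le_last j).lt_or_eq with h | rfl
  · exact pathEdge_apply_of_lt h _
  · exact pathEdge_apply_self _ _

lemma pathEdge_zero {k : ℕ} {p q : Fin (k + 1) → α} : pathEdge p q 0 (q 0) = q := by
  ext j
  rcases (Fin.zero_le j).lt_or_eq with h | rfl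
  · exact pathEdge_apply_of_gt h _
  · exact pathEdge_apply_self _ _

lemma pathEdge_castSucc {k : ℕ} {p q : Fin (k + 1) → α} (i : Fin k) :
    pathEdge p q i.castSucc (p i.castSucc) = pathEdge p q i.succ (q i.succ) := by
  ext j
  rcases lt_trichotomy j i.castSucc with h | rfl | h
  · rw [pathEdge_apply_of_lt h, pathEdge_apply_of_lt (h.trans i.castSucc_lt_succ)]
  · rw [pathEdge_apply_self, pathEdge_apply_of_lt i.castSucc_lt_succ]
  · rcases (Fin.castSucc_lt_iff_succ_le.mp h).lt_or_eq with h' | rfl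
    · rw [pathEdge_apply_of_gt h, pathEdge_apply_of_gt h']
    · rw [pathEdge_apply_of_gt h, pathEdge_apply_self]

end Path

section PathSystem

variable {α : Type*} [DecidableEq α] {n : ℕ} {V : Fin n → Finset α} {p q : Fin n → α}

lemma mem_pathSystem_line {i : Fin n} {x : α} (hx : x ∈ V i \ {p i, q i}) :
    pathEdge p q i x ∈ pathSystem p q V :=
  mem_union_right _ (mem_biUnion.mpr ⟨i, mem_univ i, mem_image_of_mem _ hx⟩)

lemma apply_mem_of_mem_pathSystem (hp : ∀ i, p i ∈ V i) (hq : ∀ i, q i ∈ V i) :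
    ∀ e ∈ pathSystem p q V, ∀ j, e j ∈ V j := by
  simp only [pathSystem, mem_union, mem_insert, mem_singleton, mem_biUnion, mem_univ, true_and,
    mem_image]
  rintro e ((rfl | rfl) | ⟨i, x, hx, rfl⟩)
  · exact hp
  · exact hq
  · exact pathEdge_apply_mem hp hq (mem_sdiff.mp hx).1

theorem noIsolatedVertex_pathSystem : NoIsolatedVertex V (pathSystem p q V) := by
  intro i v hv
  by_cases hvp : v = p i
  · exact ⟨p, mem_union_left _ (mem_insert_self _ _), hvp.symm⟩
  by_cases hvq : v = q i
  · exact ⟨q, mem_union_left _ (mem_insert_of_mem (mem_singleton_self _)), hvq.symm⟩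
  exact ⟨_, mem_pathSystem_line (by simp [hv, hvp, hvq]), pathEdge_apply_self i v⟩

theorem card_pathSystem_le {m : ℕ} (hV : ∀ i, #(V i) = m) (hp : ∀ i, p i ∈ V i)
    (hq : ∀ i, q i ∈ V i) (hpq : ∀ i, p i ≠ q i) : #(pathSystem p q V) ≤ n * (m - 2) + 2 := by
  have hline : ∀ i, #((V i \ {p i, q i}).image (pathEdge p q i)) ≤ m - 2 := fun i => by
    rw [card_image_of_injective _ pathEdge_injective,
      card_sdiff_of_subset (insert_subset (hp i) (singleton_subset_iff.mpr (hq i))),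
      card_pair (hpq i), hV]
  calc #(pathSystem p q V)
      ≤ #({p, q} : Finset (Fin n → α)) + ∑ i, #((V i \ {p i, q i}).image (pathEdge p q i)) :=
        (card_union_le _ _).trans (Nat.add_le_add_left card_biUnion_le _)
    _ ≤ 2 + ∑ _i : Fin n, (m - 2) := Nat.add_le_add card_le_two (sum_le_sum fun i _ => hline i)
    _ = n * (m - 2) + 2 := by simp [add_comm]

end PathSystem

section PathParity

variable {α : Type*} [DecidableEq α] {k : ℕ} {V : Fin (k + 1) → Finset α} {p q : Fin (k + 1) → α}

lemma disjoint_ends_lines (hpq : ∀ i, p i ≠ q i) :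
    Disjoint {p, q} (univ.biUnion fun i => (V i \ {p i, q i}).image (pathEdge p q i)) := by
  rw [disjoint_biUnion_right]
  intro i _
  simp only [disjoint_left, mem_insert, mem_singleton, mem_image]
  rintro e (rfl | rfl) ⟨x, hx, he⟩ <;>
    simp [← congrFun he i] at hx

lemma pairwiseDisjoint_lines :
    ((univ : Finset (Fin (k + 1))) : Set (Fin (k + 1))).PairwiseDisjoint
      fun i => (V i \ {p i, q i}).image (pathEdge p q i) := by
  intro i _ j _ hij
  simp only [Function.onFun, disjoint_left, mem_image, mem_sdiff, mem_insert, mem_singleton,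
    not_or]
  rintro e ⟨x, ⟨-, -, hx⟩, rfl⟩ ⟨y, ⟨-, -, hy⟩, he⟩
  rcases lt_or_gt_of_ne hij with h | h
  · exact pathEdge_ne_of_lt h x hy he.symm
  · exact pathEdge_ne_of_lt h y hx he

-- Modulo 2, each line minus its two edges at `p i`, `q i` counts like those two edges; as
-- consecutive lines share such an edge, the total telescopes to twice the count of `p` and `q`.
theorem isOctahedralSystem_pathSystem (hp : ∀ i, p i ∈ V i) (hq : ∀ i, q i ∈ V i)
    (hpq : ∀ i, p i ≠ q i) : IsOctahedralSystem V (pathSystem p q V) := by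
  refine ⟨apply_mem_of_mem_pathSystem hp hq, fun X hXV hX => ?_⟩
  let g (i : Fin (k + 1)) (x : α) : ZMod 2 := if ∀ j, pathEdge p q i x j ∈ X j then 1 else 0
  have hline (i : Fin (k + 1)) : ∑ x ∈ V i \ {p i, q i}, g i x = g i (p i) + g i (q i) := by
    have heven : ∑ x ∈ V i, g i x = 0 := by
      rw [← natCast_card_filter, ZMod.natCast_eq_zero_iff_even]
      exact even_card_filter_update_mem _ i (hXV i) (hX i)
    rw [← sum_sdiff (insert_subset (hp i) (singleton_subset_iff.mpr (hq i))),
      sum_pair (hpq i)] at heven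
    rw [eq_neg_of_add_eq_zero_left heven, CharTwo.neg_eq]
  have hpq' : p ≠ q := fun h => hpq 0 (congrFun h 0)
  rw [← ZMod.natCast_eq_zero_iff_even, natCast_card_filter, pathSystem,
    sum_union (disjoint_ends_lines hpq), sum_pair hpq', sum_biUnion pairwiseDisjoint_lines]
  simp only [sum_image fun _ _ _ _ h => pathEdge_injective h]
  change _ + _ + ∑ i, ∑ x ∈ V i \ {p i, q i}, g i x = 0
  rw [sum_congr rfl fun i _ => hline i, sum_add_distrib,
    Fin.sum_univ_castSucc (fun i => g i (p i)), Fin.sum_univ_succ (fun i => g i (q i))]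
  simp only [g, pathEdge_castSucc, pathEdge_last, pathEdge_zero]
  ring_nf
  reduce_mod_char

end PathParity

section Blocks

def block (m i : ℕ) : Finset ℕ := Ico (i * m) ((i + 1) * m)

lemma card_block (m i : ℕ) : #(block m i) = m := by
  simp [block, add_one_mul]

lemma disjoint_block {m i j : ℕ} (hij : i ≠ j) : Disjoint (block m i) (block m j) := by
  simp only [block, disjoint_left, mem_Ico]
  exact fun x hi hj =>
    hij ((Nat.div_eq_of_lt_le hi.1 hi.2).symm.trans (Nat.div_eq_of_lt_le hj.1 hj.2))

lemma add_mem_block {m i t : ℕ} (ht : t < m) : i * m + t ∈ block m i := by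
  simp only [block, mem_Ico, add_one_mul]
  omega

def blockDiagonal (m k : ℕ) : Finset (Fin k → ℕ) :=
  (range m).image fun t j => (j + 1) * m + t

lemma apply_mem_of_mem_blockDiagonal {m k : ℕ} :
    ∀ d ∈ blockDiagonal m k, ∀ j : Fin k, d j ∈ block m (j + 1) := by
  simp only [blockDiagonal, mem_image, mem_range]
  rintro _ ⟨t, ht, rfl⟩ j
  exact add_mem_block ht

lemma noIsolatedVertex_blockDiagonal (m k : ℕ) :
    NoIsolatedVertex (fun j : Fin k => block m (j + 1)) (blockDiagonal m k) := by
  intro j v hv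
  have hsucc := add_one_mul ((j : ℕ) + 1) m
  simp only [block, mem_Ico] at hv
  refine ⟨_, mem_image_of_mem _ (mem_range.mpr (show v - (j + 1) * m < m by omega)), ?_⟩
  show (j + 1) * m + (v - (j + 1) * m) = v
  omega

lemma card_blockDiagonal_le (m k : ℕ) : #(blockDiagonal m k) ≤ m :=
  card_image_le.trans (card_range m).le

end Blocks

/-- For all `n ≥ 1` and `m ≥ 2` there exists an octahedral system without
isolated vertex with `|V_i| = m` for all `i` having at most
`min(m², n(m − 2) + 2)` edges. -/
theorem octahedral_exists_upper_bound {n m : ℕ} (hn : 1 ≤ n) (hm : 2 ≤ m) :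
    ∃ (V : Fin n → Finset ℕ) (E : Finset (Fin n → ℕ)),
      (∀ i j : Fin n, i ≠ j → Disjoint (V i) (V j)) ∧
      (∀ i, (V i).card = m) ∧
      IsOctahedralSystem V E ∧
      NoIsolatedVertex V E ∧
      E.card ≤ min (m ^ 2) (n * (m - 2) + 2) := by
  obtain ⟨k, rfl⟩ : ∃ k, n = k + 1 := ⟨n - 1, by omega⟩
  have hdisj (i j : Fin (k + 1)) (hij : i ≠ j) : Disjoint (block m i) (block m j) :=
    disjoint_block (Fin.val_ne_of_ne hij)
  rcases le_total (m ^ 2) ((k + 1) * (m - 2) + 2) with h | h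
  · have hcard : #(cone (block m 0) (blockDiagonal m k)) ≤ m ^ 2 := by
      calc #(cone (block m 0) (blockDiagonal m k))
          ≤ #(block m 0) * #(blockDiagonal m k) := card_cone_le _ _
        _ ≤ m ^ 2 := by
          rw [card_block, sq]
          exact Nat.mul_le_mul_left m (card_blockDiagonal_le m k)
    refine ⟨fun i => block m i, cone (block m 0) (blockDiagonal m k), hdisj,
      fun i => card_block m i, isOctahedralSystem_cone ?_, noIsolatedVertex_cone ?_ ?_ ?_,
      le_min hcard (hcard.trans h)⟩
    · simpa using apply_mem_of_mem_blockDiagonal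
    · simpa using noIsolatedVertex_blockDiagonal m k
    · exact (nonempty_range_iff.mpr (by omega)).image _
    · exact ⟨0 * m + 0, add_mem_block (by omega)⟩
  · have hp (i : Fin (k + 1)) : (i : ℕ) * m ∈ block m i := add_mem_block (t := 0) (by omega)
    have hq (i : Fin (k + 1)) : (i : ℕ) * m + 1 ∈ block m i := add_mem_block (by omega)
    have hcard := card_pathSystem_le (fun i => card_block m i) hp hq (fun i => by omega)
    exact ⟨fun i => block m i, pathSystem _ _ _, hdisj, fun i => card_block m i,
      isOctahedralSystem_pathSystem hp hq (fun i => by omega), noIsolatedVertex_pathSystem,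
      le_min (hcard.trans h) hcard⟩
end

section
/- Given n disjoint finite vertex sets V_1,…,V_n with |V_i| ≥ 2 for all i, the number of octahedral systems on V_1,…,V_n, i.e. the number of edge sets E of colourful selections (one vertex from each V_i) satisfying the parity condition, is exactly 2^{Π_{i=1}^n |V_i| − Π_{i=1}^n (|V_i| − 1)}. -/
/-! Fix a transversal `v` and let `D = meets V v` be the set of transversals sharing a vertex
with `v`. For a transversal `e` disjoint from `v`, the parity condition on the box `∏ {v i, e i}`
says that `e` is an edge iff an odd number of the other `2^n - 1` corners of the box are edges, and
all of those corners lie in `D`. So an octahedral system is determined by its edges in `D`.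
Conversely, the edge set `extend V v F` obtained from any `F ⊆ D` by this rule is octahedral: its
count on a box `∏ X i` is a sum, over the nonempty `S`, of counts of `F` on boxes that are
degenerate in the coordinates of `S`, and each of those is even. Hence there are `2^|D|` systems,
and `|D| = ∏ |V i| - ∏ (|V i| - 1)`. -/

open Finset Fintype

namespace Octahedral

variable {ι α R : Type*} [DecidableEq ι]

theorem sum_powerset_eq_zero_of_insert [Ring R] [CharP R 2] {s : Finset ι} {j : ι} (hj : j ∈ s)
    (g : Finset ι → R) (hg : ∀ t, j ∉ t → g (insert j t) = g t) :
    ∑ t ∈ s.powerset, g t = 0 := by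
  rw [← insert_erase hj, sum_powerset_insert (notMem_erase j s), CharTwo.add_eq_zero]
  exact sum_congr rfl fun t ht =>
    (hg t fun hjt => notMem_erase j s (mem_powerset.1 ht hjt)).symm

theorem sum_piFinset_pair [Fintype ι] [DecidableEq α] [AddCommMonoid R] {a b : ι → α}
    (hab : ∀ i, a i ≠ b i) (g : (ι → α) → R) :
    ∑ c ∈ piFinset fun i => ({a i, b i} : Finset α), g c =
      ∑ S ∈ univ.powerset, g (S.piecewise a b) := by
  refine (sum_nbij' (fun S : Finset ι => S.piecewise a b)
    (fun c => ({i | c i = a i} : Finset ι)) ?_ ?_ ?_ ?_ ?_).symm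
  · intro S _
    rw [mem_piFinset]
    intro i
    by_cases hi : i ∈ S <;> simp [hi]
  · simp
  · intro S _
    ext i
    by_cases hi : i ∈ S <;> simp [hi, (hab i).symm]
  · intro c hc
    ext i
    have := mem_piFinset.1 hc i
    by_cases hi : c i = a i <;> simp_all
  · simp

theorem sum_piFinset_eq_zero_of_update [Fintype ι] [DecidableEq α] [Ring R] [CharP R 2]
    {X : ι → Finset α} (hX : ∀ i, #(X i) = 2) (j : ι) (g : (ι → α) → R)
    (hg : ∀ c x, g (Function.update c j x) = g c) :
    ∑ c ∈ piFinset X, g c = 0 := by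
  choose a b hab hX using fun i => card_eq_two.1 (hX i)
  rw [show X = fun i => {a i, b i} from funext hX, sum_piFinset_pair hab]
  exact sum_powerset_eq_zero_of_insert (mem_univ j) _ fun t _ => by rw [piecewise_insert, hg]

theorem sum_piecewise_eq_zero_of_apply_eq [Fintype ι] [Ring R] [CharP R 2] (g : (ι → α) → R)
    {a b : ι → α} {i : ι} (hi : a i = b i) :
    ∑ S ∈ univ.powerset, g (S.piecewise a b) = 0 :=
  sum_powerset_eq_zero_of_insert (mem_univ i) _ fun S hS => by
    rw [piecewise_insert, hi, ← S.piecewise_eq_of_notMem a b hS, Function.update_eq_self]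

theorem apply_eq_sum_piecewise_of_sum_eq_zero [Fintype ι] [Ring R] [CharP R 2]
    (g : (ι → α) → R) {a b : ι → α} (h : ∑ S ∈ univ.powerset, g (S.piecewise a b) = 0) :
    g b = ∑ S ∈ univ.powerset.erase ∅, g (S.piecewise a b) := by
  rwa [← add_sum_erase _ _ (empty_mem_powerset _), piecewise_empty, CharTwo.add_eq_zero] at h

theorem piecewise_update_of_mem {S : Finset ι} {j : ι} (hj : j ∈ S) (a c : ι → α) (x : α) :
    S.piecewise a (Function.update c j x) = S.piecewise a c :=
  S.piecewise_congr (fun _ _ => rfl) fun _ hi =>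
    Function.update_of_ne (ne_of_mem_of_not_mem hj hi).symm _ _

def indicator {β : Type*} [DecidableEq β] (E : Finset β) (e : β) : ZMod 2 :=
  if e ∈ E then 1 else 0

theorem indicator_eq_indicator_iff {β : Type*} [DecidableEq β] {E F : Finset β} {e : β} :
    indicator E e = indicator F e ↔ (e ∈ E ↔ e ∈ F) := by
  unfold indicator
  split_ifs <;> simp_all

theorem indicator_filter_eq_one_of_mem {β : Type*} [DecidableEq β] {s : Finset β}
    (φ : β → ZMod 2) {e : β} (he : e ∈ s) : indicator (s.filter fun e => φ e = 1) e = φ e := by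
  have h : ∀ x : ZMod 2, (if x = 1 then (1 : ZMod 2) else 0) = x := by decide
  simp only [indicator, mem_filter, he, true_and, h]

section Transversals

variable [Fintype ι] [DecidableEq α] {V : ι → Finset α} {v e : ι → α}

def meets (V : ι → Finset α) (v : ι → α) : Finset (ι → α) :=
  piFinset V \ piFinset fun i => (V i).erase (v i)

theorem mem_meets : e ∈ meets V v ↔ e ∈ piFinset V ∧ ∃ i, e i = v i := by
  simp only [meets, mem_sdiff, mem_piFinset, mem_erase, not_forall, not_and]
  exact and_congr_right fun he =>
    ⟨fun ⟨i, hi⟩ => ⟨i, not_not.1 fun h => hi h (he i)⟩, fun ⟨i, hi⟩ => ⟨i, fun h => (h hi).elim⟩⟩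

theorem card_meets (hv : v ∈ piFinset V) :
    #(meets V v) = ∏ i, #(V i) - ∏ i, (#(V i) - 1) := by
  rw [meets, card_sdiff_of_subset (piFinset_subset _ _ fun i => erase_subset _ _),
    card_piFinset, card_piFinset]
  simp_rw [card_erase_of_mem (mem_piFinset.1 hv _)]

theorem piecewise_mem_meets (hv : v ∈ piFinset V) (he : e ∈ piFinset V) {S : Finset ι}
    (hS : S.Nonempty) : S.piecewise v e ∈ meets V v := by
  refine mem_meets.2 ⟨mem_piFinset.2 fun i => ?_, hS.imp fun j hj => S.piecewise_eq_of_mem _ _ hj⟩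
  by_cases hi : i ∈ S <;> simp [hi, mem_piFinset.1 hv i, mem_piFinset.1 he i]

def extend (V : ι → Finset α) (v : ι → α) (F : Finset (ι → α)) : Finset (ι → α) :=
  (piFinset V).filter fun e => ∑ S ∈ univ.powerset.erase ∅, indicator F (S.piecewise v e) = 1

theorem indicator_extend (F : Finset (ι → α)) (he : e ∈ piFinset V) :
    indicator (extend V v F) e = ∑ S ∈ univ.powerset.erase ∅, indicator F (S.piecewise v e) :=
  indicator_filter_eq_one_of_mem _ he

theorem mem_extend_iff_of_mem_meets (F : Finset (ι → α)) (he : e ∈ meets V v) :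
    e ∈ extend V v F ↔ e ∈ F := by
  obtain ⟨heV, i, hi⟩ := mem_meets.1 he
  rw [← indicator_eq_indicator_iff, indicator_extend F heV]
  exact (apply_eq_sum_piecewise_of_sum_eq_zero _ (sum_piecewise_eq_zero_of_apply_eq _ hi.symm)).symm

theorem extend_inter_meets_of_subset {F : Finset (ι → α)} (hF : F ⊆ meets V v) :
    extend V v F ∩ meets V v = F := by
  ext e
  rw [mem_inter]
  exact ⟨fun ⟨h, he⟩ => (mem_extend_iff_of_mem_meets F he).1 h,
    fun h => ⟨(mem_extend_iff_of_mem_meets F (hF h)).2 h, hF h⟩⟩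

end Transversals

section OctahedralSystem

variable {n : ℕ} [DecidableEq α] {V : Fin n → Finset α} {E : Finset (Fin n → α)} {v : Fin n → α}

theorem natCast_card_filter_eq_sum_indicator (E : Finset (Fin n → α)) (X : Fin n → Finset α) :
    (#(E.filter fun e => ∀ i, e i ∈ X i) : ZMod 2) = ∑ c ∈ piFinset X, indicator E c := by
  simp only [indicator, sum_boole]
  congr 2
  ext e
  simp only [mem_filter, mem_piFinset, and_comm]

theorem _root_.IsOctahedralSystem.sum_piecewise_eq_zero (hE : IsOctahedralSystem V E)
    {a b : Fin n → α} (ha : a ∈ piFinset V) (hb : b ∈ piFinset V) (hab : ∀ i, a i ≠ b i) :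
    ∑ S ∈ univ.powerset, indicator E (S.piecewise a b) = 0 := by
  have hpar := hE.2 (fun i => {a i, b i})
    (fun i => insert_subset (mem_piFinset.1 ha i) (singleton_subset_iff.2 (mem_piFinset.1 hb i)))
    (fun i => card_pair (hab i))
  rwa [← ZMod.natCast_eq_zero_iff_even, natCast_card_filter_eq_sum_indicator,
    sum_piFinset_pair hab] at hpar

theorem isOctahedralSystem_extend (V : Fin n → Finset α) (v : Fin n → α)
    (F : Finset (Fin n → α)) : IsOctahedralSystem V (extend V v F) := by
  refine ⟨fun e he => mem_piFinset.1 (mem_filter.1 he).1, fun X hXV hX => ?_⟩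
  rw [← ZMod.natCast_eq_zero_iff_even, natCast_card_filter_eq_sum_indicator,
    sum_congr rfl fun c hc => indicator_extend F (piFinset_subset _ _ hXV hc), sum_comm]
  refine sum_eq_zero fun S hS => ?_
  obtain ⟨j, hj⟩ := nonempty_iff_ne_empty.2 (ne_of_mem_erase hS)
  exact sum_piFinset_eq_zero_of_update hX j _ fun c x => by rw [piecewise_update_of_mem hj]

theorem _root_.IsOctahedralSystem.extend_inter_meets (hE : IsOctahedralSystem V E)
    (hv : v ∈ piFinset V) : extend V v (E ∩ meets V v) = E := by
  ext e
  by_cases he : e ∈ meets V v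
  · rw [mem_extend_iff_of_mem_meets _ he, mem_inter, and_iff_left he]
  by_cases heV : e ∈ piFinset V
  swap
  · exact iff_of_false (fun h => heV (mem_filter.1 h).1) fun h => heV (mem_piFinset.2 (hE.1 e h))
  have hve : ∀ i, v i ≠ e i := by simpa [mem_meets, heV, eq_comm] using he
  rw [← indicator_eq_indicator_iff]
  calc indicator (extend V v (E ∩ meets V v)) e
      = ∑ S ∈ univ.powerset.erase ∅, indicator (E ∩ meets V v) (S.piecewise v e) :=
        indicator_extend _ heV
    _ = ∑ S ∈ univ.powerset.erase ∅, indicator E (S.piecewise v e) :=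
        sum_congr rfl fun S hS => indicator_eq_indicator_iff.2 <| by
          rw [mem_inter, and_iff_left (piecewise_mem_meets hv heV
            (nonempty_iff_ne_empty.2 (ne_of_mem_erase hS)))]
    _ = indicator E e :=
        (apply_eq_sum_piecewise_of_sum_eq_zero _ (hE.sum_piecewise_eq_zero hv heV hve)).symm

def octahedralSystemEquivPowersetMeets (hv : v ∈ piFinset V) :
    {E // IsOctahedralSystem V E} ≃ (meets V v).powerset where
  toFun E := ⟨E.1 ∩ meets V v, mem_powerset.2 inter_subset_right⟩
  invFun F := ⟨extend V v F, isOctahedralSystem_extend V v F⟩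
  left_inv E := Subtype.ext (E.2.extend_inter_meets hv)
  right_inv F := Subtype.ext (extend_inter_meets_of_subset (mem_powerset.1 F.2))

end OctahedralSystem

end Octahedral

theorem octahedral_count_general {α : Type*} [DecidableEq α] {n : ℕ}
    (V : Fin n → Finset α)
    (hcard : ∀ i, 2 ≤ (V i).card) :
    Nat.card {E : Finset (Fin n → α) // IsOctahedralSystem V E} =
      2 ^ (∏ i : Fin n, (V i).card - ∏ i : Fin n, ((V i).card - 1)) := by
  choose v hv using fun i => card_pos.1 (zero_lt_two.trans_le (hcard i))
  rw [Nat.card_congr (Octahedral.octahedralSystemEquivPowersetMeets (mem_piFinset.2 hv)),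
    Nat.card_eq_finsetCard, card_powerset, Octahedral.card_meets (mem_piFinset.2 hv)]

/-- The number of octahedral systems on vertex sets `V_1, …, V_n` is
`2^(Π|V_i| − Π(|V_i|−1))`. -/
theorem octahedral_count {α : Type*} [DecidableEq α] {n : ℕ}
    (V : Fin n → Finset α)
    (hdisj : ∀ i j : Fin n, i ≠ j → Disjoint (V i) (V j))
    (hcard : ∀ i, 2 ≤ (V i).card) :
    Nat.card {E : Finset (Fin n → α) // IsOctahedralSystem V E} =
      2 ^ (∏ i : Fin n, (V i).card - ∏ i : Fin n, ((V i).card - 1)) :=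
  octahedral_count_general V hcard
end

section
/- There exists an octahedral system Ω without isolated vertex on vertex sets V_1, V_2, V_3 with |V_1| = |V_2| = |V_3| = 3 that is not realisable: there is no colourful point configuration S_1, S_2, S_3 in ℝ² in general position together with bijections φ_i : V_i → S_i (i = 1,2,3) such that the edges of Ω are exactly the triples (v_1, v_2, v_3) ∈ V_1 × V_2 × V_3 with 0 ∈ conv{φ_1(v_1), φ_2(v_2), φ_3(v_3)}. -/
open Set

local notation "ℝ²" => EuclideanSpace ℝ (Fin 2)

namespace Planar

def cross (p q : ℝ²) : ℝ := p 0 * q 1 - p 1 * q 0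

lemma cross_anticomm (p q : ℝ²) : cross q p = -cross p q := by
  unfold cross; ring

lemma cross_smul_add_cross_smul_add_cross_smul (a b c : ℝ²) :
    cross b c • a + cross c a • b + cross a b • c = 0 := by
  ext i
  fin_cases i <;>
    simp only [cross, Fin.isValue, Fin.zero_eta, Fin.mk_one, PiLp.add_apply, PiLp.smul_apply,
      smul_eq_mul, PiLp.zero_apply] <;> ring

lemma exists_smul_eq_of_cross_eq_zero {p q : ℝ²} (hp : p ≠ 0) (h : cross p q = 0) :
    ∃ t : ℝ, q = t • p := by
  have hnorm : p 0 ^ 2 + p 1 ^ 2 ≠ 0 := by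
    intro h2
    exact hp (by ext i; fin_cases i <;> simp <;> nlinarith [sq_nonneg (p 0), sq_nonneg (p 1)])
  refine ⟨(p 0 * q 0 + p 1 * q 1) / (p 0 ^ 2 + p 1 ^ 2), ?_⟩
  unfold cross at h
  ext i
  fin_cases i <;>
    simp only [Fin.zero_eta, Fin.mk_one, Fin.isValue, PiLp.smul_apply, smul_eq_mul] <;> field_simp
  · linear_combination (-p 1) * h
  · linear_combination p 0 * h

lemma collinear_of_cross_eq_zero {p q : ℝ²} (h : cross p q = 0) :
    Collinear ℝ ({0, p, q} : Set ℝ²) := by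
  rcases eq_or_ne p 0 with rfl | hp
  · rw [insert_eq_of_mem (mem_insert _ _)]
    exact collinear_pair ℝ 0 q
  obtain ⟨t, rfl⟩ := exists_smul_eq_of_cross_eq_zero hp h
  rw [collinear_iff_of_mem (mem_insert 0 _)]
  refine ⟨p, ?_⟩
  rintro x (rfl | rfl | rfl)
  exacts [⟨0, by simp⟩, ⟨1, by simp⟩, ⟨t, by simp⟩]

lemma cross_ne_zero_of_affineIndependent {p q : ℝ²} (hp : p ≠ 0) (hq : q ≠ 0) (hpq : p ≠ q)
    (h : AffineIndependent ℝ ((↑) : ({0, p, q} : Set ℝ²) → ℝ²)) : cross p q ≠ 0 := by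
  intro hc
  refine collinear_iff_not_affineIndependent_set.mp (collinear_of_cross_eq_zero hc)
    (AffineIndependent.of_set_of_injective ?_ ?_)
  · rwa [Matrix.range_cons, Matrix.range_cons, Matrix.range_cons_empty, singleton_union,
      singleton_union]
  · intro i j hij
    fin_cases i <;> fin_cases j <;> simp_all [eq_comm]

lemma cross_eq_zero_of_zero_mem_segment {a c : ℝ²} (h : (0 : ℝ²) ∈ segment ℝ a c) :
    cross a c = 0 := by
  obtain ⟨s, t, -, -, hst, hzero⟩ := h
  have h0 := congrArg (· 0) hzero
  have h1 := congrArg (· 1) hzero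
  simp only [PiLp.add_apply, PiLp.smul_apply, smul_eq_mul, PiLp.zero_apply] at h0 h1
  unfold cross
  linear_combination (c 1 - a 1) * h0 + (a 0 - c 0) * h1 - (a 0 * c 1 - a 1 * c 0) * hst

lemma exists_combination_of_mem_convexHull_triple {E : Type*} [AddCommGroup E] [Module ℝ E]
    {x a b c : E}
    (h : x ∈ convexHull ℝ {a, b, c}) :
    ∃ α β γ : ℝ, 0 ≤ α ∧ 0 ≤ β ∧ 0 ≤ γ ∧ α + β + γ = 1 ∧ α • a + β • b + γ • c = x := by
  rw [convexHull_insert (insert_nonempty _ _), convexHull_pair, mem_convexJoin] at h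
  obtain ⟨_, rfl, y, ⟨u, v, hu, hv, huv, rfl⟩, s, t, hs, ht, hst, rfl⟩ := h
  refine ⟨s, t * u, t * v, hs, mul_nonneg ht hu, mul_nonneg ht hv, ?_, ?_⟩
  · linear_combination t * huv + hst
  · simp only [smul_add, smul_smul, add_assoc]

lemma sign_eq_sign_of_mul_eq_mul {R : Type*} [Ring R] [LinearOrder R] [IsStrictOrderedRing R]
    {α γ x y : R} (hα : 0 < α) (hγ : 0 < γ) (h : α * x = γ * y) :
    SignType.sign x = SignType.sign y := by
  have := congrArg SignType.sign h
  rwa [sign_mul, sign_mul, sign_pos hα, sign_pos hγ, one_mul, one_mul] at this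

lemma sign_cross_eq_of_zero_mem_convexHull {a b c : ℝ²} (hab : cross a b ≠ 0)
    (hbc : cross b c ≠ 0) (hca : cross c a ≠ 0) (h : (0 : ℝ²) ∈ convexHull ℝ {a, b, c}) :
    SignType.sign (cross a b) = SignType.sign (cross b c) ∧
      SignType.sign (cross b c) = SignType.sign (cross c a) := by
  obtain ⟨α, β, γ, hα, hβ, hγ, hsum, hzero⟩ := exists_combination_of_mem_convexHull_triple h
  have h0 := congrArg (· 0) hzero
  have h1 := congrArg (· 1) hzero
  simp only [PiLp.add_apply, PiLp.smul_apply, smul_eq_mul, PiLp.zero_apply] at h0 h1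
  have hαγ : α * cross a b = γ * cross b c := by
    unfold cross; linear_combination b 1 * h0 - b 0 * h1
  have hβα : β * cross b c = α * cross c a := by
    unfold cross; linear_combination c 1 * h0 - c 0 * h1
  have hα0 : 0 < α := by
    refine hα.lt_of_ne' fun hα0 => ?_
    have hγ0 : γ = 0 := by simpa [hα0, hbc] using hαγ
    have hβ0 : β = 0 := by simpa [hα0, hbc] using hβα
    simp [hα0, hβ0, hγ0] at hsum
  have hβ0 : 0 < β := hβ.lt_of_ne' fun hβ0 => by simp [hβ0, hα0.ne', hca] at hβα
  have hγ0 : 0 < γ := hγ.lt_of_ne' fun hγ0 => by simp [hγ0, hα0.ne', hab] at hαγ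
  exact ⟨sign_eq_sign_of_mul_eq_mul hα0 hγ0 hαγ, sign_eq_sign_of_mul_eq_mul hβ0 hα0 hβα⟩

lemma zero_mem_convexHull_of_cross_pos {a b c : ℝ²} (hab : 0 < cross a b)
    (hbc : 0 < cross b c) (hca : 0 < cross c a) : (0 : ℝ²) ∈ convexHull ℝ {a, b, c} := by
  have hcenter : Finset.univ.centerMass ![cross b c, cross c a, cross a b] ![a, b, c] = 0 := by
    simp [Finset.centerMass, Fin.sum_univ_three, cross_smul_add_cross_smul_add_cross_smul]
  rw [← hcenter]
  refine Finset.centerMass_mem_convexHull _ (fun i _ => ?_) ?_ (fun i _ => ?_)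
  · fin_cases i <;> simp [hab.le, hbc.le, hca.le]
  · simp only [Fin.sum_univ_three, Matrix.cons_val_zero, Matrix.cons_val_one, Matrix.cons_val]
    linarith
  · fin_cases i <;> simp

lemma zero_mem_convexHull_of_sign_cross_eq {a b c : ℝ²} (hab : cross a b ≠ 0)
    (h₁ : SignType.sign (cross a b) = SignType.sign (cross b c))
    (h₂ : SignType.sign (cross b c) = SignType.sign (cross c a)) :
    (0 : ℝ²) ∈ convexHull ℝ {a, b, c} := by
  rcases hab.lt_or_gt with hneg | hpos
  · have hbc : cross b c < 0 := by rwa [← sign_eq_neg_one_iff, ← h₁, sign_eq_neg_one_iff]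
    have hca : cross c a < 0 := by rwa [← sign_eq_neg_one_iff, ← h₂, sign_eq_neg_one_iff]
    rw [pair_comm]
    exact zero_mem_convexHull_of_cross_pos (by rw [cross_anticomm]; linarith)
      (by rw [cross_anticomm]; linarith) (by rw [cross_anticomm]; linarith)
  · have hbc : 0 < cross b c := by rwa [← sign_eq_one_iff, ← h₁, sign_eq_one_iff]
    have hca : 0 < cross c a := by rwa [← sign_eq_one_iff, ← h₂, sign_eq_one_iff]
    exact zero_mem_convexHull_of_cross_pos hpos hbc hca

lemma cross_ne_zero_of_zero_mem_convexHull {P : Set ℝ²} (hP : P.Pairwise (cross · · ≠ 0))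
    (h0 : (0 : ℝ²) ∉ P) {a b c : ℝ²} (ha : a ∈ P) (hb : b ∈ P) (hc : c ∈ P)
    (h : (0 : ℝ²) ∈ convexHull ℝ {a, b, c}) : cross a b ≠ 0 := by
  rcases eq_or_ne a b with rfl | hab
  · rw [insert_eq_of_mem (mem_insert _ _), convexHull_pair] at h
    rcases eq_or_ne a c with rfl | hac
    · rw [segment_same, mem_singleton_iff] at h
      exact absurd (h ▸ ha) h0
    · exact absurd (cross_eq_zero_of_zero_mem_segment h) (hP ha hc hac)
  · exact hP ha hb hab

lemma sign_cross_eq_of_pairwise {P : Set ℝ²} (hP : P.Pairwise (cross · · ≠ 0))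
    (h0 : (0 : ℝ²) ∉ P) {a b c : ℝ²} (ha : a ∈ P) (hb : b ∈ P) (hc : c ∈ P)
    (h : (0 : ℝ²) ∈ convexHull ℝ {a, b, c}) :
    SignType.sign (cross a b) = SignType.sign (cross b c) ∧
      SignType.sign (cross b c) = SignType.sign (cross c a) := by
  have hbca : (0 : ℝ²) ∈ convexHull ℝ {b, c, a} := by rwa [pair_comm c a, insert_comm b a]
  have hcab : (0 : ℝ²) ∈ convexHull ℝ {c, a, b} := by rwa [insert_comm c a, pair_comm c b]
  exact sign_cross_eq_of_zero_mem_convexHull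
    (cross_ne_zero_of_zero_mem_convexHull hP h0 ha hb hc h)
    (cross_ne_zero_of_zero_mem_convexHull hP h0 hb hc ha hbca)
    (cross_ne_zero_of_zero_mem_convexHull hP h0 hc ha hb hcab) h

lemma zero_mem_convexHull_of_five_triangles {P : Set ℝ²} (hP : P.Pairwise (cross · · ≠ 0))
    (h0 : (0 : ℝ²) ∉ P) {x x' y y' z z' : ℝ²} (hx : x ∈ P) (hx' : x' ∈ P) (hy : y ∈ P)
    (hy' : y' ∈ P) (hz : z ∈ P) (hz' : z' ∈ P)
    (hxyz : (0 : ℝ²) ∈ convexHull ℝ {x, y, z}) (hxyz' : (0 : ℝ²) ∈ convexHull ℝ {x, y, z'})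
    (hx'yz' : (0 : ℝ²) ∈ convexHull ℝ {x', y, z'}) (hxy'z : (0 : ℝ²) ∈ convexHull ℝ {x, y', z})
    (hx'y'z : (0 : ℝ²) ∈ convexHull ℝ {x', y', z}) :
    (0 : ℝ²) ∈ convexHull ℝ {x', y, z} := by
  have s₁ := sign_cross_eq_of_pairwise hP h0 hx hy hz hxyz
  have s₂ := sign_cross_eq_of_pairwise hP h0 hx hy hz' hxyz'
  have s₃ := sign_cross_eq_of_pairwise hP h0 hx' hy hz' hx'yz'
  have s₄ := sign_cross_eq_of_pairwise hP h0 hx hy' hz hxy'z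
  have s₅ := sign_cross_eq_of_pairwise hP h0 hx' hy' hz hx'y'z
  exact zero_mem_convexHull_of_sign_cross_eq
    (cross_ne_zero_of_zero_mem_convexHull hP h0 hx' hy hz' hx'yz')
    (s₃.1.trans <| s₂.1.symm.trans s₁.1) (s₁.2.trans <| s₄.2.symm.trans s₅.2)

end Planar

open Planar

def InGeneralPosition {ι : Type*} (S : ι → Finset ℝ²) : Prop :=
  ∀ T : Finset ℝ², (∀ x ∈ T, ∃ i, x ∈ S i) → T.card = 2 →
    AffineIndependent ℝ (fun p : ↥(insert (0 : ℝ²) (T : Set ℝ²)) => (p : ℝ²))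

lemma InGeneralPosition.pairwise_cross_ne_zero {ι : Type*} {S : ι → Finset ℝ²}
    (hS : InGeneralPosition S) : {x | (∃ i, x ∈ S i) ∧ x ≠ 0}.Pairwise (cross · · ≠ 0) := by
  classical
  rintro p ⟨hpS, hp⟩ q ⟨hqS, hq⟩ hpq
  refine cross_ne_zero_of_affineIndependent hp hq hpq ?_
  have hT : ∀ x ∈ ({p, q} : Finset ℝ²), ∃ i, x ∈ S i := by
    simp only [Finset.mem_insert, Finset.mem_singleton]
    rintro x (rfl | rfl) <;> assumption
  have hind := hS {p, q} hT (Finset.card_pair hpq)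
  rw [Finset.coe_pair] at hind
  exact hind

def IsRealisation {α : Type*} (V : Fin 3 → Finset α) (E : Finset (Fin 3 → α))
    (S : Fin 3 → Finset ℝ²) (φ : Fin 3 → α → ℝ²) : Prop :=
  (∀ i, BijOn (φ i) (V i) (S i)) ∧ InGeneralPosition S ∧
    ∀ e : Fin 3 → α, (∀ i, e i ∈ V i) →
      (e ∈ E ↔ (0 : ℝ²) ∈ convexHull ℝ (range fun i => φ i (e i)))

lemma range_fin_three {α : Type*} (f : Fin 3 → α) : range f = {f 0, f 1, f 2} := by
  rw [Fin.range_fin_succ, Fin.range_fin_succ, Fin.range_fin_succ, range_eq_empty, insert_empty_eq]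
  rfl

open Finset in
lemma isOctahedralSystem_iff_forall_mem_piFinset {α : Type*} [DecidableEq α] {n : ℕ}
    (V : Fin n → Finset α) (E : Finset (Fin n → α)) :
    IsOctahedralSystem V E ↔ (∀ e ∈ E, ∀ i, e i ∈ V i) ∧
      ∀ X ∈ Fintype.piFinset fun i => (V i).powersetCard 2,
        Even (#(E.filter fun e => ∀ i, e i ∈ X i)) := by
  simp only [IsOctahedralSystem, Fintype.mem_piFinset, mem_powersetCard, forall_and, and_imp]

def octV : Fin 3 → Finset ℕ := ![{0, 1, 2}, {3, 4, 5}, {6, 7, 8}]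

def octE : Finset (Fin 3 → ℕ) :=
  {![0, 3, 6], ![0, 3, 7], ![0, 3, 8], ![0, 4, 7], ![1, 3, 8], ![1, 4, 7], ![1, 4, 8], ![1, 5, 8],
    ![2, 4, 7]}

lemma isOctahedralSystem_oct : IsOctahedralSystem octV octE :=
  (isOctahedralSystem_iff_forall_mem_piFinset _ _).2 (by decide)

lemma noIsolatedVertex_oct : NoIsolatedVertex octV octE := by
  unfold NoIsolatedVertex; decide

lemma not_isRealisation_oct (S : Fin 3 → Finset ℝ²) (φ : Fin 3 → ℕ → ℝ²) :
    ¬ IsRealisation octV octE S φ := by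
  rintro ⟨hφ, hS, hE⟩
  have h0 : (0 : ℝ²) ∉ {x | (∃ i, x ∈ S i) ∧ x ≠ 0} := fun h => h.2 rfl
  -- a point at the origin would put every triple through it into the edge set
  have mem : ∀ e, (∀ i, e i ∈ octV i) → e ∉ octE → ∀ i,
      φ i (e i) ∈ {x | (∃ i, x ∈ S i) ∧ x ≠ 0} := fun e he hne i =>
    ⟨⟨i, (hφ i).mapsTo (he i)⟩, fun h => hne ((hE e he).2 (subset_convexHull ℝ _ ⟨i, h⟩))⟩
  have hull : ∀ e ∈ octE, (0 : ℝ²) ∈ convexHull ℝ {φ 0 (e 0), φ 1 (e 1), φ 2 (e 2)} :=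
    fun e he => range_fin_three (fun i => φ i (e i)) ▸ (hE e (by revert e; decide)).1 he
  have h137 := zero_mem_convexHull_of_five_triangles hS.pairwise_cross_ne_zero h0
    (mem ![0, 4, 6] (by decide) (by decide) 0) (mem ![1, 3, 6] (by decide) (by decide) 0)
    (mem ![1, 3, 6] (by decide) (by decide) 1) (mem ![0, 4, 6] (by decide) (by decide) 1)
    (mem ![1, 3, 7] (by decide) (by decide) 2) (mem ![0, 4, 8] (by decide) (by decide) 2)
    (hull ![0, 3, 7] (by decide)) (hull ![0, 3, 8] (by decide)) (hull ![1, 3, 8] (by decide))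
    (hull ![0, 4, 7] (by decide)) (hull ![1, 4, 7] (by decide))
  refine (by decide : ![1, 3, 7] ∉ octE) ((hE ![1, 3, 7] (by decide)).2 ?_)
  rwa [range_fin_three]

/-- There exists a `(3,3,3)`-octahedral system without isolated vertex
that is not realisable by any colourful point configuration in `ℝ²` in general position. -/
theorem exists_nonrealisable_octahedral_system :
    ∃ (V : Fin 3 → Finset ℕ) (E : Finset (Fin 3 → ℕ)),
      (∀ i j : Fin 3, i ≠ j → Disjoint (V i) (V j)) ∧
      (∀ i, (V i).card = 3) ∧
      IsOctahedralSystem V E ∧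
      NoIsolatedVertex V E ∧
      ¬ ∃ (S : Fin 3 → Finset (EuclideanSpace ℝ (Fin 2)))
          (φ : Fin 3 → ℕ → EuclideanSpace ℝ (Fin 2)),
          (∀ i, Set.BijOn (φ i) (V i) (S i)) ∧
          (∀ T : Finset (EuclideanSpace ℝ (Fin 2)),
            (∀ x ∈ T, ∃ i, x ∈ S i) → T.card = 2 →
            AffineIndependent ℝ
              (fun p : ↥(insert (0 : EuclideanSpace ℝ (Fin 2))
                  (T : Set (EuclideanSpace ℝ (Fin 2)))) => (p : EuclideanSpace ℝ (Fin 2)))) ∧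
          (∀ e : Fin 3 → ℕ, (∀ i, e i ∈ V i) →
            (e ∈ E ↔ (0 : EuclideanSpace ℝ (Fin 2)) ∈
              convexHull ℝ (Set.range fun i => φ i (e i)))) := by
  refine ⟨octV, octE, by decide, by decide, isOctahedralSystem_oct, noIsolatedVertex_oct, ?_⟩
  rintro ⟨S, φ, hφ⟩
  exact not_isRealisation_oct S φ hφ
end

section
/- Let Ω be an octahedral system without isolated vertex on vertex sets V_1,…,V_n, and let X be a set of vertices inducing a complete subgraph in D(Ω) and having no outneighbour in D(Ω). Then the hypergraph Ω ∖ X obtained by deleting the vertices of X and all edges of Ω intersecting X is again an octahedral system without isolated vertex on the vertex sets V_i ∖ X; that is, its edge set satisfies the parity condition on the sets V_i ∖ X and every vertex outside X lies in an edge of Ω disjoint from X. -/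
/-- The arc relation of the directed graph `D(Ω)`: `(u,v)` is an arc if `u ≠ v` and every
edge containing `v` also contains `u`. -/
def OctArc {α : Type*} {n : ℕ} (E : Finset (Fin n → α)) (u v : α) : Prop :=
  u ≠ v ∧ ∀ e ∈ E, (∃ i, e i = v) → (∃ j, e j = u)

/-- Deleting from an octahedral system without isolated vertex a set `X`
of vertices inducing a complete subgraph of `D(Ω)` without outneighbour yields an
octahedral system without isolated vertex on the vertex sets `V_i ∖ X`. -/
theorem octahedral_delete_complete_no_out {α : Type*} [DecidableEq α] {n : ℕ}
    (V : Fin n → Finset α) (E : Finset (Fin n → α))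
    (hdisj : ∀ i j : Fin n, i ≠ j → Disjoint (V i) (V j))
    (hcard : ∀ i, 2 ≤ (V i).card)
    (hoct : IsOctahedralSystem V E)
    (hiso : NoIsolatedVertex V E)
    (X : Finset α)
    (hXsub : ∀ x ∈ X, ∃ i : Fin n, x ∈ V i)
    (hXcomp : ∀ u ∈ X, ∀ v ∈ X, u ≠ v → OctArc E u v)
    (hXout : ∀ u ∈ X, ∀ v, OctArc E u v → v ∈ X) :
    IsOctahedralSystem (fun i => V i \ X) (E.filter fun e => ∀ i, e i ∉ X) ∧
    NoIsolatedVertex (fun i => V i \ X) (E.filter fun e => ∀ i, e i ∉ X) := by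
  obtain ⟨hE1, hE2⟩ := hoct
  constructor
  · constructor
    · intro e he i
      simp only [Finset.mem_filter] at he
      exact Finset.mem_sdiff.2 ⟨hE1 e he.1 i, he.2 i⟩
    · intro Y hYsub hYcard
      have key : (E.filter fun e => ∀ i, e i ∉ X).filter (fun e => ∀ i, e i ∈ Y i)
          = E.filter (fun e => ∀ i, e i ∈ Y i) := by
        ext e
        simp only [Finset.mem_filter]
        constructor
        · rintro ⟨⟨h1, _⟩, h3⟩; exact ⟨h1, h3⟩
        · rintro ⟨h1, h3⟩
          exact ⟨⟨h1, fun i => (Finset.mem_sdiff.1 (hYsub i (h3 i))).2⟩, h3⟩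
      rw [key]
      exact hE2 Y (fun i => (hYsub i).trans Finset.sdiff_subset) hYcard
  · intro i v hv
    rw [Finset.mem_sdiff] at hv
    obtain ⟨e, heE, hei⟩ := hiso i v hv.1
    by_contra hcon
    push_neg at hcon
    -- every edge f ∈ E containing v (at some coordinate) meets X
    have hmeet : ∀ f ∈ E, (∃ j, f j = v) → ∃ k, f k ∈ X := by
      intro f hf ⟨j, hj⟩
      have hji : j = i := by
        by_contra hne
        have := hdisj j i hne
        exact (Finset.disjoint_left.1 this) (hj ▸ hE1 f hf j) hv.1
      subst hji
      by_contra hk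
      push_neg at hk
      have : f ∈ E.filter fun g => ∀ i, g i ∉ X :=
        Finset.mem_filter.2 ⟨hf, hk⟩
      exact hcon f this hj
    obtain ⟨k, hkX⟩ := hmeet e heE ⟨i, hei⟩
    set u := e k with hu
    have harc : OctArc E u v := by
      refine ⟨fun h => hv.2 (h ▸ hkX), fun f hf hfv => ?_⟩
      obtain ⟨m, hmX⟩ := hmeet f hf hfv
      by_cases hwu : f m = u
      · exact ⟨m, hwu⟩
      · exact (hXcomp u hkX (f m) hmX (Ne.symm hwu)).2 f hf ⟨m, rfl⟩
    exact hv.2 (hXout u hkX v harc)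
end

section
/- Let n ≥ 4, 3 ≤ k ≤ n and 0 ≤ z < k, and let Ω be an octahedral system without isolated vertex on V_1,…,V_n with |V_i| = k−1 for i ≤ z, |V_i| = k for z < i ≤ k, and |V_i| = m_i for k < i ≤ n, where k ≤ m_{k+1} ≤ … ≤ m_n. Suppose there is a subset X ⊆ ⋃_{i=z+1}^n V_i with |X| ≥ 2 inducing in D(Ω) a complete subgraph without outneighbour. Then Ω has at least (k−1)² + 2 edges, unless Ω is a (2,2,3,3)-octahedral system (i.e. n = 4, k = 3, z = 2), in which case Ω has at least 5 edges. -/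
open Finset

section Boxes

variable {ι α : Type*} [DecidableEq α]

def IsBox (S : Finset ι) (W P : ι → Finset α) : Prop :=
  ∀ t ∈ S, P t ⊆ W t ∧ #(P t) = 2

def inBox (S : Finset ι) (P : ι → Finset α) (C : Finset (ι → α)) : Finset (ι → α) :=
  {e ∈ C | ∀ t ∈ S, e t ∈ P t}

def EvenOnBoxes (S : Finset ι) (W : ι → Finset α) (C : Finset (ι → α)) : Prop :=
  ∀ P, IsBox S W P → Even #(inBox S P C)

lemma evenOnBoxes_empty (S : Finset ι) (W : ι → Finset α) : EvenOnBoxes S W ∅ := by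
  simp [EvenOnBoxes, inBox]

lemma EvenOnBoxes.even_add_of_union [DecidableEq (ι → α)] {S : Finset ι} {W P : ι → Finset α}
    {A B : Finset (ι → α)} (hAB : Disjoint A B) (h : EvenOnBoxes S W (A ∪ B)) (hP : IsBox S W P) :
    Even (#(inBox S P A) + #(inBox S P B)) := by
  rw [inBox, inBox, ← card_union_of_disjoint (disjoint_filter_filter hAB), ← filter_union]
  exact h P hP

lemma EvenOnBoxes.even_add_fiber [DecidableEq ι] {S : Finset ι} {W : ι → Finset α}
    {C : Finset (ι → α)} {t₀ : ι} (ht₀ : t₀ ∉ S) (hC : EvenOnBoxes (insert t₀ S) W C)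
    {a b : α} (ha : a ∈ W t₀) (hb : b ∈ W t₀) (hab : a ≠ b) {P : ι → Finset α}
    (hP : IsBox S W P) :
    Even (#(inBox S P {e ∈ C | e t₀ = a}) + #(inBox S P {e ∈ C | e t₀ = b})) := by
  classical
  have hne : ∀ t ∈ S, t ≠ t₀ := fun t ht h => ht₀ (h ▸ ht)
  have hbox : IsBox (insert t₀ S) W (Function.update P t₀ {a, b}) := by
    simp only [IsBox, forall_mem_insert, Function.update_self]
    refine ⟨⟨insert_subset ha (singleton_subset_iff.2 hb), card_pair hab⟩, fun t ht => ?_⟩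
    rw [Function.update_of_ne (hne t ht)]
    exact hP t ht
  rw [inBox, inBox, filter_filter, filter_filter, ← card_union_of_disjoint
    (disjoint_filter.2 fun e _ h h' => hab (h.1.symm.trans h'.1)), ← filter_or]
  convert hC _ hbox using 2
  refine filter_congr fun e _ => ?_
  have hS : (∀ t ∈ S, e t ∈ Function.update P t₀ {a, b} t) ↔ ∀ t ∈ S, e t ∈ P t :=
    forall₂_congr fun t ht => by rw [Function.update_of_ne (hne t ht)]
  rw [forall_mem_insert, Function.update_self, hS, mem_insert, mem_singleton]
  tauto

theorem EvenOnBoxes.exists_card_le [DecidableEq ι] {S : Finset ι} {W : ι → Finset α}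
    {C : Finset (ι → α)} (hpar : EvenOnBoxes S W C) (hC : C.Nonempty)
    (hmem : ∀ e ∈ C, ∀ t ∈ S, e t ∈ W t) (hagree : ∀ e ∈ C, ∀ f ∈ C, ∀ t ∉ S, e t = f t) :
    ∃ t ∈ S, #(W t) ≤ #C := by
  induction S using Finset.induction_on generalizing C with
  | empty =>
    have hone : #C = 1 := by
      refine le_antisymm (card_le_one.2 fun e he f hf => funext fun t => ?_) hC.card_pos
      exact hagree e he f hf t (notMem_empty t)
    simpa [inBox, hone] using hpar (fun _ => ∅) (by simp [IsBox])
  | insert t₀ S ht₀ ih =>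
    -- An odd fibre over `t₀` makes all fibres over `W t₀` odd, hence nonempty; if all fibres
    -- are even, recurse into one of them.
    by_cases hodd : ∃ a ∈ W t₀, ¬ EvenOnBoxes S W {e ∈ C | e t₀ = a}
    · obtain ⟨a, ha, P, hP, hPodd⟩ := by simpa only [EvenOnBoxes, not_forall] using hodd
      have hfiber : ∀ b ∈ W t₀, b ∈ C.image (· t₀) := by
        intro b hb
        have hodd_b : ¬ Even #(inBox S P {e ∈ C | e t₀ = b}) := by
          rcases eq_or_ne a b with rfl | hab
          · exact hPodd
          · have := Nat.even_add.1 (hpar.even_add_fiber ht₀ ha hb hab hP)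
            exact fun h => hPodd (this.2 h)
        obtain ⟨e, he⟩ := nonempty_of_ne_empty (s := {e ∈ C | e t₀ = b})
          (fun h => hodd_b (by simp [h, inBox]))
        exact mem_image.2 ⟨e, (mem_filter.1 he).1, (mem_filter.1 he).2⟩
      exact ⟨t₀, mem_insert_self _ _, (card_le_card hfiber).trans card_image_le⟩
    · push Not at hodd
      obtain ⟨e₀, he₀⟩ := hC
      obtain ⟨t, ht, hle⟩ := ih (hodd _ (hmem e₀ he₀ t₀ (mem_insert_self _ _)))
        ⟨e₀, mem_filter.2 ⟨he₀, rfl⟩⟩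
        (fun e he t ht => hmem e (mem_filter.1 he).1 t (mem_insert_of_mem ht))
        (fun e he f hf t ht => by
          rcases eq_or_ne t t₀ with rfl | htt₀
          · rw [(mem_filter.1 he).2, (mem_filter.1 hf).2]
          · exact hagree e (mem_filter.1 he).1 f (mem_filter.1 hf).1 t
              (by simp [htt₀, ht]))
      exact ⟨t, mem_insert_of_mem ht, hle.trans (card_le_card (filter_subset _ _))⟩

lemma exists_isBox_mem_notMem {S : Finset ι} {W : ι → Finset α} (a b : ι → α) {t₀ : ι}
    (ht₀ : t₀ ∈ S) (hab : a t₀ ≠ b t₀) (ha : ∀ t ∈ S, a t ∈ W t) (hW : ∀ t ∈ S, 2 ≤ #(W t))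
    (hW₀ : 3 ≤ #(W t₀)) :
    ∃ P, IsBox S W P ∧ (∀ t ∈ S, a t ∈ P t) ∧ b t₀ ∉ P t₀ := by
  classical
  have : ∀ t ∈ S, ∃ Q, {a t} ⊆ Q ∧ Q ⊆ (if t = t₀ then (W t).erase (b t) else W t) ∧ #Q = 2 := by
    intro t ht
    refine exists_subsuperset_card_eq ?_ (by simp) ?_ <;> split_ifs with h
    · subst h; simpa using ⟨hab, ha t ht⟩
    · simpa using ha t ht
    · subst h; have := pred_card_le_card_erase (s := W t) (a := b t); omega
    · exact hW t ht
  choose! P hPa hPW hP2 using this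
  refine ⟨P, fun t ht => ⟨(hPW t ht).trans ?_, hP2 t ht⟩,
    fun t ht => hPa t ht (mem_singleton_self _), ?_⟩
  · split_ifs
    exacts [erase_subset _ _, subset_rfl]
  · have := hPW t₀ ht₀
    rw [if_pos rfl] at this
    exact fun h => notMem_erase _ _ (this h)

end Boxes

section Transversals

variable {ι α : Type*} [DecidableEq α]

def edgesThrough (E : Finset (ι → α)) (I : Finset ι) (y : ι → α) : Finset (ι → α) :=
  {e ∈ E | ∀ t ∈ I, e t = y t}

lemma mem_edgesThrough {E : Finset (ι → α)} {I : Finset ι} {y e : ι → α} :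
    e ∈ edgesThrough E I y ↔ e ∈ E ∧ ∀ t ∈ I, e t = y t := by
  simp [edgesThrough]

def IsAllOrNoneOn (I : Finset ι) (ξ : ι → α) (E : Finset (ι → α)) : Prop :=
  ∀ e ∈ E, (∃ t ∈ I, e t = ξ t) → ∀ t ∈ I, e t = ξ t

/-- Extended by `ξ` outside `I`, so that `y ↦ edgesThrough E I y` indexes the classes of edges
avoiding `ξ` on `I` without repetition. -/
def avoidingTraces [Fintype ι] [DecidableEq ι] (V : ι → Finset α) (I : Finset ι) (ξ : ι → α) :
    Finset (ι → α) :=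
  Fintype.piFinset fun t => if t ∈ I then (V t).erase (ξ t) else {ξ t}

section Counting

variable [Fintype ι] [DecidableEq ι] {V : ι → Finset α} {I : Finset ι} {ξ : ι → α}

lemma mem_avoidingTraces {y : ι → α} :
    y ∈ avoidingTraces V I ξ ↔ (∀ t ∈ I, y t ∈ V t ∧ y t ≠ ξ t) ∧ ∀ t ∉ I, y t = ξ t := by
  simp only [avoidingTraces, Fintype.mem_piFinset]
  refine ⟨fun h => ⟨fun t ht => ?_, fun t ht => ?_⟩, fun ⟨hI, hIc⟩ t => ?_⟩
  · simpa [ht, and_comm] using h t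
  · simpa [ht] using h t
  · by_cases ht : t ∈ I
    · simpa [ht, and_comm] using hI t ht
    · simpa [ht] using hIc t ht

lemma card_avoidingTraces (hξ : ∀ t ∈ I, ξ t ∈ V t) :
    #(avoidingTraces V I ξ) = ∏ t ∈ I, (#(V t) - 1) := by
  rw [avoidingTraces, Fintype.card_piFinset, ← prod_mul_prod_compl I,
    prod_eq_one (s := Iᶜ) fun t ht => by rw [if_neg (mem_compl.1 ht), card_singleton], mul_one]
  exact prod_congr rfl fun t ht => by rw [if_pos ht, card_erase_of_mem (hξ t ht)]

lemma card_eq_card_edgesThrough_add_sum {E : Finset (ι → α)} (hEV : ∀ e ∈ E, ∀ t, e t ∈ V t)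
    (hall : IsAllOrNoneOn I ξ E) (hI : I.Nonempty) :
    #E = #(edgesThrough E I ξ) + ∑ y ∈ avoidingTraces V I ξ, #(edgesThrough E I y) := by
  obtain ⟨t₁, ht₁⟩ := hI
  rw [← card_filter_add_card_filter_not (fun e => ∃ t ∈ I, e t = ξ t)]
  have hmaps : Set.MapsTo (fun e => I.piecewise e ξ)
      ({e ∈ E | ¬ ∃ t ∈ I, e t = ξ t} : Finset (ι → α)) (avoidingTraces V I ξ) := by
    intro e he
    obtain ⟨he, hξe⟩ := mem_filter.1 (mem_coe.1 he)
    refine mem_avoidingTraces.2 ⟨fun t ht => ?_, fun t ht => ?_⟩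
    · simp only [piecewise_eq_of_mem _ _ _ ht]
      exact ⟨hEV e he t, fun h => hξe ⟨t, ht, h⟩⟩
    · simp only [piecewise_eq_of_notMem _ _ _ ht]
  rw [card_eq_sum_card_fiberwise hmaps]
  congr 1
  · congr 1
    ext e
    simp only [mem_filter, mem_edgesThrough]
    exact and_congr_right fun he => ⟨hall e he, fun h => ⟨t₁, ht₁, h t₁ ht₁⟩⟩
  · refine sum_congr rfl fun y hy => congrArg card ?_
    obtain ⟨hyI, hyIc⟩ := mem_avoidingTraces.1 hy
    ext e
    simp only [mem_filter, mem_edgesThrough, not_exists, not_and]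
    constructor
    · rintro ⟨⟨he, -⟩, rfl⟩
      exact ⟨he, fun t ht => (piecewise_eq_of_mem _ _ _ ht).symm⟩
    · rintro ⟨he, h⟩
      refine ⟨⟨he, fun t ht => h t ht ▸ (hyI t ht).2⟩, funext fun t => ?_⟩
      by_cases ht : t ∈ I
      · rw [piecewise_eq_of_mem _ _ _ ht, h t ht]
      · rw [piecewise_eq_of_notMem _ _ _ ht, hyIc t ht]

end Counting

end Transversals

namespace IsOctahedralSystem

variable {α : Type*} [DecidableEq α] {n : ℕ} {V : Fin n → Finset α} {E : Finset (Fin n → α)}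
  {I : Finset (Fin n)} {ξ : Fin n → α}

lemma evenOnBoxes_compl (hoct : IsOctahedralSystem V E) {Q : Fin n → Finset α}
    (hQ : IsBox I V Q) : EvenOnBoxes Iᶜ V {e ∈ E | ∀ t ∈ I, e t ∈ Q t} := by
  intro P hP
  have hbox (i : Fin n) : I.piecewise Q P i ⊆ V i ∧ #(I.piecewise Q P i) = 2 := by
    by_cases hi : i ∈ I
    · rw [piecewise_eq_of_mem _ _ _ hi]; exact hQ i hi
    · rw [piecewise_eq_of_notMem _ _ _ hi]; exact hP i (mem_compl.2 hi)
  convert hoct.2 _ (fun i => (hbox i).1) (fun i => (hbox i).2) using 2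
  ext e
  rw [inBox]
  simp only [mem_filter, and_assoc]
  refine and_congr_right fun _ =>
    ⟨fun ⟨hQe, hPe⟩ i => ?_, fun h => ⟨fun t ht => ?_, fun t ht => ?_⟩⟩
  · by_cases hi : i ∈ I
    · rw [piecewise_eq_of_mem _ _ _ hi]; exact hQe i hi
    · rw [piecewise_eq_of_notMem _ _ _ hi]; exact hPe i (mem_compl.2 hi)
  · simpa [piecewise_eq_of_mem _ _ _ ht] using h t
  · simpa [piecewise_eq_of_notMem _ _ _ (mem_compl.1 ht)] using h t

lemma even_card_edgesThrough_add (hoct : IsOctahedralSystem V E) (hall : IsAllOrNoneOn I ξ E)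
    (hI : I.Nonempty) (hξ : ∀ t ∈ I, ξ t ∈ V t) {y : Fin n → α}
    (hy : ∀ t ∈ I, y t ∈ V t ∧ y t ≠ ξ t) {P : Fin n → Finset α} (hP : IsBox Iᶜ V P) :
    Even (#(inBox Iᶜ P (edgesThrough E I ξ)) + #(inBox Iᶜ P (edgesThrough E I y))) := by
  obtain ⟨t₁, ht₁⟩ := hI
  have hsplit : {e ∈ E | ∀ t ∈ I, e t ∈ ({ξ t, y t} : Finset α)} =
      edgesThrough E I ξ ∪ edgesThrough E I y := by
    ext e
    simp only [mem_filter, mem_union, mem_edgesThrough, mem_insert, mem_singleton]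
    constructor
    · rintro ⟨he, h⟩
      by_cases hξe : ∃ t ∈ I, e t = ξ t
      · exact .inl ⟨he, hall e he hξe⟩
      · push Not at hξe
        exact .inr ⟨he, fun t ht => (h t ht).resolve_left (hξe t ht)⟩
    · rintro (⟨he, h⟩ | ⟨he, h⟩)
      exacts [⟨he, fun t ht => .inl (h t ht)⟩, ⟨he, fun t ht => .inr (h t ht)⟩]
  have hdisj : Disjoint (edgesThrough E I ξ) (edgesThrough E I y) := by
    refine disjoint_left.2 fun e hξe hye => (hy t₁ ht₁).2 ?_
    rw [← (mem_edgesThrough.1 hye).2 t₁ ht₁, (mem_edgesThrough.1 hξe).2 t₁ ht₁]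
  refine EvenOnBoxes.even_add_of_union hdisj
    (hsplit ▸ hoct.evenOnBoxes_compl fun t ht => ⟨?_, ?_⟩) hP
  · exact insert_subset (hξ t ht) (singleton_subset_iff.2 (hy t ht).1)
  · exact card_pair (hy t ht).2.symm

lemma evenOnBoxes_edgesThrough_iff (hoct : IsOctahedralSystem V E) (hall : IsAllOrNoneOn I ξ E)
    (hI : I.Nonempty) (hξ : ∀ t ∈ I, ξ t ∈ V t) {y : Fin n → α}
    (hy : ∀ t ∈ I, y t ∈ V t ∧ y t ≠ ξ t) :
    EvenOnBoxes Iᶜ V (edgesThrough E I ξ) ↔ EvenOnBoxes Iᶜ V (edgesThrough E I y) :=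
  have key {P} (hP : IsBox Iᶜ V P) :=
    Nat.even_add.1 (hoct.even_card_edgesThrough_add hall hI hξ hy hP)
  ⟨fun h P hP => (key hP).1 (h P hP), fun h P hP => (key hP).2 (h P hP)⟩

lemma evenOnBoxes_edgesThrough (hoct : IsOctahedralSystem V E) (hall : IsAllOrNoneOn I ξ E)
    (hI : I.Nonempty) (hξ : ∀ t ∈ I, ξ t ∈ V t) (hB : EvenOnBoxes Iᶜ V (edgesThrough E I ξ))
    {e : Fin n → α} (he : e ∈ E) : EvenOnBoxes Iᶜ V (edgesThrough E I e) := by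
  by_cases hξe : ∃ t ∈ I, e t = ξ t
  · have heq : edgesThrough E I e = edgesThrough E I ξ := by
      ext f
      simp only [mem_edgesThrough]
      exact and_congr_right fun _ => forall₂_congr fun t ht => by rw [hall e he hξe t ht]
    rwa [heq]
  · push Not at hξe
    exact (hoct.evenOnBoxes_edgesThrough_iff hall hI hξ fun t ht => ⟨hoct.1 e he t, hξe t ht⟩).1 hB

lemma le_card_edgesThrough (hoct : IsOctahedralSystem V E) (hall : IsAllOrNoneOn I ξ E)
    (hI : I.Nonempty) (hξ : ∀ t ∈ I, ξ t ∈ V t) (hB : EvenOnBoxes Iᶜ V (edgesThrough E I ξ))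
    {m : ℕ} (hm : ∀ t ∉ I, m ≤ #(V t)) {e : Fin n → α} (he : e ∈ E) :
    m ≤ #(edgesThrough E I e) := by
  obtain ⟨t, ht, hle⟩ := (hoct.evenOnBoxes_edgesThrough hall hI hξ hB he).exists_card_le
    ⟨e, mem_edgesThrough.2 ⟨he, fun _ _ => rfl⟩⟩
    (fun f hf t _ => hoct.1 f (mem_edgesThrough.1 hf).1 t)
    (fun f hf g hg t ht => by
      rw [mem_compl, not_not] at ht
      rw [(mem_edgesThrough.1 hf).2 t ht, (mem_edgesThrough.1 hg).2 t ht])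
  exact (hm t (mem_compl.1 ht)).trans hle

lemma card_mul_le_card (hoct : IsOctahedralSystem V E) (hiso : NoIsolatedVertex V E)
    (hall : IsAllOrNoneOn I ξ E) (hξ : ∀ t ∈ I, ξ t ∈ V t)
    (hB : EvenOnBoxes Iᶜ V (edgesThrough E I ξ)) {m : ℕ} (hm : ∀ t ∉ I, m ≤ #(V t))
    {t₁ : Fin n} (ht₁ : t₁ ∈ I) : #(V t₁) * m ≤ #E := by
  rw [card_eq_sum_card_fiberwise (f := (· t₁)) (t := V t₁) fun e he => hoct.1 e he t₁,
    ← smul_eq_mul]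
  refine card_nsmul_le_sum _ _ _ fun w hw => ?_
  obtain ⟨e, he, hew⟩ := hiso t₁ w hw
  refine (hoct.le_card_edgesThrough hall ⟨t₁, ht₁⟩ hξ hB hm he).trans (card_le_card ?_)
  intro f hf
  rw [mem_edgesThrough] at hf
  exact mem_filter.2 ⟨hf.1, (hf.2 t₁ ht₁).trans hew⟩

lemma nonempty_edgesThrough (hoct : IsOctahedralSystem V E) (hall : IsAllOrNoneOn I ξ E)
    (hI : I.Nonempty) (hξ : ∀ t ∈ I, ξ t ∈ V t) (hA : ¬ EvenOnBoxes Iᶜ V (edgesThrough E I ξ))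
    {y : Fin n → α} (hy : y ∈ avoidingTraces V I ξ) : (edgesThrough E I y).Nonempty := by
  rw [nonempty_iff_ne_empty]
  intro h
  refine hA ((hoct.evenOnBoxes_edgesThrough_iff hall hI hξ (mem_avoidingTraces.1 hy).1).2 ?_)
  exact h ▸ evenOnBoxes_empty _ _

lemma exists_two_le_card_edgesThrough (hoct : IsOctahedralSystem V E)
    (hall : IsAllOrNoneOn I ξ E) (hI : I.Nonempty) (hξ : ∀ t ∈ I, ξ t ∈ V t)
    (hone : #(edgesThrough E I ξ) = 1) (hV : ∀ t ∉ I, 2 ≤ #(V t)) {t₀ : Fin n} (ht₀ : t₀ ∉ I)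
    (h3 : 3 ≤ #(V t₀)) (hcover : ∀ w ∈ V t₀, ∃ e ∈ E, e t₀ = w ∧ ∀ s ∈ I, e s ≠ ξ s) :
    ∃ y ∈ avoidingTraces V I ξ, 2 ≤ #(edgesThrough E I y) := by
  obtain ⟨e₀, he₀⟩ := card_eq_one.1 hone
  have he₀E : e₀ ∈ E := (mem_edgesThrough.1 (he₀ ▸ mem_singleton_self e₀)).1
  obtain ⟨w, hw, hwe₀⟩ := exists_mem_ne (by omega : 1 < #(V t₀)) (e₀ t₀)
  obtain ⟨e, he, hew, heξ⟩ := hcover w hw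
  have hy : ∀ t ∈ I, e t ∈ V t ∧ e t ≠ ξ t := fun t ht => ⟨hoct.1 e he t, heξ t ht⟩
  have hthrough : edgesThrough E I (I.piecewise e ξ) = edgesThrough E I e := by
    ext f
    simp only [mem_edgesThrough]
    exact and_congr_right fun _ => forall₂_congr fun t ht => by rw [piecewise_eq_of_mem _ _ _ ht]
  refine ⟨I.piecewise e ξ, mem_avoidingTraces.2 ⟨fun t ht => ?_, fun t ht => ?_⟩, ?_⟩
  · rw [piecewise_eq_of_mem _ _ _ ht]; exact hy t ht
  · rw [piecewise_eq_of_notMem _ _ _ ht]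
  rw [hthrough]
  by_contra hlt
  have hsingle : edgesThrough E I e = {e} :=
    eq_singleton_iff_unique_mem.2 ⟨mem_edgesThrough.2 ⟨he, fun _ _ => rfl⟩,
      fun f hf => card_le_one.1 (by omega) f hf e (mem_edgesThrough.2 ⟨he, fun _ _ => rfl⟩)⟩
  obtain ⟨P, hP, he₀P, heP⟩ := exists_isBox_mem_notMem e₀ e (mem_compl.2 ht₀)
    (hew ▸ hwe₀.symm) (fun t _ => hoct.1 e₀ he₀E t) (fun t ht => hV t (mem_compl.1 ht)) h3
  have hpar := hoct.even_card_edgesThrough_add hall hI hξ hy hP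
  rw [he₀, hsingle, inBox, inBox, filter_singleton, filter_singleton, if_pos he₀P,
    if_neg fun h => heP (h t₀ (mem_compl.2 ht₀))] at hpar
  simp at hpar

lemma card_avoidingTraces_lt_sum (hoct : IsOctahedralSystem V E) (hall : IsAllOrNoneOn I ξ E)
    (hI : I.Nonempty) (hξ : ∀ t ∈ I, ξ t ∈ V t) (hA : ¬ EvenOnBoxes Iᶜ V (edgesThrough E I ξ))
    {y₀ : Fin n → α} (hy₀ : y₀ ∈ avoidingTraces V I ξ) (h2 : 2 ≤ #(edgesThrough E I y₀)) :
    #(avoidingTraces V I ξ) < ∑ y ∈ avoidingTraces V I ξ, #(edgesThrough E I y) := by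
  rw [card_eq_sum_ones]
  exact sum_lt_sum (fun y hy => (hoct.nonempty_edgesThrough hall hI hξ hA hy).card_pos)
    ⟨y₀, hy₀, h2⟩

theorem sq_add_le_card (hoct : IsOctahedralSystem V E) (hiso : NoIsolatedVertex V E)
    (hall : IsAllOrNoneOn I ξ E) (hξ : ∀ t ∈ I, ξ t ∈ V t) (hI : 2 ≤ #I)
    (hcover : ∀ t ∉ I, ∀ w ∈ V t, ∃ e ∈ E, e t = w ∧ ∀ s ∈ I, e s ≠ ξ s)
    {m : ℕ} (hm : 2 ≤ m) (hV : ∀ t ∉ I, m ≤ #(V t)) (hVI : ∀ t ∈ I, m + 1 ≤ #(V t)) :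
    m ^ 2 + 1 ≤ #E ∧ ((3 ≤ #I ∨ ∃ t ∉ I, 3 ≤ #(V t)) → m ^ 2 + 2 ≤ #E) := by
  obtain ⟨t₁, ht₁⟩ : I.Nonempty := card_pos.1 (by omega)
  by_cases hB : EvenOnBoxes Iᶜ V (edgesThrough E I ξ)
  · have hE := hoct.card_mul_le_card hiso hall hξ hB hV ht₁
    have := Nat.mul_le_mul_right m (hVI t₁ ht₁)
    constructor <;> intros <;> nlinarith
  have hsum := card_eq_card_edgesThrough_add_sum hoct.1 hall ⟨t₁, ht₁⟩
  have hξ₁ : 1 ≤ #(edgesThrough E I ξ) := by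
    obtain ⟨e, he, het⟩ := hiso t₁ (ξ t₁) (hξ t₁ ht₁)
    exact card_pos.2 ⟨e, mem_edgesThrough.2 ⟨he, hall e he ⟨t₁, ht₁, het⟩⟩⟩
  have hY : m ^ #I ≤ #(avoidingTraces V I ξ) := by
    rw [card_avoidingTraces hξ]
    exact pow_card_le_prod _ _ _ fun t ht => by have := hVI t ht; omega
  have hYsum : #(avoidingTraces V I ξ) ≤ ∑ y ∈ avoidingTraces V I ξ, #(edgesThrough E I y) := by
    rw [card_eq_sum_ones]
    exact sum_le_sum fun y hy => (hoct.nonempty_edgesThrough hall ⟨t₁, ht₁⟩ hξ hB hy).card_pos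
  have hm2 : m ^ 2 ≤ m ^ #I := Nat.pow_le_pow_right (by omega) hI
  refine ⟨by omega, ?_⟩
  rintro (hI3 | ⟨t₀, ht₀, h3⟩)
  · have : m ^ 3 ≤ m ^ #I := Nat.pow_le_pow_right (by omega) hI3
    nlinarith
  rcases (show #(edgesThrough E I ξ) = 1 ∨ 2 ≤ #(edgesThrough E I ξ) by omega) with h1 | h2
  · obtain ⟨y₀, hy₀, h2⟩ := hoct.exists_two_le_card_edgesThrough hall ⟨t₁, ht₁⟩ hξ h1
      (fun t ht => hm.trans (hV t ht)) ht₀ h3 (hcover t₀ ht₀)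
    have := hoct.card_avoidingTraces_lt_sum hall ⟨t₁, ht₁⟩ hξ hB hy₀ h2
    omega
  · omega

end IsOctahedralSystem

section CompleteSets

variable {α : Type*} {n : ℕ} {V : Fin n → Finset α} {E : Finset (Fin n → α)}
  {X : Finset α} {I : Finset (Fin n)} {ξ : Fin n → α}

lemma eq_of_mem_of_disjoint (hdisj : ∀ i j, i ≠ j → Disjoint (V i) (V j)) {a : α} {i j : Fin n}
    (hi : a ∈ V i) (hj : a ∈ V j) : i = j := by
  by_contra h
  exact disjoint_left.1 (hdisj i j h) hi hj

lemma apply_eq_of_mem (hdisj : ∀ i j, i ≠ j → Disjoint (V i) (V j))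
    (hEV : ∀ e ∈ E, ∀ i, e i ∈ V i) {e : Fin n → α} (he : e ∈ E) {a : α} {i j : Fin n}
    (ha : a ∈ V i) (hj : e j = a) : e i = a := by
  obtain rfl := eq_of_mem_of_disjoint hdisj (hj ▸ hEV e he j) ha
  exact hj

lemma isAllOrNoneOn_of_complete [DecidableEq α] (hdisj : ∀ i j, i ≠ j → Disjoint (V i) (V j))
    (hEV : ∀ e ∈ E, ∀ i, e i ∈ V i) (hξ : ∀ t ∈ I, ξ t ∈ X ∧ ξ t ∈ V t)
    (hXcomp : ∀ u ∈ X, ∀ v ∈ X, u ≠ v → OctArc E u v) : IsAllOrNoneOn I ξ E := by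
  rintro e he ⟨t, ht, het⟩ s hs
  rcases eq_or_ne s t with rfl | hst
  · exact het
  have hne : ξ s ≠ ξ t := fun h => hst (eq_of_mem_of_disjoint hdisj (hξ s hs).2 (h ▸ (hξ t ht).2))
  obtain ⟨j, hj⟩ := (hXcomp _ (hξ s hs).1 _ (hξ t ht).1 hne).2 e he ⟨t, het⟩
  exact apply_eq_of_mem hdisj hEV he (hξ s hs).2 hj

lemma image_eq_of_complete [DecidableEq α] (hdisj : ∀ i j, i ≠ j → Disjoint (V i) (V j))
    (hEV : ∀ e ∈ E, ∀ i, e i ∈ V i) (hiso : NoIsolatedVertex V E)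
    (hξ : ∀ t ∈ I, ξ t ∈ X ∧ ξ t ∈ V t) (hXV : ∀ x ∈ X, ∃ t ∈ I, x ∈ V t)
    (hXcomp : ∀ u ∈ X, ∀ v ∈ X, u ≠ v → OctArc E u v) : I.image ξ = X := by
  refine Subset.antisymm (image_subset_iff.2 fun t ht => (hξ t ht).1) fun x hx => ?_
  obtain ⟨t, ht, hxt⟩ := hXV x hx
  refine mem_image.2 ⟨t, ht, ?_⟩
  by_contra hne
  obtain ⟨e, he, het⟩ := hiso t (ξ t) (hξ t ht).2
  obtain ⟨j, hj⟩ := (hXcomp x hx _ (hξ t ht).1 (Ne.symm hne)).2 e he ⟨t, het⟩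
  exact hne (het.symm.trans (apply_eq_of_mem hdisj hEV he hxt hj))

lemma exists_allOrNone_transversal [DecidableEq α] [Nonempty α]
    (hdisj : ∀ i j, i ≠ j → Disjoint (V i) (V j))
    (hEV : ∀ e ∈ E, ∀ i, e i ∈ V i) (hiso : NoIsolatedVertex V E) (hXV : ∀ x ∈ X, ∃ i, x ∈ V i)
    (hXcomp : ∀ u ∈ X, ∀ v ∈ X, u ≠ v → OctArc E u v) :
    ∃ (I : Finset (Fin n)) (ξ : Fin n → α),
      I.image ξ = X ∧ (∀ t ∈ I, ξ t ∈ V t) ∧ IsAllOrNoneOn I ξ E := by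
  have : ∀ t ∈ ({t | ∃ x ∈ X, x ∈ V t} : Finset (Fin n)), ∃ x, x ∈ X ∧ x ∈ V t :=
    fun t ht => by simpa using ht
  choose! ξ hξ using this
  refine ⟨_, ξ, image_eq_of_complete hdisj hEV hiso hξ (fun x hx => ?_) hXcomp,
    fun t ht => (hξ t ht).2, isAllOrNoneOn_of_complete hdisj hEV hξ hXcomp⟩
  obtain ⟨i, hi⟩ := hXV x hx
  exact ⟨i, mem_filter.2 ⟨mem_univ i, x, hx, hi⟩, hi⟩

lemma exists_edge_avoiding [DecidableEq α] (hdisj : ∀ i j, i ≠ j → Disjoint (V i) (V j))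
    (hEV : ∀ e ∈ E, ∀ i, e i ∈ V i) (hIX : I.image ξ = X) (hξ : ∀ t ∈ I, ξ t ∈ V t)
    (hall : IsAllOrNoneOn I ξ E) (hI : I.Nonempty) (hXout : ∀ u ∈ X, ∀ v, OctArc E u v → v ∈ X)
    {t : Fin n} (ht : t ∉ I) {w : α} (hw : w ∈ V t) :
    ∃ e ∈ E, e t = w ∧ ∀ s ∈ I, e s ≠ ξ s := by
  obtain ⟨t₁, ht₁⟩ := hI
  have hwX : w ∉ X := by
    rw [← hIX, mem_image]
    rintro ⟨s, hs, rfl⟩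
    exact ht (eq_of_mem_of_disjoint hdisj (hξ s hs) hw ▸ hs)
  have hu : ξ t₁ ∈ X := hIX ▸ mem_image_of_mem ξ ht₁
  have hnarc : ¬ OctArc E (ξ t₁) w := fun h => hwX (hXout _ hu w h)
  simp only [OctArc, not_and, not_forall, not_exists] at hnarc
  obtain ⟨e, he, ⟨j, hj⟩, hξe⟩ := hnarc fun h => hwX (h ▸ hu)
  exact ⟨e, he, apply_eq_of_mem hdisj hEV he hw hj,
    fun s hs h => hξe t₁ (hall e he ⟨s, hs, h⟩ t₁ ht₁)⟩

end CompleteSets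

lemma three_le_card_filter_three_le_card {α : Type*} {n k z : ℕ} {V : Fin n → Finset α}
    (hn : 4 ≤ n) (hk : 3 ≤ k) (hz : z < k) (hV : ∀ t, k - 1 ≤ #(V t))
    (hVz : ∀ t : Fin n, z ≤ (t : ℕ) → k ≤ #(V t)) (hns : ¬(n = 4 ∧ k = 3 ∧ z = 2)) :
    3 ≤ #{t | 3 ≤ #(V t)} := by
  rcases (show k = 3 ∨ 4 ≤ k by omega) with rfl | hk4
  · have hlt := Fin.card_filter_val_lt (n := n) (m := z)
    have hsplit := card_filter_add_card_filter_not (s := univ) fun t : Fin n => (t : ℕ) < z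
    have hsub : ({t | ¬ (t : ℕ) < z} : Finset (Fin n)) ⊆ ({t | 3 ≤ #(V t)} : Finset (Fin n)) := by
      intro t
      simp only [mem_filter, mem_univ, true_and, not_lt]
      exact hVz t
    have := card_le_card hsub
    rw [card_univ, Fintype.card_fin] at hsplit
    omega
  · rw [filter_true_of_mem fun t _ => (by have := hV t; omega), card_univ, Fintype.card_fin]
    omega

/-- Parts are indexed from `0`, so `(i : ℕ) < z` is the paper's `i ≤ z`; the exceptional case
`n = 4, k = 3, z = 2` is the `(2,2,3,3)`-octahedral system. -/
theorem octahedral_tech_lemma_general {α : Type*} [DecidableEq α] {n k z : ℕ}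
    (hn : 4 ≤ n) (hk : 3 ≤ k) (hz : z < k)
    (V : Fin n → Finset α) (E : Finset (Fin n → α))
    (hdisj : ∀ i j : Fin n, i ≠ j → Disjoint (V i) (V j))
    (hcard1 : ∀ i : Fin n, (i : ℕ) < z → (V i).card = k - 1)
    (hcard2 : ∀ i : Fin n, z ≤ (i : ℕ) → (i : ℕ) < k → (V i).card = k)
    (hcard3 : ∀ i : Fin n, k ≤ (i : ℕ) → k ≤ (V i).card)
    (hoct : IsOctahedralSystem V E)
    (hiso : NoIsolatedVertex V E)
    (X : Finset α) (hX2 : 2 ≤ X.card)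
    (hXsub : ∀ x ∈ X, ∃ i : Fin n, z ≤ (i : ℕ) ∧ x ∈ V i)
    (hXcomp : ∀ u ∈ X, ∀ v ∈ X, u ≠ v → OctArc E u v)
    (hXout : ∀ u ∈ X, ∀ v, OctArc E u v → v ∈ X) :
    (¬(n = 4 ∧ k = 3 ∧ z = 2) → (k - 1) ^ 2 + 2 ≤ E.card) ∧
    ((n = 4 ∧ k = 3 ∧ z = 2) → 5 ≤ E.card) := by
  have hVz (t : Fin n) (ht : z ≤ (t : ℕ)) : k ≤ #(V t) := by
    rcases lt_or_ge (t : ℕ) k with h | h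
    exacts [(hcard2 t ht h).ge, hcard3 t h]
  have hV (t : Fin n) : k - 1 ≤ #(V t) := by
    rcases lt_or_ge (t : ℕ) z with h | h
    exacts [(hcard1 t h).ge, (hVz t h).trans' (Nat.sub_le k 1)]
  obtain ⟨u, -⟩ : X.Nonempty := card_pos.1 (by omega)
  have : Nonempty α := ⟨u⟩
  obtain ⟨I, ξ, hIX, hξ, hall⟩ := exists_allOrNone_transversal hdisj hoct.1 hiso
    (fun x hx => (hXsub x hx).imp fun _ => And.right) hXcomp
  have hIz (t : Fin n) (ht : t ∈ I) : z ≤ (t : ℕ) := by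
    obtain ⟨i, hi, hξi⟩ := hXsub (ξ t) (hIX ▸ mem_image_of_mem ξ ht)
    exact eq_of_mem_of_disjoint hdisj hξi (hξ t ht) ▸ hi
  have hI : 2 ≤ #I := hX2.trans (hIX ▸ card_image_le)
  have hcore := hoct.sq_add_le_card hiso hall hξ hI
    (fun t ht w hw => exists_edge_avoiding hdisj hoct.1 hIX hξ hall (card_pos.1 (by omega))
      hXout ht hw) (m := k - 1) (by omega) (fun t _ => hV t)
    (fun t ht => by have := hVz t (hIz t ht); omega)
  refine ⟨fun hns => hcore.2 ?_, fun ⟨_, hk3, _⟩ => by simpa [hk3] using hcore.1⟩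
  by_contra! h
  obtain ⟨t, ht, htI⟩ := exists_mem_notMem_of_card_lt_card
    (h.1.trans_le (three_le_card_filter_three_le_card hn hk hz hV hVz hns))
  exact (h.2 t htI).not_ge (mem_filter.1 ht).2

/-- Lemma 2 (`tech`). Here vertex sets are zero-indexed: `|V_i| = k − 1`
for `i < z`, `|V_i| = k` for `z ≤ i < k`, and `k ≤ |V_i|` nondecreasing for `k ≤ i`.
If some `X ⊆ ⋃_{i ≥ z} V_i` with `|X| ≥ 2` induces in `D(Ω)` a complete subgraph without
outneighbour, then `Ω` has at least `(k−1)² + 2` edges, unless `n = 4`, `k = 3`, `z = 2`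
(the `(2,2,3,3)` case), in which case it has at least `5` edges. -/
theorem octahedral_tech_lemma {α : Type*} [DecidableEq α] {n k z : ℕ}
    (hn : 4 ≤ n) (hk : 3 ≤ k) (hkn : k ≤ n) (hz : z < k)
    (V : Fin n → Finset α) (E : Finset (Fin n → α))
    (hdisj : ∀ i j : Fin n, i ≠ j → Disjoint (V i) (V j))
    (hcard1 : ∀ i : Fin n, (i : ℕ) < z → (V i).card = k - 1)
    (hcard2 : ∀ i : Fin n, z ≤ (i : ℕ) → (i : ℕ) < k → (V i).card = k)
    (hcard3 : ∀ i : Fin n, k ≤ (i : ℕ) → k ≤ (V i).card)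
    (hmono : ∀ i j : Fin n, k ≤ (i : ℕ) → i ≤ j → (V i).card ≤ (V j).card)
    (hoct : IsOctahedralSystem V E)
    (hiso : NoIsolatedVertex V E)
    (X : Finset α) (hX2 : 2 ≤ X.card)
    (hXsub : ∀ x ∈ X, ∃ i : Fin n, z ≤ (i : ℕ) ∧ x ∈ V i)
    (hXcomp : ∀ u ∈ X, ∀ v ∈ X, u ≠ v → OctArc E u v)
    (hXout : ∀ u ∈ X, ∀ v, OctArc E u v → v ∈ X) :
    (¬(n = 4 ∧ k = 3 ∧ z = 2) → (k - 1) ^ 2 + 2 ≤ E.card) ∧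
    ((n = 4 ∧ k = 3 ∧ z = 2) → 5 ≤ E.card) :=
  octahedral_tech_lemma_general hn hk hz V E hdisj hcard1 hcard2 hcard3 hoct hiso X hX2 hXsub hXcomp
    hXout
end

section
/- The minimum number of edges of an octahedral system without isolated vertex on five vertex sets V_1,…,V_5 each of cardinality 3 equals 7; that is, every such system has at least 7 edges and there exists one with exactly 7 edges. -/
namespace OctAux

/-! ### Small decidable facts about `Fin 3` / `Fin 4` -/

lemma f3_ne_succ : ∀ a : Fin 3, a ≠ a + 1 := by decide

lemma f3_pair_card : ∀ a b : Fin 3, a ≠ b → ({a, b} : Finset (Fin 3)).card = 2 := by decide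

lemma f3_excl : ∀ a b : Fin 3, a ≠ b →
    b ∉ ({a, -(a + b)} : Finset (Fin 3)) ∧ a ≠ -(a + b) := by decide

lemma f3_third : ∀ a b : Fin 3, ∃ v : Fin 3, v ≠ a ∧ v ≠ b := by decide

lemma f3_two_ne : ∀ j : Fin 3, ∃ i1 i2 : Fin 3, i1 ≠ i2 ∧ i1 ≠ j ∧ i2 ≠ j := by decide

lemma f3_ne2 : ∀ a b : Fin 3, ∃ i : Fin 3, i ≠ a ∧ i ≠ b := by decide

lemma f4_ne2 : ∀ a b : Fin 4, ∃ i : Fin 4, i ≠ a ∧ i ≠ b := by decide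

lemma f2_other : ∀ j : Fin 2, ∃ i : Fin 2, i ≠ j := by decide

lemma f3_cover : ∀ u v w d : Fin 3, u ≠ v → u ≠ w → v ≠ w → d = u ∨ d = v ∨ d = w := by decide

lemma sort3 (c : Fin 3 → ℕ) :
    ∃ u v w : Fin 3, u ≠ v ∧ u ≠ w ∧ v ≠ w ∧ c u ≤ c v ∧ c v ≤ c w := by
  rcases le_total (c 0) (c 1) with h01 | h01 <;>
    rcases le_total (c 1) (c 2) with h12 | h12 <;>
      rcases le_total (c 0) (c 2) with h02 | h02
  · exact ⟨0, 1, 2, by decide, by decide, by decide, h01, h12⟩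
  · exact ⟨0, 1, 2, by decide, by decide, by decide, h01, h12⟩
  · exact ⟨0, 2, 1, by decide, by decide, by decide, h02, h12⟩
  · exact ⟨2, 0, 1, by decide, by decide, by decide, h02, h01⟩
  · exact ⟨1, 0, 2, by decide, by decide, by decide, h01, h02⟩
  · exact ⟨1, 2, 0, by decide, by decide, by decide, h12, h02⟩
  · exact ⟨2, 1, 0, by decide, by decide, by decide, h12, h01⟩
  · exact ⟨2, 1, 0, by decide, by decide, by decide, h12, h01⟩

lemma sum3 (f : Fin 3 → ℕ) (u v w : Fin 3) (huv : u ≠ v) (huw : u ≠ w) (hvw : v ≠ w) :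
    (∑ t : Fin 3, f t) = f u + f v + f w := by
  have huniv : ({u, v, w} : Finset (Fin 3)) = Finset.univ := by
    apply Finset.eq_univ_iff_forall.mpr
    intro d
    rcases f3_cover u v w d huv huw hvw with h | h | h <;> simp [h]
  rw [← huniv, Finset.sum_insert (by simp [huv, huw]),
    Finset.sum_insert (by simp [hvw]), Finset.sum_singleton]
  ring

/-! ### Symmetric difference of finsets -/

variable {β : Type*} [DecidableEq β]

def SD (A B : Finset β) : Finset β := (A \ B) ∪ (B \ A)

lemma mem_SD {A B : Finset β} {x : β} :
    x ∈ SD A B ↔ (x ∈ A ∧ x ∉ B) ∨ (x ∈ B ∧ x ∉ A) := by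
  simp [SD, Finset.mem_union, Finset.mem_sdiff]

lemma SD_empty_left (B : Finset β) : SD ∅ B = B := by
  ext x; simp [mem_SD]

lemma SD_eq_empty {A B : Finset β} (h : SD A B = ∅) : A = B := by
  ext x
  have hx := Finset.eq_empty_iff_forall_notMem.mp h x
  rw [mem_SD] at hx
  tauto

lemma card_SD_add (A B : Finset β) :
    (SD A B).card + 2 * (A ∩ B).card = A.card + B.card := by
  have hd : Disjoint (A \ B) (B \ A) := by
    rw [Finset.disjoint_left]
    intro a ha hb
    simp only [Finset.mem_sdiff] at ha hb
    exact hb.2 ha.1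
  rw [SD, Finset.card_union_of_disjoint hd]
  have h1 : (A \ B).card + (A ∩ B).card = A.card := Finset.card_sdiff_add_card_inter A B
  have h2 : (B \ A).card + (B ∩ A).card = B.card := Finset.card_sdiff_add_card_inter B A
  rw [Finset.inter_comm B A] at h2
  omega

lemma filter_SD (A B : Finset β) (p : β → Prop) [DecidablePred p] :
    (SD A B).filter p = SD (A.filter p) (B.filter p) := by
  ext x
  simp only [mem_SD, Finset.mem_filter]
  tauto

lemma even_filter_SD (A B : Finset β) (p : β → Prop) [DecidablePred p] :
    Even (((SD A B).filter p).card) ↔ Even ((A.filter p).card + (B.filter p).card) := by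
  rw [filter_SD]
  have := card_SD_add (A.filter p) (B.filter p)
  rw [Nat.even_iff, Nat.even_iff]
  omega

lemma SD_singleton_mem {s : β} {C : Finset β} (h : s ∈ C) : SD {s} C = C.erase s := by
  ext x
  simp only [mem_SD, Finset.mem_erase, Finset.mem_singleton]
  constructor
  · rintro (⟨rfl, hc⟩ | ⟨h1, h2⟩)
    · exact absurd h hc
    · exact ⟨h2, h1⟩
  · rintro ⟨h1, h2⟩
    exact Or.inr ⟨h2, h1⟩

lemma SD_singleton_notMem {s : β} {C : Finset β} (h : s ∉ C) : SD {s} C = insert s C := by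
  ext x
  simp only [mem_SD, Finset.mem_insert, Finset.mem_singleton]
  constructor
  · rintro (⟨rfl, _⟩ | ⟨h1, _⟩)
    · exact Or.inl rfl
    · exact Or.inr h1
  · rintro (rfl | h1)
    · exact Or.inl ⟨rfl, h⟩
    · exact Or.inr ⟨h1, fun he => h (he ▸ h1)⟩

lemma SD_of_inter_card_zero {A B : Finset β} (h : (A ∩ B).card = 0) : SD A B = A ∪ B := by
  have he : A ∩ B = ∅ := Finset.card_eq_zero.mp h
  ext x
  simp only [mem_SD, Finset.mem_union]
  constructor
  · rintro (⟨h1, _⟩ | ⟨h1, _⟩)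
    · exact Or.inl h1
    · exact Or.inr h1
  · intro hx
    have hnot : ¬(x ∈ A ∧ x ∈ B) := by
      intro ⟨ha, hb⟩
      have : x ∈ A ∩ B := Finset.mem_inter.mpr ⟨ha, hb⟩
      simp [he] at this
    tauto

end OctAux
namespace OctAux

/-! ### Codewords: sets meeting every box evenly -/

def IsCode {n : ℕ} (D : Finset (Fin n → Fin 3)) : Prop :=
  ∀ X : Fin n → Finset (Fin 3), (∀ i, (X i).card = 2) →
    Even ((D.filter fun d => ∀ i, d i ∈ X i).card)

lemma not_code_one {n : ℕ} {D : Finset (Fin n → Fin 3)} (h : IsCode D)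
    (h1 : D.card = 1) : False := by
  obtain ⟨p, rfl⟩ := Finset.card_eq_one.mp h1
  have heven := h (fun i => {p i, p i + 1}) (fun i => f3_pair_card _ _ (f3_ne_succ _))
  have hp : ∀ i, p i ∈ ({p i, p i + 1} : Finset (Fin 3)) := fun i => Finset.mem_insert_self _ _
  rw [Finset.filter_singleton, if_pos hp] at heven
  simp at heven

lemma not_code_two {n : ℕ} {D : Finset (Fin n → Fin 3)} (h : IsCode D)
    (h2 : D.card = 2) : False := by
  obtain ⟨p, q, hpq, rfl⟩ := Finset.card_eq_two.mp h2
  obtain ⟨j0, hj0⟩ := Function.ne_iff.mp hpq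
  set X : Fin n → Finset (Fin 3) :=
    fun i => if i = j0 then {p i, -(p i + q i)} else {p i, p i + 1} with hX
  have hcards : ∀ i, (X i).card = 2 := by
    intro i
    by_cases hi : i = j0
    · subst hi
      simp only [X, if_pos rfl]
      exact f3_pair_card _ _ (f3_excl _ _ hj0).2
    · simp only [X, if_neg hi]
      exact f3_pair_card _ _ (f3_ne_succ _)
  have hp : ∀ i, p i ∈ X i := by
    intro i
    by_cases hi : i = j0 <;> simp [X, hi]
  have hq : ¬ (∀ i, q i ∈ X i) := by
    intro hq
    have := hq j0
    simp only [X, if_pos rfl] at this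
    exact (f3_excl _ _ hj0).1 this
  have heven := h X hcards
  rw [Finset.filter_insert, if_pos hp, Finset.filter_singleton, if_neg hq] at heven
  simp at heven

lemma code_three {n : ℕ} {D : Finset (Fin n → Fin 3)} (h : IsCode D)
    (h3 : D.card = 3) :
    ∃ j, ∀ i, i ≠ j → ∀ x ∈ D, ∀ y ∈ D, x i = y i := by
  obtain ⟨p, q, r, hpq, hpr, hqr, rfl⟩ := Finset.card_eq_three.mp h3
  by_cases H : ∃ j1 j2, j1 ≠ j2 ∧ p j1 ≠ q j1 ∧ p j2 ≠ r j2
  · exfalso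
    obtain ⟨j1, j2, hj, h1, h2⟩ := H
    set X : Fin n → Finset (Fin 3) := fun i =>
      if i = j1 then {p i, -(p i + q i)}
      else if i = j2 then {p i, -(p i + r i)} else {p i, p i + 1} with hX
    have hcards : ∀ i, (X i).card = 2 := by
      intro i
      by_cases hi1 : i = j1
      · subst hi1; simp only [X, if_pos rfl]
        exact f3_pair_card _ _ (f3_excl _ _ h1).2
      · by_cases hi2 : i = j2
        · subst hi2; simp only [X, if_neg hi1, if_pos rfl]
          exact f3_pair_card _ _ (f3_excl _ _ h2).2
        · simp only [X, if_neg hi1, if_neg hi2]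
          exact f3_pair_card _ _ (f3_ne_succ _)
    have hp : ∀ i, p i ∈ X i := by
      intro i
      simp only [X]
      split
      · simp
      · split <;> simp
    have hqx : ¬ (∀ i, q i ∈ X i) := by
      intro hh
      have := hh j1
      simp only [X, if_pos rfl] at this
      exact (f3_excl _ _ h1).1 this
    have hrx : ¬ (∀ i, r i ∈ X i) := by
      intro hh
      have := hh j2
      simp only [X, if_neg (Ne.symm hj), if_pos rfl] at this
      exact (f3_excl _ _ h2).1 this
    have heven := h X hcards
    rw [Finset.filter_insert, if_pos hp, Finset.filter_insert, if_neg hqx,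
      Finset.filter_singleton, if_neg hrx] at heven
    simp [hpq, hpr] at heven
  · have H' : ∀ j1 j2, j1 ≠ j2 → p j1 = q j1 ∨ p j2 = r j2 := by
      intro j1 j2 hne
      by_contra hc
      push_neg at hc
      exact H ⟨j1, j2, hne, hc.1, hc.2⟩
    obtain ⟨jq, hjq⟩ := Function.ne_iff.mp hpq
    obtain ⟨jr, hjr⟩ := Function.ne_iff.mp hpr
    have hjqr : jq = jr := by
      by_contra hne
      rcases H' jq jr hne with h | h
      · exact hjq h
      · exact hjr h
    subst hjqr
    refine ⟨jq, fun i hi x hx y hy => ?_⟩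
    have hqi : q i = p i := by
      rcases H' i jq hi with h | h
      · exact h.symm
      · exact absurd h hjr
    have hri : r i = p i := by
      rcases H' jq i (Ne.symm hi) with h | h
      · exact absurd h hjq
      · exact h.symm
    simp only [Finset.mem_insert, Finset.mem_singleton] at hx hy
    rcases hx with rfl | rfl | rfl <;> rcases hy with rfl | rfl | rfl <;>
      simp [hqi, hri]

end OctAux
namespace OctAux

/-! ### Slicing along coordinate 0 -/

variable {n : ℕ}

def tl (d : Fin (n + 1) → Fin 3) : Fin n → Fin 3 := Fin.tail d

@[simp] lemma tl_apply (d : Fin (n + 1) → Fin 3) (j : Fin n) : tl d j = d j.succ := rfl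

lemma cons_tl (d : Fin (n + 1) → Fin 3) : Fin.cons (d 0) (tl d) = d :=
  Fin.cons_self_tail d

lemma tl_cons (u : Fin 3) (x : Fin n → Fin 3) : tl (Fin.cons u x) = x := by
  simp [tl]

def slc (D : Finset (Fin (n + 1) → Fin 3)) (u : Fin 3) : Finset (Fin n → Fin 3) :=
  (D.filter fun d => d 0 = u).image tl

lemma mem_slc {D : Finset (Fin (n + 1) → Fin 3)} {u : Fin 3} {x : Fin n → Fin 3} :
    x ∈ slc D u ↔ Fin.cons u x ∈ D := by
  simp only [slc, Finset.mem_image, Finset.mem_filter]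
  constructor
  · rintro ⟨d, ⟨hd, h0⟩, rfl⟩
    rwa [← h0, cons_tl]
  · intro hx
    exact ⟨Fin.cons u x, ⟨hx, Fin.cons_zero _ _⟩, tl_cons _ _⟩

lemma tail_mem_slc {D : Finset (Fin (n + 1) → Fin 3)} {d : Fin (n + 1) → Fin 3}
    (hd : d ∈ D) : tl d ∈ slc D (d 0) :=
  mem_slc.mpr (by rwa [cons_tl])

lemma tl_injOn {s : Finset (Fin (n + 1) → Fin 3)} {u : Fin 3}
    (hs : ∀ d ∈ s, d 0 = u) : Set.InjOn tl (s : Set (Fin (n + 1) → Fin 3)) := by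
  intro a ha b hb hab
  have ha0 := hs a ha
  have hb0 := hs b hb
  calc a = Fin.cons (a 0) (tl a) := (cons_tl a).symm
    _ = Fin.cons u (tl a) := by rw [ha0]
    _ = Fin.cons u (tl b) := by rw [hab]
    _ = Fin.cons (b 0) (tl b) := by rw [hb0]
    _ = b := cons_tl b

lemma slc_card (D : Finset (Fin (n + 1) → Fin 3)) (u : Fin 3) :
    (slc D u).card = (D.filter fun d => d 0 = u).card :=
  Finset.card_image_of_injOn (tl_injOn (fun d hd => (Finset.mem_filter.mp hd).2))

lemma card_eq_sum_slc (D : Finset (Fin (n + 1) → Fin 3)) :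
    D.card = ∑ u : Fin 3, (slc D u).card := by
  rw [Finset.card_eq_sum_card_fiberwise
    (f := fun d => d 0) (t := Finset.univ) (fun x _ => Finset.mem_univ _)]
  exact Finset.sum_congr rfl fun u _ => (slc_card D u).symm

lemma slc_filter_card (D : Finset (Fin (n + 1) → Fin 3)) (u : Fin 3)
    (p : (Fin n → Fin 3) → Prop) [DecidablePred p] :
    ((slc D u).filter p).card = (D.filter fun d => d 0 = u ∧ p (tl d)).card := by
  rw [slc, Finset.filter_image, Finset.filter_filter]
  exact Finset.card_image_of_injOn
    (tl_injOn (fun d hd => (Finset.mem_filter.mp hd).2.1))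

lemma isCode_SD_slc {D : Finset (Fin (n + 1) → Fin 3)} (h : IsCode D) {u v : Fin 3}
    (huv : u ≠ v) : IsCode (SD (slc D u) (slc D v)) := by
  intro X hX
  set X' : Fin (n + 1) → Finset (Fin 3) := Fin.cons ({u, v} : Finset (Fin 3)) X with hX'
  have hX'c : ∀ i, (X' i).card = 2 := by
    intro i
    refine Fin.cases ?_ ?_ i
    · simpa [X'] using f3_pair_card u v huv
    · intro j
      simpa [X'] using hX j
  have heven := h X' hX'c
  rw [even_filter_SD]
  rw [slc_filter_card D u (fun x => ∀ j, x j ∈ X j),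
    slc_filter_card D v (fun x => ∀ j, x j ∈ X j)]
  have hsplit : (D.filter fun d => ∀ i, d i ∈ X' i)
      = (D.filter fun d => d 0 = u ∧ ∀ j, tl d j ∈ X j)
        ∪ (D.filter fun d => d 0 = v ∧ ∀ j, tl d j ∈ X j) := by
    rw [← Finset.filter_or]
    apply Finset.filter_congr
    intro d _
    rw [Fin.forall_fin_succ]
    simp only [X', Fin.cons_zero, Fin.cons_succ, Finset.mem_insert, Finset.mem_singleton,
      tl_apply]
    constructor
    · rintro ⟨h0 | h0, hrest⟩
      · exact Or.inl ⟨h0, hrest⟩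
      · exact Or.inr ⟨h0, hrest⟩
    · rintro (⟨h0, hrest⟩ | ⟨h0, hrest⟩)
      · exact ⟨Or.inl h0, hrest⟩
      · exact ⟨Or.inr h0, hrest⟩
  have hdisj : Disjoint (D.filter fun d => d 0 = u ∧ ∀ j, tl d j ∈ X j)
      (D.filter fun d => d 0 = v ∧ ∀ j, tl d j ∈ X j) := by
    rw [Finset.disjoint_left]
    intro a ha hb
    have h1 := (Finset.mem_filter.mp ha).2.1
    have h2 := (Finset.mem_filter.mp hb).2.1
    exact huv (h1 ▸ h2 ▸ rfl)
  rw [hsplit, Finset.card_union_of_disjoint hdisj] at heven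
  exact heven

lemma code_card_ge {D : Finset (Fin n → Fin 3)} (h : IsCode D) :
    D = ∅ ∨ 3 ≤ D.card := by
  rcases Nat.lt_or_ge D.card 3 with hlt | hge
  · interval_cases hc : D.card
    · exact Or.inl (Finset.card_eq_zero.mp hc)
    · exact absurd hc (fun hc => not_code_one h hc)
    · exact absurd hc (fun hc => not_code_two h hc)
  · exact Or.inr hge

end OctAux
namespace OctAux

variable {n : ℕ}

lemma const0_of_two_empty {D : Finset (Fin (n + 1) → Fin 3)} {u v w : Fin 3}
    (huv : u ≠ v) (huw : u ≠ w) (hvw : v ≠ w)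
    (hA : slc D u = ∅) (hB : slc D v = ∅) {x : Fin (n + 1) → Fin 3} (hx : x ∈ D) :
    x 0 = w := by
  rcases f3_cover u v w (x 0) huv huw hvw with h0 | h0 | h0
  · exfalso
    have hm := tail_mem_slc hx
    rw [h0, hA] at hm
    exact absurd hm (Finset.notMem_empty _)
  · exfalso
    have hm := tail_mem_slc hx
    rw [h0, hB] at hm
    exact absurd hm (Finset.notMem_empty _)
  · exact h0

/-- Every codeword of size 4 in dimension 3 is constant in some coordinate. -/
lemma w4_3 {D : Finset (Fin 3 → Fin 3)} (h : IsCode D) (h4 : D.card = 4) :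
    ∃ j : Fin 3, ∀ x ∈ D, ∀ y ∈ D, x j = y j := by
  obtain ⟨u, v, w, huv, huw, hvw, hc1, hc2⟩ := sort3 (fun t => (slc D t).card)
  have hsum : (slc D u).card + (slc D v).card + (slc D w).card = 4 := by
    have h1 := card_eq_sum_slc D
    rw [h4, sum3 (fun t => (slc D t).card) u v w huv huw hvw] at h1
    omega
  have hcodeAB := isCode_SD_slc h huv
  have hcodeAC := isCode_SD_slc h huw
  have hmem : ∀ d ∈ D, tl d ∈ slc D u ∨ tl d ∈ slc D v ∨ tl d ∈ slc D w := by
    intro d hd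
    rcases f3_cover u v w (d 0) huv huw hvw with h0 | h0 | h0
    · exact Or.inl (h0 ▸ tail_mem_slc hd)
    · exact Or.inr (Or.inl (h0 ▸ tail_mem_slc hd))
    · exact Or.inr (Or.inr (h0 ▸ tail_mem_slc hd))
  by_cases hA0 : (slc D u).card = 0
  · by_cases hB0 : (slc D v).card = 0
    · refine ⟨0, fun x hx y hy => ?_⟩
      rw [const0_of_two_empty huv huw hvw (Finset.card_eq_zero.mp hA0)
          (Finset.card_eq_zero.mp hB0) hx,
        const0_of_two_empty huv huw hvw (Finset.card_eq_zero.mp hA0)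
          (Finset.card_eq_zero.mp hB0) hy]
    · exfalso
      have hAe : slc D u = ∅ := Finset.card_eq_zero.mp hA0
      have hcodeB : IsCode (slc D v) := by
        have := hcodeAB
        rwa [hAe, SD_empty_left] at this
      rcases code_card_ge hcodeB with hBe | hB3
      · exact hB0 (by rw [hBe]; rfl)
      · omega
  · have hA1 : (slc D u).card = 1 := by omega
    have hB1 : (slc D v).card = 1 := by omega
    have hC2 : (slc D w).card = 2 := by omega
    obtain ⟨s, hAs⟩ := Finset.card_eq_one.mp hA1
    obtain ⟨t, hBt⟩ := Finset.card_eq_one.mp hB1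
    have hABeq : slc D u = slc D v := by
      rcases code_card_ge hcodeAB with he | h3
      · exact SD_eq_empty he
      · exfalso
        have := card_SD_add (slc D u) (slc D v)
        omega
    by_cases hsC : s ∈ slc D w
    · exfalso
      have hSD : SD (slc D u) (slc D w) = (slc D w).erase s := by
        rw [hAs]; exact SD_singleton_mem hsC
      have hcard : (SD (slc D u) (slc D w)).card = 1 := by
        rw [hSD, Finset.card_erase_of_mem hsC, hC2]
      exact not_code_one hcodeAC hcard
    · have hSD : SD (slc D u) (slc D w) = insert s (slc D w) := by
        rw [hAs]; exact SD_singleton_notMem hsC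
      have hcard : (SD (slc D u) (slc D w)).card = 3 := by
        rw [hSD, Finset.card_insert_of_notMem hsC, hC2]
      obtain ⟨j, hconst⟩ := code_three hcodeAC hcard
      obtain ⟨i0, hi0⟩ := f2_other j
      have hkey : ∀ z ∈ D, tl z ∈ SD (slc D u) (slc D w) := by
        intro z hz
        rw [hSD]
        rcases hmem z hz with hm | hm | hm
        · rw [hAs] at hm
          rw [Finset.mem_singleton.mp hm]
          exact Finset.mem_insert_self _ _
        · rw [← hABeq, hAs] at hm
          rw [Finset.mem_singleton.mp hm]
          exact Finset.mem_insert_self _ _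
        · exact Finset.mem_insert_of_mem hm
      exact ⟨i0.succ, fun x hx y hy =>
        hconst i0 hi0 (tl x) (hkey x hx) (tl y) (hkey y hy)⟩

/-- Every codeword of size 4 in dimension 4 is constant in two coordinates. -/
lemma w4_4 {D : Finset (Fin 4 → Fin 3)} (h : IsCode D) (h4 : D.card = 4) :
    ∃ j k : Fin 4, j ≠ k ∧ (∀ x ∈ D, ∀ y ∈ D, x j = y j) ∧
      (∀ x ∈ D, ∀ y ∈ D, x k = y k) := by
  obtain ⟨u, v, w, huv, huw, hvw, hc1, hc2⟩ := sort3 (fun t => (slc D t).card)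
  have hsum : (slc D u).card + (slc D v).card + (slc D w).card = 4 := by
    have h1 := card_eq_sum_slc D
    rw [h4, sum3 (fun t => (slc D t).card) u v w huv huw hvw] at h1
    omega
  have hcodeAB := isCode_SD_slc h huv
  have hcodeAC := isCode_SD_slc h huw
  have hmem : ∀ d ∈ D, tl d ∈ slc D u ∨ tl d ∈ slc D v ∨ tl d ∈ slc D w := by
    intro d hd
    rcases f3_cover u v w (d 0) huv huw hvw with h0 | h0 | h0
    · exact Or.inl (h0 ▸ tail_mem_slc hd)
    · exact Or.inr (Or.inl (h0 ▸ tail_mem_slc hd))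
    · exact Or.inr (Or.inr (h0 ▸ tail_mem_slc hd))
  by_cases hA0 : (slc D u).card = 0
  · by_cases hB0 : (slc D v).card = 0
    · have hAe := Finset.card_eq_zero.mp hA0
      have hBe := Finset.card_eq_zero.mp hB0
      have hcodeC : IsCode (slc D w) := by
        have := hcodeAC
        rwa [hAe, SD_empty_left] at this
      obtain ⟨j, hconst⟩ := w4_3 hcodeC (by omega)
      have hmemC : ∀ z ∈ D, tl z ∈ slc D w := by
        intro z hz
        rcases hmem z hz with hm | hm | hm
        · rw [hAe] at hm; exact absurd hm (Finset.notMem_empty _)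
        · rw [hBe] at hm; exact absurd hm (Finset.notMem_empty _)
        · exact hm
      refine ⟨0, j.succ, (Fin.succ_ne_zero j).symm, ?_, ?_⟩
      · intro x hx y hy
        rw [const0_of_two_empty huv huw hvw hAe hBe hx,
          const0_of_two_empty huv huw hvw hAe hBe hy]
      · exact fun x hx y hy => hconst (tl x) (hmemC x hx) (tl y) (hmemC y hy)
    · exfalso
      have hAe : slc D u = ∅ := Finset.card_eq_zero.mp hA0
      have hcodeB : IsCode (slc D v) := by
        have := hcodeAB
        rwa [hAe, SD_empty_left] at this
      rcases code_card_ge hcodeB with hBe | hB3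
      · exact hB0 (by rw [hBe]; rfl)
      · omega
  · have hA1 : (slc D u).card = 1 := by omega
    have hB1 : (slc D v).card = 1 := by omega
    have hC2 : (slc D w).card = 2 := by omega
    obtain ⟨s, hAs⟩ := Finset.card_eq_one.mp hA1
    have hABeq : slc D u = slc D v := by
      rcases code_card_ge hcodeAB with he | h3
      · exact SD_eq_empty he
      · exfalso
        have := card_SD_add (slc D u) (slc D v)
        omega
    by_cases hsC : s ∈ slc D w
    · exfalso
      have hSD : SD (slc D u) (slc D w) = (slc D w).erase s := by
        rw [hAs]; exact SD_singleton_mem hsC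
      have hcard : (SD (slc D u) (slc D w)).card = 1 := by
        rw [hSD, Finset.card_erase_of_mem hsC, hC2]
      exact not_code_one hcodeAC hcard
    · have hSD : SD (slc D u) (slc D w) = insert s (slc D w) := by
        rw [hAs]; exact SD_singleton_notMem hsC
      have hcard : (SD (slc D u) (slc D w)).card = 3 := by
        rw [hSD, Finset.card_insert_of_notMem hsC, hC2]
      obtain ⟨j, hconst⟩ := code_three hcodeAC hcard
      obtain ⟨i1, i2, hi12, hi1, hi2⟩ := f3_two_ne j
      have hkey : ∀ z ∈ D, tl z ∈ SD (slc D u) (slc D w) := by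
        intro z hz
        rw [hSD]
        rcases hmem z hz with hm | hm | hm
        · rw [hAs] at hm
          rw [Finset.mem_singleton.mp hm]
          exact Finset.mem_insert_self _ _
        · rw [← hABeq, hAs] at hm
          rw [Finset.mem_singleton.mp hm]
          exact Finset.mem_insert_self _ _
        · exact Finset.mem_insert_of_mem hm
      refine ⟨i1.succ, i2.succ, fun hh => hi12 (Fin.succ_injective _ hh), ?_, ?_⟩
      · exact fun x hx y hy => hconst i1 hi1 (tl x) (hkey x hx) (tl y) (hkey y hy)
      · exact fun x hx y hy => hconst i2 hi2 (tl x) (hkey x hx) (tl y) (hkey y hy)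

/-- Every codeword of size 5 in dimension 4 is constant in some coordinate. -/
lemma w5_4 {D : Finset (Fin 4 → Fin 3)} (h : IsCode D) (h5 : D.card = 5) :
    ∃ j : Fin 4, ∀ x ∈ D, ∀ y ∈ D, x j = y j := by
  obtain ⟨u, v, w, huv, huw, hvw, hc1, hc2⟩ := sort3 (fun t => (slc D t).card)
  have hsum : (slc D u).card + (slc D v).card + (slc D w).card = 5 := by
    have h1 := card_eq_sum_slc D
    rw [h5, sum3 (fun t => (slc D t).card) u v w huv huw hvw] at h1
    omega
  have hcodeAB := isCode_SD_slc h huv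
  have hcodeAC := isCode_SD_slc h huw
  have hmem : ∀ d ∈ D, tl d ∈ slc D u ∨ tl d ∈ slc D v ∨ tl d ∈ slc D w := by
    intro d hd
    rcases f3_cover u v w (d 0) huv huw hvw with h0 | h0 | h0
    · exact Or.inl (h0 ▸ tail_mem_slc hd)
    · exact Or.inr (Or.inl (h0 ▸ tail_mem_slc hd))
    · exact Or.inr (Or.inr (h0 ▸ tail_mem_slc hd))
  by_cases hA0 : (slc D u).card = 0
  · by_cases hB0 : (slc D v).card = 0
    · refine ⟨0, fun x hx y hy => ?_⟩
      rw [const0_of_two_empty huv huw hvw (Finset.card_eq_zero.mp hA0)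
          (Finset.card_eq_zero.mp hB0) hx,
        const0_of_two_empty huv huw hvw (Finset.card_eq_zero.mp hA0)
          (Finset.card_eq_zero.mp hB0) hy]
    · exfalso
      have hAe : slc D u = ∅ := Finset.card_eq_zero.mp hA0
      have hcodeB : IsCode (slc D v) := by
        have := hcodeAB
        rwa [hAe, SD_empty_left] at this
      rcases code_card_ge hcodeB with hBe | hB3
      · exact hB0 (by rw [hBe]; rfl)
      · omega
  · -- all slices nonempty; (1,1,3) or (1,2,2)
    have hA1 : (slc D u).card = 1 := by omega
    obtain ⟨s, hAs⟩ := Finset.card_eq_one.mp hA1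
    by_cases hB1 : (slc D v).card = 1
    · -- (1,1,3)
      have hC3 : (slc D w).card = 3 := by omega
      have hABeq : slc D u = slc D v := by
        rcases code_card_ge hcodeAB with he | h3
        · exact SD_eq_empty he
        · exfalso
          have := card_SD_add (slc D u) (slc D v)
          omega
      by_cases hsC : s ∈ slc D w
      · exfalso
        have hSD : SD (slc D u) (slc D w) = (slc D w).erase s := by
          rw [hAs]; exact SD_singleton_mem hsC
        have hcard : (SD (slc D u) (slc D w)).card = 2 := by
          rw [hSD, Finset.card_erase_of_mem hsC, hC3]
        exact not_code_two hcodeAC hcard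
      · have hSD : SD (slc D u) (slc D w) = insert s (slc D w) := by
          rw [hAs]; exact SD_singleton_notMem hsC
        have hcard : (SD (slc D u) (slc D w)).card = 4 := by
          rw [hSD, Finset.card_insert_of_notMem hsC, hC3]
        obtain ⟨j, hconst⟩ := w4_3 hcodeAC hcard
        have hkey : ∀ z ∈ D, tl z ∈ SD (slc D u) (slc D w) := by
          intro z hz
          rw [hSD]
          rcases hmem z hz with hm | hm | hm
          · rw [hAs] at hm
            rw [Finset.mem_singleton.mp hm]
            exact Finset.mem_insert_self _ _
          · rw [← hABeq, hAs] at hm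
            rw [Finset.mem_singleton.mp hm]
            exact Finset.mem_insert_self _ _
          · exact Finset.mem_insert_of_mem hm
        exact ⟨j.succ, fun x hx y hy =>
          hconst (tl x) (hkey x hx) (tl y) (hkey y hy)⟩
    · -- (1,2,2)
      have hB2 : (slc D v).card = 2 := by omega
      have hC2 : (slc D w).card = 2 := by omega
      have hcodeBCs := isCode_SD_slc h hvw
      -- s ∉ B
      by_cases hsB : s ∈ slc D v
      · exfalso
        have hSD : SD (slc D u) (slc D v) = (slc D v).erase s := by
          rw [hAs]; exact SD_singleton_mem hsB
        have hcard : (SD (slc D u) (slc D v)).card = 1 := by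
          rw [hSD, Finset.card_erase_of_mem hsB, hB2]
        exact not_code_one hcodeAB hcard
      by_cases hsC : s ∈ slc D w
      · exfalso
        have hSD : SD (slc D u) (slc D w) = (slc D w).erase s := by
          rw [hAs]; exact SD_singleton_mem hsC
        have hcard : (SD (slc D u) (slc D w)).card = 1 := by
          rw [hSD, Finset.card_erase_of_mem hsC, hC2]
        exact not_code_one hcodeAC hcard
      have hSDB : SD (slc D u) (slc D v) = insert s (slc D v) := by
        rw [hAs]; exact SD_singleton_notMem hsB
      have hSDC : SD (slc D u) (slc D w) = insert s (slc D w) := by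
        rw [hAs]; exact SD_singleton_notMem hsC
      have hcardB : (SD (slc D u) (slc D v)).card = 3 := by
        rw [hSDB, Finset.card_insert_of_notMem hsB, hB2]
      have hcardC : (SD (slc D u) (slc D w)).card = 3 := by
        rw [hSDC, Finset.card_insert_of_notMem hsC, hC2]
      obtain ⟨dB, hconstB⟩ := code_three hcodeAB hcardB
      obtain ⟨dC, hconstC⟩ := code_three hcodeAC hcardC
      obtain ⟨i0, hi0B, hi0C⟩ := f3_ne2 dB dC
      refine ⟨i0.succ, fun x hx y hy => ?_⟩
      have hval : ∀ z ∈ D, tl z i0 = s i0 := by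
        intro z hz
        rcases hmem z hz with hm | hm | hm
        · rw [hAs] at hm
          rw [Finset.mem_singleton.mp hm]
        · exact hconstB i0 hi0B (tl z)
            (by rw [hSDB]; exact Finset.mem_insert_of_mem hm) s
            (by rw [hSDB]; exact Finset.mem_insert_self _ _)
        · exact hconstC i0 hi0C (tl z)
            (by rw [hSDC]; exact Finset.mem_insert_of_mem hm) s
            (by rw [hSDC]; exact Finset.mem_insert_self _ _)
      rw [show x i0.succ = tl x i0 from rfl, show y i0.succ = tl y i0 from rfl,
        hval x hx, hval y hy]

end OctAux
namespace OctAux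

/-- Core lemma: three slices (sorted by size, each nonempty, total ≤ 6) whose pairwise
symmetric differences are codewords must miss some value in some coordinate. -/
lemma core {A B C : Finset (Fin 4 → Fin 3)}
    (hab : IsCode (SD A B)) (hac : IsCode (SD A C)) (hbc : IsCode (SD B C))
    (ha1 : 1 ≤ A.card) (hab' : A.card ≤ B.card) (hbc' : B.card ≤ C.card)
    (hsum : A.card + B.card + C.card ≤ 6) :
    ∃ (j : Fin 4) (v0 : Fin 3), ∀ x, (x ∈ A ∨ x ∈ B ∨ x ∈ C) → x j ≠ v0 := by
  by_cases hA1 : A.card = 1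
  · obtain ⟨s, hAs⟩ := Finset.card_eq_one.mp hA1
    by_cases hB1 : B.card = 1
    · -- (1,1,c)
      have hABeq : A = B := by
        rcases code_card_ge hab with he | h3
        · exact SD_eq_empty he
        · exfalso
          have := card_SD_add A B
          omega
      have hCle : C.card ≤ 4 := by omega
      by_cases hsC : s ∈ C
      · have hSD : SD A C = C.erase s := by rw [hAs]; exact SD_singleton_mem hsC
        have hcard : (SD A C).card = C.card - 1 := by
          rw [hSD, Finset.card_erase_of_mem hsC]
        rcases code_card_ge hac with he | h3
        · -- A = C
          have hACeq : A = C := SD_eq_empty he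
          refine ⟨0, s 0 + 1, fun x hx => ?_⟩
          have hxs : x = s := by
            rcases hx with hx | hx | hx
            · rwa [hAs, Finset.mem_singleton] at hx
            · rw [← hABeq, hAs, Finset.mem_singleton] at hx; exact hx
            · rw [← hACeq, hAs, Finset.mem_singleton] at hx; exact hx
          rw [hxs]
          exact f3_ne_succ _
        · -- C.card = 4, erase is a 3-codeword
          have hC4 : C.card = 4 := by omega
          have hcard3 : (SD A C).card = 3 := by omega
          obtain ⟨j, hconst⟩ := code_three hac hcard3
          obtain ⟨i0, hi0, _⟩ := f4_ne2 j j
          have hne : (SD A C).Nonempty := Finset.card_pos.mp (by omega)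
          obtain ⟨w0, hw0⟩ := hne
          obtain ⟨v0, hv1, hv2⟩ := f3_third (s i0) (w0 i0)
          refine ⟨i0, v0, fun x hx => ?_⟩
          have hxv : x i0 = s i0 ∨ x i0 = w0 i0 := by
            rcases hx with hx | hx | hx
            · rw [hAs, Finset.mem_singleton] at hx; exact Or.inl (by rw [hx])
            · rw [← hABeq, hAs, Finset.mem_singleton] at hx; exact Or.inl (by rw [hx])
            · by_cases hxs : x = s
              · exact Or.inl (by rw [hxs])
              · have : x ∈ SD A C := by
                  rw [hSD]
                  exact Finset.mem_erase.mpr ⟨hxs, hx⟩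
                exact Or.inr (hconst i0 hi0 x this w0 hw0)
          rcases hxv with hh | hh <;> rw [hh]
          · exact fun hc => hv1 hc.symm
          · exact fun hc => hv2 hc.symm
      · -- s ∉ C
        have hSD : SD A C = insert s C := by rw [hAs]; exact SD_singleton_notMem hsC
        have hcard : (SD A C).card = C.card + 1 := by
          rw [hSD, Finset.card_insert_of_notMem hsC]
        have h3 : 3 ≤ (SD A C).card := by
          rcases code_card_ge hac with he | h3
          · exfalso
            have : s ∈ SD A C := by rw [hSD]; exact Finset.mem_insert_self _ _
            rw [he] at this
            exact absurd this (Finset.notMem_empty _)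
          · exact h3
        have hmemSD : ∀ x, (x ∈ A ∨ x ∈ B ∨ x ∈ C) → x ∈ SD A C := by
          intro x hx
          rw [hSD]
          rcases hx with hx | hx | hx
          · rw [hAs, Finset.mem_singleton] at hx; rw [hx]; exact Finset.mem_insert_self _ _
          · rw [← hABeq, hAs, Finset.mem_singleton] at hx
            rw [hx]; exact Finset.mem_insert_self _ _
          · exact Finset.mem_insert_of_mem hx
        have hsSD : s ∈ SD A C := by rw [hSD]; exact Finset.mem_insert_self _ _
        have hfin : ∀ i0 : Fin 4, (∀ x ∈ SD A C, ∀ y ∈ SD A C, x i0 = y i0) →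
            ∃ (j : Fin 4) (v0 : Fin 3), ∀ x, (x ∈ A ∨ x ∈ B ∨ x ∈ C) → x j ≠ v0 := by
          intro i0 hconst
          refine ⟨i0, s i0 + 1, fun x hx => ?_⟩
          rw [hconst x (hmemSD x hx) s hsSD]
          exact f3_ne_succ _
        rcases (by omega : (SD A C).card = 3 ∨ (SD A C).card = 4 ∨ (SD A C).card = 5)
          with hc | hc | hc
        · obtain ⟨j, hconst⟩ := code_three hac hc
          obtain ⟨i0, hi0, _⟩ := f4_ne2 j j
          exact hfin i0 (hconst i0 hi0)
        · obtain ⟨j, _, _, hconst, _⟩ := w4_4 hac hc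
          exact hfin j hconst
        · obtain ⟨j, hconst⟩ := w5_4 hac hc
          exact hfin j hconst
    · -- A.card = 1, B.card = 2
      have hB2 : B.card = 2 := by omega
      have hCle : C.card ≤ 3 := by omega
      -- s ∉ B
      by_cases hsB : s ∈ B
      · exfalso
        have hSD : SD A B = B.erase s := by rw [hAs]; exact SD_singleton_mem hsB
        have hcard : (SD A B).card = 1 := by
          rw [hSD, Finset.card_erase_of_mem hsB, hB2]
        exact not_code_one hab hcard
      have hSDB : SD A B = insert s B := by rw [hAs]; exact SD_singleton_notMem hsB
      have hcardB : (SD A B).card = 3 := by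
        rw [hSDB, Finset.card_insert_of_notMem hsB, hB2]
      obtain ⟨dB, hconstB⟩ := code_three hab hcardB
      by_cases hC2 : C.card = 2
      · -- (1,2,2)
        by_cases hsC : s ∈ C
        · exfalso
          have hSD : SD A C = C.erase s := by rw [hAs]; exact SD_singleton_mem hsC
          have hcard : (SD A C).card = 1 := by
            rw [hSD, Finset.card_erase_of_mem hsC, hC2]
          exact not_code_one hac hcard
        have hSDC : SD A C = insert s C := by rw [hAs]; exact SD_singleton_notMem hsC
        have hcardC : (SD A C).card = 3 := by
          rw [hSDC, Finset.card_insert_of_notMem hsC, hC2]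
        obtain ⟨dC, hconstC⟩ := code_three hac hcardC
        obtain ⟨i0, hi0B, hi0C⟩ := f4_ne2 dB dC
        refine ⟨i0, s i0 + 1, fun x hx => ?_⟩
        have hval : x i0 = s i0 := by
          rcases hx with hx | hx | hx
          · rw [hAs, Finset.mem_singleton] at hx; rw [hx]
          · exact hconstB i0 hi0B x (by rw [hSDB]; exact Finset.mem_insert_of_mem hx) s
              (by rw [hSDB]; exact Finset.mem_insert_self _ _)
          · exact hconstC i0 hi0C x (by rw [hSDC]; exact Finset.mem_insert_of_mem hx) s
              (by rw [hSDC]; exact Finset.mem_insert_self _ _)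
        rw [hval]
        exact f3_ne_succ _
      · -- (1,2,3)
        have hC3 : C.card = 3 := by omega
        by_cases hsC : s ∈ C
        · exfalso
          have hSD : SD A C = C.erase s := by rw [hAs]; exact SD_singleton_mem hsC
          have hcard : (SD A C).card = 2 := by
            rw [hSD, Finset.card_erase_of_mem hsC, hC3]
          exact not_code_two hac hcard
        have hSDC : SD A C = insert s C := by rw [hAs]; exact SD_singleton_notMem hsC
        have hcardC : (SD A C).card = 4 := by
          rw [hSDC, Finset.card_insert_of_notMem hsC, hC3]
        obtain ⟨j, k, hjk, hcj, hck⟩ := w4_4 hac hcardC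
        have hpick : ∃ i0, i0 ≠ dB ∧ (∀ x ∈ SD A C, ∀ y ∈ SD A C, x i0 = y i0) := by
          by_cases hjd : j = dB
          · exact ⟨k, fun hh => hjk (hjd ▸ hh.symm ▸ rfl), hck⟩
          · exact ⟨j, hjd, hcj⟩
        obtain ⟨i0, hi0B, hconstC⟩ := hpick
        refine ⟨i0, s i0 + 1, fun x hx => ?_⟩
        have hval : x i0 = s i0 := by
          rcases hx with hx | hx | hx
          · rw [hAs, Finset.mem_singleton] at hx; rw [hx]
          · exact hconstB i0 hi0B x (by rw [hSDB]; exact Finset.mem_insert_of_mem hx) s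
              (by rw [hSDB]; exact Finset.mem_insert_self _ _)
          · exact hconstC x (by rw [hSDC]; exact Finset.mem_insert_of_mem hx) s
              (by rw [hSDC]; exact Finset.mem_insert_self _ _)
        rw [hval]
        exact f3_ne_succ _
  · -- A.card = 2, so (2,2,2)
    have hA2 : A.card = 2 := by omega
    have hB2 : B.card = 2 := by omega
    have hC2 : C.card = 2 := by omega
    have pairfact : ∀ {P Q : Finset (Fin 4 → Fin 3)}, IsCode (SD P Q) →
        P.card = 2 → Q.card = 2 → P = Q ∨ ((SD P Q).card = 4 ∧ SD P Q = P ∪ Q) := by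
      intro P Q hc hP hQ
      rcases code_card_ge hc with he | h3
      · exact Or.inl (SD_eq_empty he)
      · have hadd := card_SD_add P Q
        have h4 : (SD P Q).card = 4 := by omega
        have hint : (P ∩ Q).card = 0 := by omega
        exact Or.inr ⟨h4, SD_of_inter_card_zero hint⟩
    obtain ⟨a0, ha0⟩ := Finset.card_pos.mp (by omega : 0 < A.card)
    obtain ⟨b0, hb0⟩ := Finset.card_pos.mp (by omega : 0 < B.card)
    obtain ⟨c0, hc0⟩ := Finset.card_pos.mp (by omega : 0 < C.card)
    rcases pairfact hab hA2 hB2 with hABeq | ⟨hab4, habU⟩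
    · rcases pairfact hac hA2 hC2 with hACeq | ⟨hac4, hacU⟩
      · -- A = B = C
        obtain ⟨p, q, hpq, hApq⟩ := Finset.card_eq_two.mp hA2
        obtain ⟨v0, hv1, hv2⟩ := f3_third (p 0) (q 0)
        refine ⟨0, v0, fun x hx => ?_⟩
        have hxA : x ∈ A := by
          rcases hx with hx | hx | hx
          · exact hx
          · rwa [← hABeq] at hx
          · rwa [← hACeq] at hx
        rw [hApq] at hxA
        rcases Finset.mem_insert.mp hxA with rfl | hx1
        · exact fun hc => hv1 hc.symm
        · rw [Finset.mem_singleton.mp hx1]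
          exact fun hc => hv2 hc.symm
      · -- A = B, A ∪ C codeword of size 4
        obtain ⟨j, k, hjk, hcj, hck⟩ := w4_4 hac hac4
        refine ⟨j, a0 j + 1, fun x hx => ?_⟩
        have hxm : x ∈ SD A C := by
          rw [hacU]
          rcases hx with hx | hx | hx
          · exact Finset.mem_union_left _ hx
          · rw [← hABeq] at hx; exact Finset.mem_union_left _ hx
          · exact Finset.mem_union_right _ hx
        rw [hcj x hxm a0 (by rw [hacU]; exact Finset.mem_union_left _ ha0)]
        exact f3_ne_succ _
    · -- A ≠ B, A ∪ B codeword of size 4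
      obtain ⟨jab, kab, hne1, hcab1, hcab2⟩ := w4_4 hab hab4
      by_cases hCA : C = A
      · refine ⟨jab, a0 jab + 1, fun x hx => ?_⟩
        have hxm : x ∈ SD A B := by
          rw [habU]
          rcases hx with hx | hx | hx
          · exact Finset.mem_union_left _ hx
          · exact Finset.mem_union_right _ hx
          · rw [hCA] at hx; exact Finset.mem_union_left _ hx
        rw [hcab1 x hxm a0 (by rw [habU]; exact Finset.mem_union_left _ ha0)]
        exact f3_ne_succ _
      by_cases hCB : C = B
      · refine ⟨jab, a0 jab + 1, fun x hx => ?_⟩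
        have hxm : x ∈ SD A B := by
          rw [habU]
          rcases hx with hx | hx | hx
          · exact Finset.mem_union_left _ hx
          · exact Finset.mem_union_right _ hx
          · rw [hCB] at hx; exact Finset.mem_union_right _ hx
        rw [hcab1 x hxm a0 (by rw [habU]; exact Finset.mem_union_left _ ha0)]
        exact f3_ne_succ _
      rcases pairfact hac hA2 hC2 with hACeq | ⟨hac4, hacU⟩
      · exact absurd hACeq.symm hCA
      rcases pairfact hbc hB2 hC2 with hBCeq | ⟨hbc4, hbcU⟩
      · exact absurd hBCeq.symm hCB
      obtain ⟨jac, kac, hne2, hcac1, hcac2⟩ := w4_4 hac hac4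
      obtain ⟨jbc, kbc, hne3, hcbc1, hcbc2⟩ := w4_4 hbc hbc4
      -- finishing helpers for shared coordinates
      have finish1 : ∀ i : Fin 4, (∀ x ∈ SD A B, ∀ y ∈ SD A B, x i = y i) →
          (∀ x ∈ SD A C, ∀ y ∈ SD A C, x i = y i) →
          ∃ (j : Fin 4) (v0 : Fin 3), ∀ x, (x ∈ A ∨ x ∈ B ∨ x ∈ C) → x j ≠ v0 := by
        intro i h1 h2
        refine ⟨i, a0 i + 1, fun x hx => ?_⟩
        have hval : x i = a0 i := by
          rcases hx with hx | hx | hx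
          · exact h1 x (habU ▸ Finset.mem_union_left _ hx) a0
              (habU ▸ Finset.mem_union_left _ ha0)
          · exact h1 x (habU ▸ Finset.mem_union_right _ hx) a0
              (habU ▸ Finset.mem_union_left _ ha0)
          · exact h2 x (hacU ▸ Finset.mem_union_right _ hx) a0
              (hacU ▸ Finset.mem_union_left _ ha0)
        rw [hval]
        exact f3_ne_succ _
      have finish2 : ∀ i : Fin 4, (∀ x ∈ SD A B, ∀ y ∈ SD A B, x i = y i) →
          (∀ x ∈ SD B C, ∀ y ∈ SD B C, x i = y i) →
          ∃ (j : Fin 4) (v0 : Fin 3), ∀ x, (x ∈ A ∨ x ∈ B ∨ x ∈ C) → x j ≠ v0 := by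
        intro i h1 h2
        refine ⟨i, b0 i + 1, fun x hx => ?_⟩
        have hval : x i = b0 i := by
          rcases hx with hx | hx | hx
          · exact h1 x (habU ▸ Finset.mem_union_left _ hx) b0
              (habU ▸ Finset.mem_union_right _ hb0)
          · exact h1 x (habU ▸ Finset.mem_union_right _ hx) b0
              (habU ▸ Finset.mem_union_right _ hb0)
          · exact h2 x (hbcU ▸ Finset.mem_union_right _ hx) b0
              (hbcU ▸ Finset.mem_union_left _ hb0)
        rw [hval]
        exact f3_ne_succ _
      have finish3 : ∀ i : Fin 4, (∀ x ∈ SD A C, ∀ y ∈ SD A C, x i = y i) →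
          (∀ x ∈ SD B C, ∀ y ∈ SD B C, x i = y i) →
          ∃ (j : Fin 4) (v0 : Fin 3), ∀ x, (x ∈ A ∨ x ∈ B ∨ x ∈ C) → x j ≠ v0 := by
        intro i h1 h2
        refine ⟨i, c0 i + 1, fun x hx => ?_⟩
        have hval : x i = c0 i := by
          rcases hx with hx | hx | hx
          · exact h1 x (hacU ▸ Finset.mem_union_left _ hx) c0
              (hacU ▸ Finset.mem_union_right _ hc0)
          · exact h2 x (hbcU ▸ Finset.mem_union_left _ hx) c0
              (hbcU ▸ Finset.mem_union_right _ hc0)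
          · exact h2 x (hbcU ▸ Finset.mem_union_right _ hx) c0
              (hbcU ▸ Finset.mem_union_right _ hc0)
        rw [hval]
        exact f3_ne_succ _
      by_cases hs1 : jab = jac
      · exact finish1 jab hcab1 (by rw [hs1]; exact hcac1)
      by_cases hs2 : jab = kac
      · exact finish1 jab hcab1 (by rw [hs2]; exact hcac2)
      by_cases hs3 : kab = jac
      · exact finish1 kab hcab2 (by rw [hs3]; exact hcac1)
      by_cases hs4 : kab = kac
      · exact finish1 kab hcab2 (by rw [hs4]; exact hcac2)
      by_cases hs5 : jab = jbc
      · exact finish2 jab hcab1 (by rw [hs5]; exact hcbc1)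
      by_cases hs6 : jab = kbc
      · exact finish2 jab hcab1 (by rw [hs6]; exact hcbc2)
      by_cases hs7 : kab = jbc
      · exact finish2 kab hcab2 (by rw [hs7]; exact hcbc1)
      by_cases hs8 : kab = kbc
      · exact finish2 kab hcab2 (by rw [hs8]; exact hcbc2)
      by_cases hs9 : jac = jbc
      · exact finish3 jac hcac1 (by rw [hs9]; exact hcbc1)
      by_cases hs10 : jac = kbc
      · exact finish3 jac hcac1 (by rw [hs10]; exact hcbc2)
      by_cases hs11 : kac = jbc
      · exact finish3 kac hcac2 (by rw [hs11]; exact hcbc1)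
      by_cases hs12 : kac = kbc
      · exact finish3 kac hcac2 (by rw [hs12]; exact hcbc2)
      -- six pairwise distinct coordinates in Fin 4: impossible
      exfalso
      have hcard6 : ({jab, kab, jac, kac, jbc, kbc} : Finset (Fin 4)).card = 6 := by
        rw [Finset.card_insert_of_notMem (by
          simp only [Finset.mem_insert, Finset.mem_singleton]
          push_neg
          exact ⟨hne1, hs1, hs2, hs5, hs6⟩)]
        rw [Finset.card_insert_of_notMem (by
          simp only [Finset.mem_insert, Finset.mem_singleton]
          push_neg
          exact ⟨hs3, hs4, hs7, hs8⟩)]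
        rw [Finset.card_insert_of_notMem (by
          simp only [Finset.mem_insert, Finset.mem_singleton]
          push_neg
          exact ⟨hne2, hs9, hs10⟩)]
        rw [Finset.card_insert_of_notMem (by
          simp only [Finset.mem_insert, Finset.mem_singleton]
          push_neg
          exact ⟨hs11, hs12⟩)]
        rw [Finset.card_insert_of_notMem (by
          simp only [Finset.mem_singleton]
          exact hne3)]
        rw [Finset.card_singleton]
      have hle : ({jab, kab, jac, kac, jbc, kbc} : Finset (Fin 4)).card ≤ 4 := by
        have := Finset.card_le_univ ({jab, kab, jac, kac, jbc, kbc} : Finset (Fin 4))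
        simpa using this
      omega

end OctAux
namespace OctAux

/-- No codeword in dimension 5 of size at most 6 covers all three values in
every coordinate. -/
lemma model_bound {E : Finset (Fin 5 → Fin 3)} (h : IsCode E)
    (hcov : ∀ (i : Fin 5) (v : Fin 3), ∃ e ∈ E, e i = v) (hc : E.card ≤ 6) : False := by
  obtain ⟨u, v, w, huv, huw, hvw, hc1, hc2⟩ := sort3 (fun t => (slc E t).card)
  have hsum : (slc E u).card + (slc E v).card + (slc E w).card ≤ 6 := by
    have h1 := card_eq_sum_slc E
    rw [sum3 (fun t => (slc E t).card) u v w huv huw hvw] at h1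
    omega
  have hA1 : 1 ≤ (slc E u).card := by
    obtain ⟨e, he, he0⟩ := hcov 0 u
    exact Finset.card_pos.mpr ⟨tl e, by rw [← he0]; exact tail_mem_slc he⟩
  obtain ⟨j, v0, hmiss⟩ := core (isCode_SD_slc h huv) (isCode_SD_slc h huw)
    (isCode_SD_slc h hvw) hA1 hc1 hc2 hsum
  obtain ⟨e, he, hej⟩ := hcov j.succ v0
  have hmem : tl e ∈ slc E u ∨ tl e ∈ slc E v ∨ tl e ∈ slc E w := by
    rcases f3_cover u v w (e 0) huv huw hvw with h0 | h0 | h0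
    · exact Or.inl (h0 ▸ tail_mem_slc he)
    · exact Or.inr (Or.inl (h0 ▸ tail_mem_slc he))
    · exact Or.inr (Or.inr (h0 ▸ tail_mem_slc he))
  exact hmiss (tl e) hmem (by rw [tl_apply, hej])

/-- The lower bound for abstract octahedral systems. -/
lemma lower_bound (α : Type) [DecidableEq α] (V : Fin 5 → Finset α)
    (E : Finset (Fin 5 → α)) (hcard : ∀ i, (V i).card = 3)
    (hoct : IsOctahedralSystem V E) (hiso : NoIsolatedVertex V E) :
    7 ≤ E.card := by
  by_contra hlt
  push_neg at hlt
  have hE6 : E.card ≤ 6 := by omega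
  set ee : ∀ i : Fin 5, {x // x ∈ V i} ≃ Fin 3 :=
    fun i => (V i).equivFinOfCardEq (hcard i) with hee
  set Φ : (Fin 5 → α) → (Fin 5 → Fin 3) :=
    fun e i => if h : e i ∈ V i then ee i ⟨e i, h⟩ else 0 with hΦ
  have hinj : Set.InjOn Φ (E : Set (Fin 5 → α)) := by
    intro e he f hf hef
    funext i
    have hei := hoct.1 e he i
    have hfi := hoct.1 f hf i
    have hi := congrFun hef i
    simp only [hΦ, dif_pos hei, dif_pos hfi] at hi
    have := (ee i).injective hi
    exact congrArg Subtype.val this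
  set E' : Finset (Fin 5 → Fin 3) := E.image Φ with hE'
  have hcard' : E'.card = E.card := Finset.card_image_of_injOn hinj
  have hcode : IsCode E' := by
    intro X' hX'
    set X : Fin 5 → Finset α := fun i => (X' i).image (fun t => ((ee i).symm t : α))
      with hXdef
    have hXsub : ∀ i, X i ⊆ V i := by
      intro i x hx
      obtain ⟨t, _, rfl⟩ := Finset.mem_image.mp hx
      exact ((ee i).symm t).2
    have hXcard : ∀ i, (X i).card = 2 := by
      intro i
      rw [hXdef]
      rw [Finset.card_image_of_injective _
        (fun a b hab => (ee i).symm.injective (Subtype.coe_injective hab))]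
      exact hX' i
    have heven := hoct.2 X hXsub hXcard
    have hiff : ∀ e ∈ E, ((∀ i, Φ e i ∈ X' i) ↔ (∀ i, e i ∈ X i)) := by
      intro e he
      constructor
      · intro hh i
        have hei := hoct.1 e he i
        have hval : Φ e i = ee i ⟨e i, hei⟩ := by simp only [hΦ, dif_pos hei]
        refine Finset.mem_image.mpr ⟨Φ e i, hh i, ?_⟩
        rw [hval, Equiv.symm_apply_apply]
      · intro hh i
        have hei := hoct.1 e he i
        obtain ⟨t, ht, hte⟩ := Finset.mem_image.mp (hh i)
        have hsub : (⟨e i, hei⟩ : {x // x ∈ V i}) = (ee i).symm t := Subtype.ext hte.symm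
        have hval : Φ e i = t := by
          simp only [hΦ, dif_pos hei, hsub, Equiv.apply_symm_apply]
        rw [hval]
        exact ht
    have hcnt : (E'.filter fun d => ∀ i, d i ∈ X' i).card
        = (E.filter fun e => ∀ i, e i ∈ X i).card := by
      rw [hE', Finset.filter_image,
        Finset.card_image_of_injOn
          (hinj.mono (Finset.coe_subset.mpr (Finset.filter_subset _ _))),
        Finset.filter_congr hiff]
    rw [hcnt]
    exact heven
  have hcov : ∀ (i : Fin 5) (v' : Fin 3), ∃ d ∈ E', d i = v' := by
    intro i v'
    obtain ⟨e, he, hev⟩ := hiso i ((ee i).symm v') ((ee i).symm v').2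
    refine ⟨Φ e, Finset.mem_image_of_mem Φ he, ?_⟩
    have hei := hoct.1 e he i
    have hsub : (⟨e i, hei⟩ : {x // x ∈ V i}) = (ee i).symm v' := Subtype.ext hev
    simp only [hΦ, dif_pos hei, hsub, Equiv.apply_symm_apply]
  exact model_bound hcode hcov (by omega)

end OctAux
namespace OctAux

def Vex : Fin 5 → Finset ℕ :=
  ![{0, 1, 2}, {3, 4, 5}, {6, 7, 8}, {9, 10, 11}, {12, 13, 14}]

def Eex : Finset (Fin 5 → ℕ) :=
  {![1, 3, 6, 9, 12], ![2, 3, 6, 9, 12], ![0, 5, 6, 9, 12], ![0, 4, 8, 9, 12],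
    ![0, 4, 7, 11, 12], ![0, 4, 7, 10, 13], ![0, 4, 7, 10, 14]}

lemma Eex_parity_key : ∀ X0 ∈ (Vex 0).powersetCard 2, ∀ X1 ∈ (Vex 1).powersetCard 2,
    ∀ X2 ∈ (Vex 2).powersetCard 2, ∀ X3 ∈ (Vex 3).powersetCard 2,
    ∀ X4 ∈ (Vex 4).powersetCard 2,
    Even ((Eex.filter fun e =>
      e 0 ∈ X0 ∧ e 1 ∈ X1 ∧ e 2 ∈ X2 ∧ e 3 ∈ X3 ∧ e 4 ∈ X4).card) := by decide

lemma Eex_oct : IsOctahedralSystem Vex Eex := by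
  constructor
  · decide
  · intro X hsub hcards
    have h0 := Eex_parity_key (X 0)
      (Finset.mem_powersetCard.mpr ⟨hsub 0, hcards 0⟩) (X 1)
      (Finset.mem_powersetCard.mpr ⟨hsub 1, hcards 1⟩) (X 2)
      (Finset.mem_powersetCard.mpr ⟨hsub 2, hcards 2⟩) (X 3)
      (Finset.mem_powersetCard.mpr ⟨hsub 3, hcards 3⟩) (X 4)
      (Finset.mem_powersetCard.mpr ⟨hsub 4, hcards 4⟩)
    have heq : (Eex.filter fun e => ∀ i, e i ∈ X i)
        = (Eex.filter fun e =>
            e 0 ∈ X 0 ∧ e 1 ∈ X 1 ∧ e 2 ∈ X 2 ∧ e 3 ∈ X 3 ∧ e 4 ∈ X 4) := by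
      apply Finset.filter_congr
      intro e _
      constructor
      · intro h
        exact ⟨h 0, h 1, h 2, h 3, h 4⟩
      · rintro ⟨h0, h1, h2, h3, h4⟩ i
        fin_cases i <;> assumption
    rw [heq]
    exact h0

end OctAux

/-- The minimum number of edges of an octahedral system without isolated vertex on five
vertex sets each of cardinality 3 equals 7: every such system has at least 7 edges
and some such system has exactly 7 edges. -/
theorem nu_five_3_eq_7 :
    (∀ (α : Type) [DecidableEq α] (V : Fin 5 → Finset α) (E : Finset (Fin 5 → α)),
      (∀ i j : Fin 5, i ≠ j → Disjoint (V i) (V j)) →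
      (∀ i, (V i).card = 3) →
      IsOctahedralSystem V E → NoIsolatedVertex V E →
      7 ≤ E.card) ∧
    (∃ (V : Fin 5 → Finset ℕ) (E : Finset (Fin 5 → ℕ)),
      (∀ i j : Fin 5, i ≠ j → Disjoint (V i) (V j)) ∧
      (∀ i, (V i).card = 3) ∧
      IsOctahedralSystem V E ∧ NoIsolatedVertex V E ∧
      E.card = 7) := by

  constructor
  · intro α _ V E _ hcard hoct hiso
    exact OctAux.lower_bound α V E hcard hoct hiso
  · refine ⟨OctAux.Vex, OctAux.Eex, ?_, ?_, OctAux.Eex_oct, ?_, ?_⟩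
    · intro i j hij
      fin_cases i <;> fin_cases j <;> first | (exact absurd rfl hij) | decide
    · decide
    · show ∀ i : Fin 5, ∀ v ∈ OctAux.Vex i, ∃ e ∈ OctAux.Eex, e i = v
      decide
    · decide
end
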